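/- arXiv:2104.07633 — 7 statements merged into one kernel-verified Lean document; each statement's English description precedes it below -/
import Mathlib

section
/- Let a, b ≥ 2, let E be a set of chords, let t ≥ 1 be odd, and let (I_1,J_1),…,(I_t,J_t) be an interlacing collection of subsection pairs. Let d_1,…,d_t ≥ 1 be integers. Suppose that for each 1 ≤ k ≤ t there are two paths Q_k^R and Q_k^B of H(a,b,E), all of whose vertices lie in {inl i : i ∈ I_k} ∪ {inr j : j ∈ J_k}, satisfying |Q_k^R| − |Q_k^B| ≥ d_k, where both paths join inl(min I_k) to inr(min J_k) if k is odd, and join inl(max I_k) to inr(max J_k) if k is even. Set D := max_{1 ≤ k ≤ t} ((|I_k| − 1) + (|J_k| − 1)). Then there are paths P_1, …, P_{(t+3)/2} from x^t to y^t in H(a,b,E) such that |P_{(t+3)/2}| − |P_1| ≥ d_1 + … + d_t and 1 ≤ |P_{i+1}| − |P_i| ≤ 2D for every 1 ≤ i ≤ (t+1)/2. -/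
/-- The adjacency relation of the section-pair graph `H(a,b,E)`. -/
def sectionAdj (a b : ℕ) (E : Finset (ℕ × ℕ)) :
    (Fin a ⊕ Fin b) → (Fin a ⊕ Fin b) → Prop
  | Sum.inl i, Sum.inl i' => (i : ℕ) + 1 = (i' : ℕ) ∨ (i' : ℕ) + 1 = (i : ℕ)
  | Sum.inr j, Sum.inr j' => (j : ℕ) + 1 = (j' : ℕ) ∨ (j' : ℕ) + 1 = (j : ℕ)
  | Sum.inl i, Sum.inr j => ((i : ℕ), (j : ℕ)) ∈ E
  | Sum.inr j, Sum.inl i => ((i : ℕ), (j : ℕ)) ∈ E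

/-- The section-pair graph `H(a,b,E)` on vertex set `Fin a ⊕ Fin b`. -/
def sectionGraph (a b : ℕ) (E : Finset (ℕ × ℕ)) : SimpleGraph (Fin a ⊕ Fin b) where
  Adj := sectionAdj a b E
  symm := by
    constructor
    rintro (i | j) (i' | j') h <;> simp only [sectionAdj] at h ⊢ <;> tauto
  loopless := by
    constructor
    rintro (i | j) h <;> simp only [sectionAdj] at h <;> omega

/-- A finite set of naturals is an interval (a set of consecutive integers). -/
def IsIntervalSet (I : Finset ℕ) : Prop :=
  ∀ x ∈ I, ∀ z ∈ I, ∀ y, x ≤ y → y ≤ z → y ∈ I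

/-- `I` is above `I'`: every element of `I` is smaller than every element of `I'`. -/
def FinsetAbove (I I' : Finset ℕ) : Prop := ∀ x ∈ I, ∀ y ∈ I', x < y

/-- `(I, J)` is a subsection pair for the section pair of lengths `a` and `b`. -/
def IsSubsectionPair (a b : ℕ) (I J : Finset ℕ) : Prop :=
  I.Nonempty ∧ J.Nonempty ∧ IsIntervalSet I ∧ IsIntervalSet J ∧
    (∀ i ∈ I, i < a) ∧ (∀ j ∈ J, j < b)

/-- `(I 1, J 1), …, (I t, J t)` is an interlacing collection of subsection pairs. -/
def IsInterlacingColl (a b t : ℕ) (I J : ℕ → Finset ℕ) : Prop :=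
  (∀ k, 1 ≤ k → k ≤ t → IsSubsectionPair a b (I k) (J k)) ∧
  (∀ k, 1 ≤ k → k < t → FinsetAbove (I k) (I (k + 1)) ∧ FinsetAbove (J (k + 1)) (J k))

/-- The vertex `v` of `H(a,b,E)` lies in `{inl i : i ∈ I} ∪ {inr j : j ∈ J}`. -/
def InPair {a b : ℕ} (I J : Finset ℕ) : (Fin a ⊕ Fin b) → Prop :=
  Sum.elim (fun i => (i : ℕ) ∈ I) (fun j => (j : ℕ) ∈ J)

open SimpleGraph

lemma myIsPath_append {V : Type*} {G : SimpleGraph V} {u v w : V}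
    {p : G.Walk u v} {q : G.Walk v w} (hp : p.IsPath) (hq : q.IsPath)
    (h : ∀ x, x ∈ p.support → x ∈ q.support → x = v) : (p.append q).IsPath := by
  have hnd := hq.support_nodup
  rw [q.support_eq_cons] at hnd
  rw [Walk.isPath_def, Walk.support_append]
  refine List.Nodup.append hp.support_nodup hnd.of_cons ?_
  intro x hxp hxq
  have hx : x ∈ q.support := List.mem_of_mem_tail hxq
  have hxv := h x hxp hx
  subst hxv
  exact (List.nodup_cons.mp hnd).1 hxq

section walks
variable (a b : ℕ) (E : Finset (ℕ × ℕ))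

def ywalkAux (m : ℕ) : (r : ℕ) → (h : m + r < b) → (sectionGraph a b E).Walk
    (Sum.inr ⟨m + r, h⟩) (Sum.inr ⟨m, by omega⟩)
  | 0, h => Walk.nil
  | r+1, h => Walk.cons (show (sectionGraph a b E).Adj (Sum.inr ⟨m + (r+1), h⟩) (Sum.inr ⟨m + r, by omega⟩) from Or.inr rfl) (ywalkAux m r (by omega))

lemma ywalkAux_length (m r : ℕ) (h : m + r < b) : (ywalkAux a b E m r h).length = r := by
  induction r with
  | zero => rfl
  | succ r ih => simp [ywalkAux, ih]

lemma ywalkAux_support (m r : ℕ) (h : m + r < b) :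
    ∀ x ∈ (ywalkAux a b E m r h).support,
      ∃ j : Fin b, x = Sum.inr j ∧ m ≤ (j : ℕ) ∧ (j : ℕ) ≤ m + r := by
  induction r with
  | zero =>
    intro x hx
    rw [ywalkAux, Walk.support_nil, List.mem_singleton] at hx
    exact ⟨_, hx, by simp only [Fin.val_mk]; omega, by simp only [Fin.val_mk]; omega⟩
  | succ r ih =>
    intro x hx
    rw [ywalkAux, Walk.support_cons, List.mem_cons] at hx
    rcases hx with hx | hx
    · exact ⟨_, hx, by simp only [Fin.val_mk]; omega, by simp only [Fin.val_mk]; omega⟩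
    · obtain ⟨j, hj, h1, h2⟩ := ih (by omega) x hx
      exact ⟨j, hj, h1, by omega⟩

lemma ywalkAux_isPath (m r : ℕ) (h : m + r < b) : (ywalkAux a b E m r h).IsPath := by
  induction r with
  | zero => exact Walk.IsPath.nil
  | succ r ih =>
    rw [ywalkAux, Walk.cons_isPath_iff]
    refine ⟨ih (by omega), fun hc => ?_⟩
    obtain ⟨j, hj, h1, h2⟩ := ywalkAux_support a b E m r (by omega) _ hc
    rw [Sum.inr.injEq] at hj
    have : (⟨m + (r+1), h⟩ : Fin b) = j := hj
    have := congrArg Fin.val this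
    simp at this
    omega

def ywalkD (j j' : Fin b) (h : (j' : ℕ) ≤ (j : ℕ)) :
    (sectionGraph a b E).Walk (Sum.inr j) (Sum.inr j') :=
  (ywalkAux a b E j' ((j : ℕ) - (j' : ℕ)) (by have := j.isLt; omega)).copy
    (by congr 1; exact Fin.ext (by simp; omega)) rfl

lemma ywalkD_length (j j' : Fin b) (h : (j' : ℕ) ≤ (j : ℕ)) :
    (ywalkD a b E j j' h).length = (j : ℕ) - (j' : ℕ) := by
  rw [ywalkD, Walk.length_copy, ywalkAux_length]

lemma ywalkD_support (j j' : Fin b) (h : (j' : ℕ) ≤ (j : ℕ)) :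
    ∀ x ∈ (ywalkD a b E j j' h).support,
      ∃ jj : Fin b, x = Sum.inr jj ∧ (j' : ℕ) ≤ (jj : ℕ) ∧ (jj : ℕ) ≤ (j : ℕ) := by
  intro x hx
  rw [ywalkD, Walk.support_copy] at hx
  obtain ⟨jj, h1, h2, h3⟩ := ywalkAux_support a b E _ _ _ x hx
  exact ⟨jj, h1, h2, by omega⟩

lemma ywalkD_isPath (j j' : Fin b) (h : (j' : ℕ) ≤ (j : ℕ)) :
    (ywalkD a b E j j' h).IsPath := by
  rw [ywalkD, Walk.isPath_copy]; exact ywalkAux_isPath a b E _ _ _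

def xwalkAux (m : ℕ) : (r : ℕ) → (h : m + r < a) → (sectionGraph a b E).Walk
    (Sum.inl ⟨m + r, h⟩) (Sum.inl ⟨m, by omega⟩)
  | 0, h => Walk.nil
  | r+1, h => Walk.cons (show (sectionGraph a b E).Adj (Sum.inl ⟨m + (r+1), h⟩) (Sum.inl ⟨m + r, by omega⟩) from Or.inr rfl) (xwalkAux m r (by omega))

lemma xwalkAux_length (m r : ℕ) (h : m + r < a) : (xwalkAux a b E m r h).length = r := by
  induction r with
  | zero => rfl
  | succ r ih => simp [xwalkAux, ih]

lemma xwalkAux_support (m r : ℕ) (h : m + r < a) :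
    ∀ x ∈ (xwalkAux a b E m r h).support,
      ∃ i : Fin a, x = Sum.inl i ∧ m ≤ (i : ℕ) ∧ (i : ℕ) ≤ m + r := by
  induction r with
  | zero =>
    intro x hx
    rw [xwalkAux, Walk.support_nil, List.mem_singleton] at hx
    exact ⟨_, hx, by simp only [Fin.val_mk]; omega, by simp only [Fin.val_mk]; omega⟩
  | succ r ih =>
    intro x hx
    rw [xwalkAux, Walk.support_cons, List.mem_cons] at hx
    rcases hx with hx | hx
    · exact ⟨_, hx, by simp only [Fin.val_mk]; omega, by simp only [Fin.val_mk]; omega⟩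
    · obtain ⟨j, hj, h1, h2⟩ := ih (by omega) x hx
      exact ⟨j, hj, h1, by omega⟩

lemma xwalkAux_isPath (m r : ℕ) (h : m + r < a) : (xwalkAux a b E m r h).IsPath := by
  induction r with
  | zero => exact Walk.IsPath.nil
  | succ r ih =>
    rw [xwalkAux, Walk.cons_isPath_iff]
    refine ⟨ih (by omega), fun hc => ?_⟩
    obtain ⟨j, hj, h1, h2⟩ := xwalkAux_support a b E m r (by omega) _ hc
    rw [Sum.inl.injEq] at hj
    have : (⟨m + (r+1), h⟩ : Fin a) = j := hj
    have := congrArg Fin.val this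
    simp at this
    omega

def xwalkU (i i' : Fin a) (h : (i : ℕ) ≤ (i' : ℕ)) :
    (sectionGraph a b E).Walk (Sum.inl i) (Sum.inl i') :=
  ((xwalkAux a b E i ((i' : ℕ) - (i : ℕ)) (by have := i'.isLt; omega)).copy
    (by congr 1; exact Fin.ext (by simp; omega)) rfl).reverse

lemma xwalkU_length (i i' : Fin a) (h : (i : ℕ) ≤ (i' : ℕ)) :
    (xwalkU a b E i i' h).length = (i' : ℕ) - (i : ℕ) := by
  rw [xwalkU, Walk.length_reverse, Walk.length_copy, xwalkAux_length]

lemma xwalkU_support (i i' : Fin a) (h : (i : ℕ) ≤ (i' : ℕ)) :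
    ∀ x ∈ (xwalkU a b E i i' h).support,
      ∃ ii : Fin a, x = Sum.inl ii ∧ (i : ℕ) ≤ (ii : ℕ) ∧ (ii : ℕ) ≤ (i' : ℕ) := by
  intro x hx
  rw [xwalkU, Walk.support_reverse, List.mem_reverse, Walk.support_copy] at hx
  obtain ⟨ii, h1, h2, h3⟩ := xwalkAux_support a b E _ _ _ x hx
  exact ⟨ii, h1, h2, by omega⟩

lemma xwalkU_isPath (i i' : Fin a) (h : (i : ℕ) ≤ (i' : ℕ)) :
    (xwalkU a b E i i' h).IsPath := by
  rw [xwalkU, Walk.isPath_reverse_iff, Walk.isPath_copy]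
  exact xwalkAux_isPath a b E _ _ _

lemma path_length_bound {x y : Fin a ⊕ Fin b} (I J : Finset ℕ)
    (W : (sectionGraph a b E).Walk x y) (hW : W.IsPath)
    (hs : ∀ z ∈ W.support, InPair I J z) : W.length + 1 ≤ I.card + J.card := by
  classical
  have hinj : Function.Injective (Sum.map (Fin.val : Fin a → ℕ) (Fin.val : Fin b → ℕ)) :=
    Sum.map_injective.mpr ⟨Fin.val_injective, Fin.val_injective⟩
  set l : List (ℕ ⊕ ℕ) := W.support.map (Sum.map Fin.val Fin.val) with hl
  have hnd : l.Nodup := (hW.support_nodup).map hinj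
  have hmem : ∀ z ∈ l, z ∈ I.disjSum J := by
    intro z hz
    rw [hl, List.mem_map] at hz
    obtain ⟨w, hw, rfl⟩ := hz
    have := hs w hw
    cases w with
    | inl i => exact Finset.inl_mem_disjSum.mpr this
    | inr j => exact Finset.inr_mem_disjSum.mpr this
  have hsub : l.toFinset ⊆ I.disjSum J := fun z hz => hmem z (List.mem_toFinset.mp hz)
  have hcard := Finset.card_le_card hsub
  rw [List.toFinset_card_of_nodup hnd, Finset.card_disjSum] at hcard
  have : l.length = W.length + 1 := by rw [hl, List.length_map, Walk.length_support]
  omega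

end walks

/-- Combining path pairs over an interlacing collection of subsection
pairs produces paths `P_1, …, P_{(t+3)/2}` from `x^t` to `y^t` with total length spread
at least `d_1 + ⋯ + d_t` and consecutive differences between `1` and `2D`. -/


theorem sectionPair_interlacing_collection_combine_paths
    (a b t D : ℕ) (E : Finset (ℕ × ℕ)) (I J : ℕ → Finset ℕ) (d : ℕ → ℕ)
    (ha : 2 ≤ a) (hb : 2 ≤ b)
    (hE : ∀ e ∈ E, e.1 < a ∧ e.2 < b)
    (ht : 1 ≤ t) (htodd : Odd t)
    (hcoll : IsInterlacingColl a b t I J)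
    (hd : ∀ k, 1 ≤ k → k ≤ t → 1 ≤ d k)
    (hD : ∀ k (hk1 : 1 ≤ k) (hk2 : k ≤ t),
      ((I k).card - 1) + ((J k).card - 1) ≤ D)
    (hQ : ∀ k (hk1 : 1 ≤ k) (hk2 : k ≤ t),
      ∃ (u : Fin a) (v : Fin b)
        (QR QB : (sectionGraph a b E).Walk (Sum.inl u) (Sum.inr v)),
        QR.IsPath ∧ QB.IsPath ∧
        (∀ x ∈ QR.support, InPair (I k) (J k) x) ∧
        (∀ x ∈ QB.support, InPair (I k) (J k) x) ∧
        QB.length + d k ≤ QR.length ∧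
        (Odd k → (u : ℕ) = (I k).min' (hcoll.1 k hk1 hk2).1 ∧
          (v : ℕ) = (J k).min' (hcoll.1 k hk1 hk2).2.1) ∧
        (Even k → (u : ℕ) = (I k).max' (hcoll.1 k hk1 hk2).1 ∧
          (v : ℕ) = (J k).max' (hcoll.1 k hk1 hk2).2.1)) :
    ∃ P : ℕ → (sectionGraph a b E).Walk
        (Sum.inl (⟨0, by omega⟩ : Fin a)) (Sum.inr (⟨0, by omega⟩ : Fin b)),
      (∀ i, 1 ≤ i → i ≤ (t + 3) / 2 → (P i).IsPath) ∧
      (P 1).length + (∑ k ∈ Finset.Icc 1 t, d k) ≤ (P ((t + 3) / 2)).length ∧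
      (∀ i, 1 ≤ i → i ≤ (t + 1) / 2 →
        (P i).length + 1 ≤ (P (i + 1)).length ∧
        (P (i + 1)).length ≤ (P i).length + 2 * D) := by
  classical
  choose u v QR QB hQRp hQBp hQRs hQBs hlen hoddk hevenk using hQ
  have hIne : ∀ k (h1 : 1 ≤ k) (h2 : k ≤ t), (I k).Nonempty :=
    fun k h1 h2 => (hcoll.1 k h1 h2).1
  have hJne : ∀ k (h1 : 1 ≤ k) (h2 : k ≤ t), (J k).Nonempty :=
    fun k h1 h2 => (hcoll.1 k h1 h2).2.1
  have hIa : ∀ k (h1 : 1 ≤ k) (h2 : k ≤ t), ∀ i ∈ I k, i < a :=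
    fun k h1 h2 => (hcoll.1 k h1 h2).2.2.2.2.1
  have hJb : ∀ k (h1 : 1 ≤ k) (h2 : k ≤ t), ∀ j ∈ J k, j < b :=
    fun k h1 h2 => (hcoll.1 k h1 h2).2.2.2.2.2
  have hIabove : ∀ k (h1 : 1 ≤ k) (h2 : k < t),
      (I k).max' (hIne k h1 (by omega)) < (I (k+1)).min' (hIne (k+1) (by omega) h2) :=
    fun k h1 h2 => (hcoll.2 k h1 h2).1 _ (Finset.max'_mem _ _) _ (Finset.min'_mem _ _)
  have hJabove : ∀ k (h1 : 1 ≤ k) (h2 : k < t),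
      (J (k+1)).max' (hJne (k+1) (by omega) h2) < (J k).min' (hJne k h1 (by omega)) :=
    fun k h1 h2 => (hcoll.2 k h1 h2).2 _ (Finset.max'_mem _ _) _ (Finset.min'_mem _ _)
  obtain ⟨lenR, hlenR⟩ : ∃ f : ℕ → ℕ, ∀ k (h1 : 1 ≤ k) (h2 : k ≤ t),
      f k = (QR k h1 h2).length :=
    ⟨fun k => if h : 1 ≤ k ∧ k ≤ t then (QR k h.1 h.2).length else 0,
     fun k h1 h2 => dif_pos ⟨h1, h2⟩⟩
  obtain ⟨lenB, hlenB⟩ : ∃ f : ℕ → ℕ, ∀ k (h1 : 1 ≤ k) (h2 : k ≤ t),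
      f k = (QB k h1 h2).length :=
    ⟨fun k => if h : 1 ≤ k ∧ k ≤ t then (QB k h.1 h.2).length else 0,
     fun k h1 h2 => dif_pos ⟨h1, h2⟩⟩
  have hlen' : ∀ k (h1 : 1 ≤ k) (h2 : k ≤ t), lenB k + d k ≤ lenR k := by
    intro k h1 h2
    rw [hlenR k h1 h2, hlenB k h1 h2]
    exact hlen k h1 h2
  have hB1 : ∀ k (h1 : 1 ≤ k) (h2 : k ≤ t), 1 ≤ lenB k := by
    intro k h1 h2
    rw [hlenB k h1 h2]
    by_contra hc
    have h0 : (QB k h1 h2).length = 0 := by omega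
    exact absurd (Walk.eq_of_length_eq_zero h0) (by simp)
  have hRB : ∀ k (h1 : 1 ≤ k) (h2 : k ≤ t), lenB k + 1 ≤ lenR k := by
    intro k h1 h2
    have := hlen' k h1 h2
    have := hd k h1 h2
    omega
  have hRD : ∀ k (h1 : 1 ≤ k) (h2 : k ≤ t), lenR k ≤ lenB k + D := by
    intro k h1 h2
    have hbd := path_length_bound a b E (I k) (J k) (QR k h1 h2) (hQRp k h1 h2) (hQRs k h1 h2)
    have hcI : 1 ≤ (I k).card := Finset.card_pos.mpr (hIne k h1 h2)
    have hcJ : 1 ≤ (J k).card := Finset.card_pos.mpr (hJne k h1 h2)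
    have hDk := hD k h1 h2
    have hb1 := hB1 k h1 h2
    rw [← hlenR k h1 h2] at hbd
    omega
  have hQc : ∀ (c : ℕ → Bool) k (h1 : 1 ≤ k) (h2 : k ≤ t),
      ∃ Q : (sectionGraph a b E).Walk (Sum.inl (u k h1 h2)) (Sum.inr (v k h1 h2)),
        Q.IsPath ∧ (∀ x ∈ Q.support, InPair (I k) (J k) x) ∧
        Q.length = (if c k then lenR k else lenB k) := by
    intro c k h1 h2
    cases hc : c k
    · refine ⟨QB k h1 h2, hQBp k h1 h2, hQBs k h1 h2, ?_⟩
      simp [hc, hlenB k h1 h2]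
    · refine ⟨QR k h1 h2, hQRp k h1 h2, hQRs k h1 h2, ?_⟩
      simp [hc, hlenR k h1 h2]
  have key : ∀ n : ℕ, ∀ k (h1 : 1 ≤ k) (h2 : k ≤ t), Odd k → k + 2 * n = t →
      ∃ g : ℕ, ∀ c : ℕ → Bool,
        ∃ W : (sectionGraph a b E).Walk (Sum.inl (u k h1 h2))
            (Sum.inr (⟨0, by omega⟩ : Fin b)),
          W.IsPath ∧
          (∀ i : Fin a, Sum.inl i ∈ W.support → (I k).min' (hIne k h1 h2) ≤ (i : ℕ)) ∧
          (∀ j : Fin b, Sum.inr j ∈ W.support → (j : ℕ) ≤ (J k).max' (hJne k h1 h2)) ∧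
          W.length = (∑ m ∈ Finset.Icc k t, (if c m then lenR m else lenB m)) + g := by
    intro n
    induction n with
    | zero =>
      intro k h1 h2 hodd hkn
      have hkt : k = t := by omega
      subst hkt
      refine ⟨(v k h1 h2 : ℕ), fun c => ?_⟩
      obtain ⟨Q, hQp, hQs, hQl⟩ := hQc c k h1 h2
      have hv : (v k h1 h2 : ℕ) = (J k).min' (hJne k h1 h2) := (hoddk k h1 h2 hodd).2
      refine ⟨Q.append (ywalkD a b E (v k h1 h2) ⟨0, by omega⟩ (Nat.zero_le _)), ?_, ?_, ?_, ?_⟩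
      · refine myIsPath_append hQp (ywalkD_isPath a b E _ _ _) ?_
        intro x hx1 hx2
        obtain ⟨jj, rfl, hlo, hhi⟩ := ywalkD_support a b E _ _ _ x hx2
        have hmem : (jj : ℕ) ∈ J k := hQs _ hx1
        have h5 : (J k).min' (hJne k h1 h2) ≤ (jj : ℕ) := Finset.min'_le _ _ hmem
        exact congrArg Sum.inr (Fin.ext (by omega))
      · intro i hi
        rw [Walk.mem_support_append_iff] at hi
        rcases hi with hi | hi
        · exact Finset.min'_le _ _ (hQs _ hi)
        · obtain ⟨jj, heq, -, -⟩ := ywalkD_support a b E _ _ _ _ hi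
          exact absurd heq (by simp)
      · intro j hj
        rw [Walk.mem_support_append_iff] at hj
        rcases hj with hj | hj
        · exact Finset.le_max' _ _ (hQs _ hj)
        · obtain ⟨jj, heq, -, hhi⟩ := ywalkD_support a b E _ _ _ _ hj
          rw [Sum.inr.injEq] at heq
          subst heq
          have h6 : (J k).min' (hJne k h1 h2) ≤ (J k).max' (hJne k h1 h2) :=
            Finset.min'_le _ _ (Finset.max'_mem _ _)
          omega
      · rw [Walk.length_append, hQl, ywalkD_length, Finset.Icc_self, Finset.sum_singleton]
        simp only [Fin.val_mk]
        omega
    | succ n ih =>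
      intro k h1 h2 hodd hkn
      obtain ⟨sk, hsk⟩ := hodd
      have hA : 1 ≤ k + 1 := by omega
      have hB : k + 1 ≤ t := by omega
      have hC : 1 ≤ k + 2 := by omega
      have hD2 : k + 2 ≤ t := by omega
      have hoddk2 : Odd (k + 2) := ⟨sk + 1, by omega⟩
      have hevk1 : Even (k + 1) := ⟨sk + 1, by omega⟩
      obtain ⟨g', hg'⟩ := ih (k + 2) hC hD2 hoddk2 (by omega)
      have hvk : (v k h1 h2 : ℕ) = (J k).min' (hJne k h1 h2) := (hoddk k h1 h2 ⟨sk, hsk⟩).2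
      have huk1 : (u (k+1) hA hB : ℕ) = (I (k+1)).max' (hIne (k+1) hA hB) :=
        (hevenk (k+1) hA hB hevk1).1
      have hvk1 : (v (k+1) hA hB : ℕ) = (J (k+1)).max' (hJne (k+1) hA hB) :=
        (hevenk (k+1) hA hB hevk1).2
      have huk2 : (u (k+2) hC hD2 : ℕ) = (I (k+2)).min' (hIne (k+2) hC hD2) :=
        (hoddk (k+2) hC hD2 hoddk2).1
      have oI1 : (I k).max' (hIne k h1 h2) < (I (k+1)).min' (hIne (k+1) hA hB) :=
        hIabove k h1 (by omega)
      have oI2 : (I (k+1)).max' (hIne (k+1) hA hB) < (I (k+2)).min' (hIne (k+2) hC hD2) :=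
        hIabove (k+1) hA (by omega)
      have oJ1 : (J (k+1)).max' (hJne (k+1) hA hB) < (J k).min' (hJne k h1 h2) :=
        hJabove k h1 (by omega)
      have oJ2 : (J (k+2)).max' (hJne (k+2) hC hD2) < (J (k+1)).min' (hJne (k+1) hA hB) :=
        hJabove (k+1) hA (by omega)
      have mmIk : (I k).min' (hIne k h1 h2) ≤ (I k).max' (hIne k h1 h2) :=
        Finset.min'_le _ _ (Finset.max'_mem _ _)
      have mmIk1 : (I (k+1)).min' (hIne (k+1) hA hB) ≤ (I (k+1)).max' (hIne (k+1) hA hB) :=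
        Finset.min'_le _ _ (Finset.max'_mem _ _)
      have mmJk : (J k).min' (hJne k h1 h2) ≤ (J k).max' (hJne k h1 h2) :=
        Finset.min'_le _ _ (Finset.max'_mem _ _)
      have mmJk1 : (J (k+1)).min' (hJne (k+1) hA hB) ≤ (J (k+1)).max' (hJne (k+1) hA hB) :=
        Finset.min'_le _ _ (Finset.max'_mem _ _)
      have hyd_le : ((v (k+1) hA hB : ℕ)) ≤ (v k h1 h2 : ℕ) := by
        rw [hvk, hvk1]; omega
      have hxu_le : ((u (k+1) hA hB : ℕ)) ≤ (u (k+2) hC hD2 : ℕ) := by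
        rw [huk1, huk2]; omega
      refine ⟨g' + ((v k h1 h2 : ℕ) - (v (k+1) hA hB : ℕ))
        + ((u (k+2) hC hD2 : ℕ) - (u (k+1) hA hB : ℕ)), fun c => ?_⟩
      obtain ⟨Q1, hQ1p, hQ1s, hQ1l⟩ := hQc c k h1 h2
      obtain ⟨Q2, hQ2p, hQ2s, hQ2l⟩ := hQc c (k+1) hA hB
      obtain ⟨W', hW'p, hW'I, hW'J, hW'l⟩ := hg' c
      set yd := ywalkD a b E (v k h1 h2) (v (k+1) hA hB) hyd_le with hyddef
      set xu := xwalkU a b E (u (k+1) hA hB) (u (k+2) hC hD2) hxu_le with hxudef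
      have h3I : ∀ i : Fin a, Sum.inl i ∈ (xu.append W').support →
          (I (k+1)).max' (hIne (k+1) hA hB) ≤ (i : ℕ) := by
        intro i hi
        rw [Walk.mem_support_append_iff] at hi
        rcases hi with hi | hi
        · obtain ⟨ii, heq, hlo, hhi⟩ := xwalkU_support a b E _ _ _ _ hi
          rw [Sum.inl.injEq] at heq
          subst heq
          omega
        · have := hW'I i hi
          omega
      have h3J : ∀ j : Fin b, Sum.inr j ∈ (xu.append W').support →
          (j : ℕ) ≤ (J (k+2)).max' (hJne (k+2) hC hD2) := by
        intro j hj
        rw [Walk.mem_support_append_iff] at hj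
        rcases hj with hj | hj
        · obtain ⟨ii, heq, -, -⟩ := xwalkU_support a b E _ _ _ _ hj
          exact absurd heq (by simp)
        · exact hW'J j hj
      have h2I : ∀ i : Fin a, Sum.inl i ∈ (Q2.reverse.append (xu.append W')).support →
          (I (k+1)).min' (hIne (k+1) hA hB) ≤ (i : ℕ) := by
        intro i hi
        rw [Walk.mem_support_append_iff] at hi
        rcases hi with hi | hi
        · rw [Walk.support_reverse, List.mem_reverse] at hi
          exact Finset.min'_le _ _ (hQ2s _ hi)
        · have := h3I i hi
          omega
      have h2J : ∀ j : Fin b, Sum.inr j ∈ (Q2.reverse.append (xu.append W')).support →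
          (j : ℕ) ≤ (J (k+1)).max' (hJne (k+1) hA hB) := by
        intro j hj
        rw [Walk.mem_support_append_iff] at hj
        rcases hj with hj | hj
        · rw [Walk.support_reverse, List.mem_reverse] at hj
          exact Finset.le_max' _ _ (hQ2s _ hj)
        · have := h3J j hj
          omega
      have h1I : ∀ i : Fin a, Sum.inl i ∈ (yd.append (Q2.reverse.append (xu.append W'))).support →
          (I (k+1)).min' (hIne (k+1) hA hB) ≤ (i : ℕ) := by
        intro i hi
        rw [Walk.mem_support_append_iff] at hi
        rcases hi with hi | hi
        · obtain ⟨jj, heq, -, -⟩ := ywalkD_support a b E _ _ _ _ hi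
          exact absurd heq (by simp)
        · exact h2I i hi
      have h1J : ∀ j : Fin b, Sum.inr j ∈ (yd.append (Q2.reverse.append (xu.append W'))).support →
          (j : ℕ) ≤ (J k).min' (hJne k h1 h2) := by
        intro j hj
        rw [Walk.mem_support_append_iff] at hj
        rcases hj with hj | hj
        · obtain ⟨jj, heq, -, hhi⟩ := ywalkD_support a b E _ _ _ _ hj
          rw [Sum.inr.injEq] at heq
          subst heq
          omega
        · have := h2J j hj
          omega
      refine ⟨Q1.append (yd.append (Q2.reverse.append (xu.append W'))), ?_, ?_, ?_, ?_⟩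
      · refine myIsPath_append hQ1p ?_ ?_
        · refine myIsPath_append (ywalkD_isPath a b E _ _ _) ?_ ?_
          · refine myIsPath_append hQ2p.reverse ?_ ?_
            · refine myIsPath_append (xwalkU_isPath a b E _ _ _) hW'p ?_
              intro x hx1 hx2
              obtain ⟨ii, rfl, hlo, hhi⟩ := xwalkU_support a b E _ _ _ x hx1
              have := hW'I ii hx2
              exact congrArg Sum.inl (Fin.ext (by omega))
            · intro x hx1 hx2
              rw [Walk.support_reverse, List.mem_reverse] at hx1
              cases x with
              | inl i =>
                have hmem : (i : ℕ) ∈ I (k+1) := hQ2s _ hx1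
                have hle : (i : ℕ) ≤ (I (k+1)).max' (hIne (k+1) hA hB) :=
                  Finset.le_max' _ _ hmem
                have := h3I i hx2
                exact congrArg Sum.inl (Fin.ext (by omega))
              | inr j =>
                have hmem : (j : ℕ) ∈ J (k+1) := hQ2s _ hx1
                have hge : (J (k+1)).min' (hJne (k+1) hA hB) ≤ (j : ℕ) :=
                  Finset.min'_le _ _ hmem
                have := h3J j hx2
                omega
          · intro x hx1 hx2
            obtain ⟨jj, rfl, hlo, hhi⟩ := ywalkD_support a b E _ _ _ x hx1
            have := h2J jj hx2
            exact congrArg Sum.inr (Fin.ext (by omega))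
        · intro x hx1 hx2
          cases x with
          | inl i =>
            have hmem : (i : ℕ) ∈ I k := hQ1s _ hx1
            have hle : (i : ℕ) ≤ (I k).max' (hIne k h1 h2) := Finset.le_max' _ _ hmem
            have := h1I i hx2
            omega
          | inr j =>
            have hmem : (j : ℕ) ∈ J k := hQ1s _ hx1
            have hge : (J k).min' (hJne k h1 h2) ≤ (j : ℕ) := Finset.min'_le _ _ hmem
            have := h1J j hx2
            exact congrArg Sum.inr (Fin.ext (by omega))
      · intro i hi
        rw [Walk.mem_support_append_iff] at hi
        rcases hi with hi | hi
        · exact Finset.min'_le _ _ (hQ1s _ hi)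
        · have := h1I i hi
          omega
      · intro j hj
        rw [Walk.mem_support_append_iff] at hj
        rcases hj with hj | hj
        · exact Finset.le_max' _ _ (hQ1s _ hj)
        · have := h1J j hj
          omega
      · have e1 : Finset.Icc k t = insert k (Finset.Icc (k+1) t) := by
          ext x
          simp only [Finset.mem_Icc, Finset.mem_insert]
          omega
        have e2 : Finset.Icc (k+1) t = insert (k+1) (Finset.Icc (k+2) t) := by
          ext x
          simp only [Finset.mem_Icc, Finset.mem_insert]
          omega
        rw [e1, Finset.sum_insert (by simp only [Finset.mem_Icc]; omega),
          e2, Finset.sum_insert (by simp only [Finset.mem_Icc]; omega)]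
        simp only [Walk.length_append, Walk.length_reverse]
        rw [hQ1l, hQ2l, hW'l, ywalkD_length, xwalkU_length]
        omega
  obtain ⟨s, hs⟩ := htodd
  obtain ⟨g, hg⟩ := key s 1 (le_refl 1) ht odd_one (by omega)
  obtain ⟨cfun, hcfun⟩ : ∃ cf : ℕ → ℕ → Bool, ∀ i m, cf i m = true ↔ m ≤ 2 * (i - 1) :=
    ⟨fun i m => decide (m ≤ 2 * (i - 1)), fun i m => by simp⟩
  choose Wf hWp hWI hWJ hWl using fun i : ℕ => hg (cfun i)
  have h0a : (0 : ℕ) < a := by omega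
  have hu1 : (u 1 (le_refl 1) ht : ℕ) = (I 1).min' (hIne 1 (le_refl 1) ht) :=
    (hoddk 1 (le_refl 1) ht odd_one).1
  have hxw_le : (((⟨0, h0a⟩ : Fin a)) : ℕ) ≤ (u 1 (le_refl 1) ht : ℕ) := Nat.zero_le _
  refine ⟨fun i => (xwalkU a b E ⟨0, h0a⟩ (u 1 (le_refl 1) ht) hxw_le).append (Wf i),
    ?_, ?_, ?_⟩
  · intro i _ _
    refine myIsPath_append (xwalkU_isPath a b E _ _ _) (hWp i) ?_
    intro x hx1 hx2
    obtain ⟨ii, rfl, hlo, hhi⟩ := xwalkU_support a b E _ _ _ x hx1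
    have := hWI i ii hx2
    exact congrArg Sum.inl (Fin.ext (by omega))
  · have hp1 := hWl 1
    have hpL := hWl ((t + 3) / 2)
    have hc1 : ∀ m ∈ Finset.Icc 1 t,
        (if cfun 1 m then lenR m else lenB m) = lenB m := by
      intro m hm
      rw [Finset.mem_Icc] at hm
      rw [if_neg (fun hcc => by have := (hcfun 1 m).mp hcc; omega)]
    have hcL : ∀ m ∈ Finset.Icc 1 t,
        (if cfun ((t + 3) / 2) m then lenR m else lenB m) = lenR m := by
      intro m hm
      rw [Finset.mem_Icc] at hm
      rw [if_pos ((hcfun ((t + 3) / 2) m).mpr (by omega))]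
    rw [Finset.sum_congr rfl hc1] at hp1
    rw [Finset.sum_congr rfl hcL] at hpL
    have hsum : (∑ m ∈ Finset.Icc 1 t, lenB m) + (∑ m ∈ Finset.Icc 1 t, d m)
        ≤ ∑ m ∈ Finset.Icc 1 t, lenR m := by
      rw [← Finset.sum_add_distrib]
      refine Finset.sum_le_sum ?_
      intro m hm
      rw [Finset.mem_Icc] at hm
      exact hlen' m hm.1 hm.2
    have eB : (Finset.Icc 1 t).sum lenB = ∑ m ∈ Finset.Icc 1 t, lenB m := rfl
    have eR : (Finset.Icc 1 t).sum lenR = ∑ m ∈ Finset.Icc 1 t, lenR m := rfl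
    simp only [Walk.length_append, xwalkU_length, hp1, hpL]
    omega
  · intro i hi1 hi2
    have hPi := hWl i
    have hPi1 := hWl (i + 1)
    have key1 : (∑ m ∈ Finset.Icc 1 t, (if cfun i m then lenR m else lenB m))
        < ∑ m ∈ Finset.Icc 1 t, (if cfun (i+1) m then lenR m else lenB m) := by
      refine Finset.sum_lt_sum ?_ ⟨2 * i - 1, ?_, ?_⟩
      · intro m hm
        rw [Finset.mem_Icc] at hm
        by_cases hm1 : m ≤ 2 * (i - 1)
        · rw [if_pos ((hcfun i m).mpr hm1), if_pos ((hcfun (i+1) m).mpr (by omega))]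
        · by_cases hm2 : m ≤ 2 * ((i + 1) - 1)
          · rw [if_neg (fun hcc => hm1 ((hcfun i m).mp hcc)),
              if_pos ((hcfun (i+1) m).mpr hm2)]
            have := hRB m hm.1 hm.2
            omega
          · rw [if_neg (fun hcc => hm1 ((hcfun i m).mp hcc)),
              if_neg (fun hcc => hm2 ((hcfun (i+1) m).mp hcc))]
      · rw [Finset.mem_Icc]
        omega
      · rw [if_neg (fun hcc => by have := (hcfun i (2*i-1)).mp hcc; omega),
          if_pos ((hcfun (i+1) (2*i-1)).mpr (by omega))]
        have := hRB (2*i-1) (by omega) (by omega)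
        omega
    have key2 : (∑ m ∈ Finset.Icc 1 t, (if cfun (i+1) m then lenR m else lenB m))
        ≤ (∑ m ∈ Finset.Icc 1 t, (if cfun i m then lenR m else lenB m)) + 2 * D := by
      have step1 : (∑ m ∈ Finset.Icc 1 t, (if cfun (i+1) m then lenR m else lenB m))
          ≤ ∑ m ∈ Finset.Icc 1 t, ((if cfun i m then lenR m else lenB m)
            + (if m = 2 * i - 1 ∨ m = 2 * i then D else 0)) := by
        refine Finset.sum_le_sum ?_
        intro m hm
        rw [Finset.mem_Icc] at hm
        by_cases hm1 : m ≤ 2 * (i - 1)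
        · rw [if_pos ((hcfun (i+1) m).mpr (by omega)), if_pos ((hcfun i m).mpr hm1)]
          exact Nat.le_add_right _ _
        · by_cases hm2 : m ≤ 2 * ((i + 1) - 1)
          · rw [if_pos ((hcfun (i+1) m).mpr hm2),
              if_neg (fun hcc => hm1 ((hcfun i m).mp hcc)),
              if_pos (show m = 2 * i - 1 ∨ m = 2 * i by omega)]
            exact hRD m hm.1 hm.2
          · rw [if_neg (fun hcc => hm2 ((hcfun (i+1) m).mp hcc)),
              if_neg (fun hcc => hm1 ((hcfun i m).mp hcc))]
            exact Nat.le_add_right _ _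
      have step2 : (∑ m ∈ Finset.Icc 1 t, (if m = 2 * i - 1 ∨ m = 2 * i then D else 0))
          ≤ 2 * D := by
        rw [← Finset.sum_filter]
        have hsub : (Finset.Icc 1 t).filter (fun m => m = 2 * i - 1 ∨ m = 2 * i)
            ⊆ {2 * i - 1, 2 * i} := by
          intro x hx
          rw [Finset.mem_filter] at hx
          rcases hx.2 with h | h <;> simp [h]
        have hcard : ((Finset.Icc 1 t).filter
            (fun m => m = 2 * i - 1 ∨ m = 2 * i)).card ≤ 2 := by
          refine le_trans (Finset.card_le_card hsub) ?_
          refine le_trans (Finset.card_insert_le _ _) ?_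
          simp
        rw [Finset.sum_const, smul_eq_mul]
        exact Nat.mul_le_mul hcard (le_refl D)
      have step3 : (∑ m ∈ Finset.Icc 1 t, ((if cfun i m then lenR m else lenB m)
            + (if m = 2 * i - 1 ∨ m = 2 * i then D else 0)))
          = (∑ m ∈ Finset.Icc 1 t, (if cfun i m then lenR m else lenB m))
            + ∑ m ∈ Finset.Icc 1 t, (if m = 2 * i - 1 ∨ m = 2 * i then D else 0) :=
        Finset.sum_add_distrib
      omega
    constructor
    · simp only [Walk.length_append, xwalkU_length, hPi, hPi1]
      omega
    · simp only [Walk.length_append, xwalkU_length, hPi, hPi1]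
      omega
end

section
/- Let E be a finite set of chords with |E| = m, all of whose first coordinates are distinct (i.e., each value i occurs as the first coordinate of at most one chord of E). Then either there is a subset of E of size at least m/2 consisting of pairwise-interlacing chords, or there exist t ≥ 1 and pairs of chords (e_k, e'_k) with e_k = (x_k, y_k) ∈ E and e'_k = (x'_k, y'_k) ∈ E for 1 ≤ k ≤ t, such that: (1) for every 1 ≤ k ≤ t, the chords e_k and e'_k are either parallel or satisfy y_k = y'_k; (2) for all 1 ≤ k < l ≤ t, each of e_k and e'_k interlaces each of e_l and e'_l; (3) Σ_{k=1}^{t} |x_k − x'_k| ≥ m/4. -/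
def Chord.Parallel (e e' : ℕ × ℕ) : Prop :=
  (e.1 < e'.1 ∧ e.2 < e'.2) ∨ (e'.1 < e.1 ∧ e'.2 < e.2)

def Chord.Interlacing (e e' : ℕ × ℕ) : Prop :=
  (e.1 < e'.1 ∧ e'.2 < e.2) ∨ (e'.1 < e.1 ∧ e.2 < e'.2)

/-- Greedy: last index `j < m` with `j ≥ s` and `y j ≥ y s` (or `s` itself if none). -/
private def gseg (m : ℕ) (y : ℕ → ℕ) (s : ℕ) : ℕ :=
  WithBot.unbotD s ((Finset.range m).filter (fun j => s ≤ j ∧ y s ≤ y j)).max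

private lemma gseg_spec (m : ℕ) (y : ℕ → ℕ) (s : ℕ) (hs : s < m) :
    s ≤ gseg m y s ∧ gseg m y s < m ∧ y s ≤ y (gseg m y s) ∧
      ∀ j, gseg m y s < j → j < m → y j < y s := by
  classical
  have hmem : s ∈ (Finset.range m).filter (fun j => s ≤ j ∧ y s ≤ y j) := by simp [hs]
  have hne : ((Finset.range m).filter (fun j => s ≤ j ∧ y s ≤ y j)).Nonempty := ⟨s, hmem⟩
  have hmax : gseg m y s = ((Finset.range m).filter (fun j => s ≤ j ∧ y s ≤ y j)).max' hne := by
    unfold gseg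
    rw [← Finset.coe_max' hne]
    rfl
  have hin := Finset.max'_mem _ hne
  rw [← hmax] at hin
  simp only [Finset.mem_filter, Finset.mem_range] at hin
  refine ⟨hin.2.1, hin.1, hin.2.2, ?_⟩
  intro j hj hjm
  by_contra hcon
  push_neg at hcon
  have hjT : j ∈ (Finset.range m).filter (fun j => s ≤ j ∧ y s ≤ y j) := by
    simp only [Finset.mem_filter, Finset.mem_range]
    exact ⟨hjm, le_trans hin.2.1 hj.le, hcon⟩
  have h2 := Finset.le_max' _ j hjT
  rw [← hmax] at h2
  omega

private lemma gseg_ge (m : ℕ) (y : ℕ → ℕ) (s : ℕ) : s ≤ gseg m y s := by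
  classical
  by_cases hs : s < m
  · exact (gseg_spec m y s hs).1
  · have h : (Finset.range m).filter (fun j => s ≤ j ∧ y s ≤ y j) = ∅ := by
      ext j
      simp only [Finset.mem_filter, Finset.mem_range, Finset.notMem_empty, iff_false, not_and]
      intro h1 h2
      omega
    unfold gseg
    rw [h]
    simp

/-- Greedy segment starts. -/
private def gstart (m : ℕ) (y : ℕ → ℕ) : ℕ → ℕ
  | 0 => 0
  | k + 1 => gseg m y (gstart m y k) + 1

/-- Either `E` contains `m/2` pairwise-interlacing chords, or there are
pairs of chords `(e_k, e'_k)`, each pair parallel or sharing its `Y`-vertex, pairs at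
different indices pairwise interlacing, and with `Σ_k |x_k − x'_k| ≥ m/4`. -/
theorem chords_interlacing_or_parallel_pairs
    (m : ℕ) (E : Finset (ℕ × ℕ)) (hm : E.card = m)
    (hdeg : ∀ e ∈ E, ∀ f ∈ E, e.1 = f.1 → e = f) :
    (∃ F ⊆ E, (m : ℝ) / 2 ≤ (F.card : ℝ) ∧
      ∀ e ∈ F, ∀ f ∈ F, e ≠ f → Chord.Interlacing e f) ∨
    (∃ (t : ℕ) (e e' : ℕ → ℕ × ℕ), 1 ≤ t ∧
      (∀ k, 1 ≤ k → k ≤ t → e k ∈ E ∧ e' k ∈ E) ∧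
      (∀ k, 1 ≤ k → k ≤ t →
        Chord.Parallel (e k) (e' k) ∨ (e k).2 = (e' k).2) ∧
      (∀ k l, 1 ≤ k → k < l → l ≤ t →
        Chord.Interlacing (e k) (e l) ∧ Chord.Interlacing (e k) (e' l) ∧
        Chord.Interlacing (e' k) (e l) ∧ Chord.Interlacing (e' k) (e' l)) ∧
      (m : ℝ) / 4 ≤ ∑ k ∈ Finset.Icc 1 t, |((e k).1 : ℝ) - ((e' k).1 : ℝ)|) := by
  classical
  rcases Nat.eq_zero_or_pos m with hm0 | hmpos
  · left
    refine ⟨∅, Finset.empty_subset _, ?_, by simp⟩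
    norm_num [hm0]
  -- Enumerate the chords in order of increasing first coordinate.
  have hinj : Set.InjOn Prod.fst (E : Set (ℕ × ℕ)) := fun e he f hf h => hdeg e he f hf h
  have hX : (E.image Prod.fst).card = m := by
    rw [Finset.card_image_of_injOn hinj, hm]
  set iso := (E.image Prod.fst).orderIsoOfFin hX with hiso
  have hec : ∀ i : Fin m, ∃ e, e ∈ E ∧ e.1 = (iso i : ℕ) := by
    intro i
    have h1 : (iso i : ℕ) ∈ E.image Prod.fst := (iso i).2
    rcases Finset.mem_image.mp h1 with ⟨e, he, hfe⟩
    exact ⟨e, he, hfe⟩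
  choose ch hchE hch1 using hec
  set c : ℕ → ℕ × ℕ := fun n => if h : n < m then ch ⟨n, h⟩ else (0, 0) with hcdef
  have hcE : ∀ n, n < m → c n ∈ E := by
    intro n h
    rw [hcdef]
    simp only [dif_pos h]
    exact hchE _
  have hc1 : ∀ n (h : n < m), (c n).1 = (iso ⟨n, h⟩ : ℕ) := by
    intro n h
    rw [hcdef]
    simp only [dif_pos h]
    exact hch1 _
  have hxmono : ∀ i j, i < j → j < m → (c i).1 < (c j).1 := by
    intro i j hij hj
    have hi : i < m := lt_trans hij hj
    rw [hc1 i hi, hc1 j hj]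
    have h2 : (⟨i, hi⟩ : Fin m) < ⟨j, hj⟩ := hij
    exact_mod_cast iso.strictMono h2
  have hgap : ∀ i d, i + d < m → (c i).1 + d ≤ (c (i + d)).1 := by
    intro i d
    induction d with
    | zero => intro _; simp
    | succ n ih =>
      intro h
      have h1 : i + n < m := by omega
      have h2 := ih h1
      have heq : i + (n + 1) = (i + n) + 1 := by omega
      rw [heq]
      have h3 : (c (i + n)).1 < (c ((i + n) + 1)).1 := hxmono _ _ (by omega) (by omega)
      omega
  -- the y-sequence
  set yf : ℕ → ℕ := fun n => (c n).2 with hyfdef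
  have hyf : ∀ n, yf n = (c n).2 := by intro n; rw [hyfdef]
  set B : ℕ → ℕ := gseg m yf with hB
  set A : ℕ → ℕ := gstart m yf with hA
  have hBspec : ∀ s, s < m → s ≤ B s ∧ B s < m ∧ yf s ≤ yf (B s) ∧
      ∀ j, B s < j → j < m → yf j < yf s := by
    intro s hs
    rw [hB]
    exact gseg_spec m yf s hs
  have hBge : ∀ s, s ≤ B s := by
    intro s
    rw [hB]
    exact gseg_ge m yf s
  have hA0 : A 0 = 0 := by rw [hA]; rfl
  have hAs : ∀ k, A (k + 1) = B (A k) + 1 := by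
    intro k
    rw [hA, hB]
    rfl
  have hAmono1 : ∀ k, A k < A (k + 1) := by
    intro k
    have := hBge (A k)
    rw [hAs]
    omega
  have hAk : ∀ k, k ≤ A k := by
    intro k
    induction k with
    | zero => omega
    | succ n ih => have := hAmono1 n; omega
  have hAmono : ∀ k l, k ≤ l → A k ≤ A l := by
    intro k l h
    induction l with
    | zero => have : k = 0 := by omega
              rw [this]
    | succ n ih =>
      rcases Nat.lt_or_ge k (n + 1) with h1 | h1
      · have h2 := ih (by omega)
        have h3 := hAmono1 n
        omega
      · have : k = n + 1 := by omega
        rw [this]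
  have hex : ∃ k, m ≤ A k := ⟨m, hAk m⟩
  set t := Nat.find hex with htdef
  have ht : m ≤ A t := Nat.find_spec hex
  have htmin : ∀ k, k < t → A k < m := by
    intro k hk
    have := Nat.find_min hex hk
    omega
  have ht1 : 1 ≤ t := by
    by_contra h
    have h0 : t = 0 := by omega
    rw [h0, hA0] at ht
    omega
  have hAt : A t = m := by
    have h1 : A (t - 1) < m := htmin _ (by omega)
    have h2 : A t = B (A (t - 1)) + 1 := by
      have he : t - 1 + 1 = t := by omega
      have h2' := hAs (t - 1)
      rw [he] at h2'
      exact h2'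
    have h3 := (hBspec _ h1).2.1
    omega
  have htel : ∀ n, ∑ k ∈ Finset.range n, (A (k + 1) - A k) = A n := by
    intro n
    induction n with
    | zero => simp [hA0]
    | succ n ih =>
      rw [Finset.sum_range_succ, ih]
      have h1 : A n ≤ A (n + 1) := le_of_lt (hAmono1 n)
      have h2 := hAk n
      omega
  set W := ∑ k ∈ Finset.range t, (B (A k) - A k) with hWdef
  have hWt : W + t = m := by
    have h1 : ∑ k ∈ Finset.range t, (A (k + 1) - A k) = m := by rw [htel, hAt]
    have h2 : ∀ k ∈ Finset.range t, A (k + 1) - A k = (B (A k) - A k) + 1 := by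
      intro k _
      rw [hAs]
      have := hBge (A k)
      omega
    rw [Finset.sum_congr rfl h2, Finset.sum_add_distrib, Finset.sum_const,
      Finset.card_range, smul_eq_mul, mul_one] at h1
    rw [hWdef]
    exact h1
  clear_value W t A B yf c
  by_cases hW4 : m ≤ 4 * W
  · -- pairs case
    right
    refine ⟨t, fun k => c (A (k - 1)), fun k => c (B (A (k - 1))), ht1, ?_, ?_, ?_, ?_⟩
    · intro k hk1 hkt
      have h1 : A (k - 1) < m := htmin _ (by omega)
      exact ⟨hcE _ h1, hcE _ (hBspec _ h1).2.1⟩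
    · intro k hk1 hkt
      show Chord.Parallel (c (A (k - 1))) (c (B (A (k - 1)))) ∨
        (c (A (k - 1))).2 = (c (B (A (k - 1)))).2
      have h1 : A (k - 1) < m := htmin _ (by omega)
      rcases eq_or_lt_of_le (hBge (A (k - 1))) with he | hlt
      · right
        rw [← he]
      · have hy := (hBspec _ h1).2.2.1
        rw [hyf, hyf] at hy
        rcases eq_or_lt_of_le hy with hye | hyl
        · right
          exact hye
        · left
          left
          exact ⟨hxmono _ _ hlt (hBspec _ h1).2.1, hyl⟩
    · intro k l hk1 hkl hlt
      show Chord.Interlacing (c (A (k - 1))) (c (A (l - 1))) ∧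
        Chord.Interlacing (c (A (k - 1))) (c (B (A (l - 1)))) ∧
        Chord.Interlacing (c (B (A (k - 1)))) (c (A (l - 1))) ∧
        Chord.Interlacing (c (B (A (k - 1)))) (c (B (A (l - 1))))
      have hak : A (k - 1) < m := htmin _ (by omega)
      have hal : A (l - 1) < m := htmin _ (by omega)
      have hbk := hBspec _ hak
      have hbl := hBspec _ hal
      have hkey : B (A (k - 1)) < A (l - 1) := by
        have h2 : A ((k - 1) + 1) = B (A (k - 1)) + 1 := hAs _
        have h3 : A ((k - 1) + 1) ≤ A (l - 1) := hAmono _ _ (by omega)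
        omega
      have hint : ∀ p q, (p = A (k - 1) ∨ p = B (A (k - 1))) →
          (q = A (l - 1) ∨ q = B (A (l - 1))) → Chord.Interlacing (c p) (c q) := by
        intro p q hp hq
        have hp1 : A (k - 1) ≤ p ∧ p ≤ B (A (k - 1)) := by
          rcases hp with h | h <;> rw [h]
          · exact ⟨le_rfl, hBge _⟩
          · exact ⟨hBge _, le_rfl⟩
        have hq1 : A (l - 1) ≤ q ∧ q ≤ B (A (l - 1)) := by
          rcases hq with h | h <;> rw [h]
          · exact ⟨le_rfl, hBge _⟩
          · exact ⟨hBge _, le_rfl⟩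
        have hqm : q < m := by
          have := hbl.2.1
          omega
        have hyq : yf q < yf (A (k - 1)) := hbk.2.2.2 q (by omega) hqm
        have hyp : yf (A (k - 1)) ≤ yf p := by
          rcases hp with h | h
          · rw [h]
          · rw [h]
            exact hbk.2.2.1
        rw [hyf, hyf] at hyq
        rw [hyf, hyf] at hyp
        left
        exact ⟨hxmono p q (by omega) hqm, by omega⟩
      exact ⟨hint _ _ (Or.inl rfl) (Or.inl rfl), hint _ _ (Or.inl rfl) (Or.inr rfl),
        hint _ _ (Or.inr rfl) (Or.inl rfl), hint _ _ (Or.inr rfl) (Or.inr rfl)⟩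
    · -- the sum bound
      have key : ∀ k ∈ Finset.Icc 1 t,
          ((B (A (k - 1)) - A (k - 1) : ℕ) : ℝ) ≤
            |((c (A (k - 1))).1 : ℝ) - ((c (B (A (k - 1)))).1 : ℝ)| := by
        intro k hk
        simp only [Finset.mem_Icc] at hk
        have h1 : A (k - 1) < m := htmin _ (by omega)
        have h2 := (hBspec _ h1).2.1
        have h3 := hBge (A (k - 1))
        have h4 : (c (A (k - 1))).1 + (B (A (k - 1)) - A (k - 1)) ≤ (c (B (A (k - 1)))).1 := by
          have h5 := hgap (A (k - 1)) (B (A (k - 1)) - A (k - 1)) (by omega)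
          have heq : A (k - 1) + (B (A (k - 1)) - A (k - 1)) = B (A (k - 1)) := by omega
          rwa [heq] at h5
        have h6 : ((c (A (k - 1))).1 : ℝ) + ((B (A (k - 1)) - A (k - 1) : ℕ) : ℝ) ≤
            ((c (B (A (k - 1)))).1 : ℝ) := by exact_mod_cast h4
        rw [abs_sub_comm, abs_of_nonneg (by linarith)]
        linarith
      have hre : ∀ g : ℕ → ℝ, ∑ k ∈ Finset.Icc 1 t, g (k - 1) = ∑ k ∈ Finset.range t, g k := by
        intro g
        rw [← Finset.Ico_add_one_right_eq_Icc, Finset.sum_Ico_eq_sum_range]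
        have h1 : t + 1 - 1 = t := by omega
        rw [h1]
        refine Finset.sum_congr rfl ?_
        intro i _
        congr 1
        omega
      calc (m : ℝ) / 4 ≤ (W : ℝ) := by
            have : (m : ℝ) ≤ 4 * (W : ℝ) := by exact_mod_cast hW4
            linarith
        _ = ∑ k ∈ Finset.range t, ((B (A k) - A k : ℕ) : ℝ) := by
            rw [hWdef]
            push_cast
            rfl
        _ = ∑ k ∈ Finset.Icc 1 t, ((B (A (k - 1)) - A (k - 1) : ℕ) : ℝ) :=
            (hre fun k => ((B (A k) - A k : ℕ) : ℝ)).symm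
        _ ≤ ∑ k ∈ Finset.Icc 1 t, |((c (A (k - 1))).1 : ℝ) - ((c (B (A (k - 1)))).1 : ℝ)| :=
            Finset.sum_le_sum key
  · -- interlacing case
    left
    have hcross : ∀ k l, k < l → l < t → (c (A k)).1 < (c (A l)).1 ∧ (c (A l)).2 < (c (A k)).2 := by
      intro k l hkl hlt
      have hak : A k < m := htmin _ (by omega)
      have hal : A l < m := htmin _ hlt
      have h1 : B (A k) < A l := by
        have h2 : A (k + 1) ≤ A l := hAmono _ _ hkl
        have h3 := hAs k
        omega
      have h4 := (hBspec _ hak).2.2.2 (A l) h1 hal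
      rw [hyf, hyf] at h4
      exact ⟨hxmono _ _ (by have := hBge (A k); omega) hal, h4⟩
    refine ⟨(Finset.range t).image (fun k => c (A k)), ?_, ?_, ?_⟩
    · intro e he
      rcases Finset.mem_image.mp he with ⟨k, hk, rfl⟩
      exact hcE _ (htmin k (Finset.mem_range.mp hk))
    · have hcard : ((Finset.range t).image (fun k => c (A k))).card = t := by
        rw [Finset.card_image_of_injOn, Finset.card_range]
        intro k hk l hl he
        simp only [Finset.coe_range, Set.mem_Iio] at hk hl
        by_contra hne
        rcases Nat.lt_or_ge k l with h | h
        · have h1 := (hcross k l h hl).1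
          have h2 : (c (A k)).1 = (c (A l)).1 := congrArg Prod.fst he
          omega
        · have h' : l < k := by omega
          have h1 := (hcross l k h' hk).1
          have h2 : (c (A k)).1 = (c (A l)).1 := congrArg Prod.fst he
          omega
      rw [hcard]
      have h2t : m ≤ 2 * t := by omega
      have : (m : ℝ) ≤ 2 * (t : ℝ) := by exact_mod_cast h2t
      linarith
    · intro e he f hf hne
      rcases Finset.mem_image.mp he with ⟨k, hk, rfl⟩
      rcases Finset.mem_image.mp hf with ⟨l, hl, rfl⟩
      simp only [Finset.mem_range] at hk hl
      rcases Nat.lt_trichotomy k l with h | h | h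
      · left
        exact hcross k l h hl
      · rw [h] at hne
        exact absurd rfl hne
      · right
        exact ⟨(hcross l k h hk).1, (hcross l k h hk).2⟩
end

section
/- Let a, b ≥ 2 and let E be a set of chords with |E| = m ≥ 2. Then there is a parallel collection of subsection pairs (I_1,J_1),…,(I_t,J_t) such that Σ_{k=1}^{t} e(I_k,J_k) ≥ m/24 and one of the following holds: (1) for every 1 ≤ k ≤ t there exists either an index i₀ ∈ I_k that is the first coordinate of at least e(I_k,J_k)/(6·log₂ m) chords of E ∩ (I_k × J_k), or an index j₀ ∈ J_k that is the second coordinate of at least e(I_k,J_k)/(6·log₂ m) chords of E ∩ (I_k × J_k); (2) for every 1 ≤ k ≤ t there is a chord in E ∩ (I_k × J_k) which interlaces at least e(I_k,J_k)/(6·log₂ m) of the chords of E ∩ (I_k × J_k). -/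
set_option maxHeartbeats 1000000


instance : ∀ e e' : ℕ × ℕ, Decidable (Chord.Interlacing e e') := fun e e' => by
  unfold Chord.Interlacing; infer_instance

/-- `(I 1, J 1), …, (I t, J t)` is a parallel collection of subsection pairs. -/
def IsParallelColl (a b t : ℕ) (I J : ℕ → Finset ℕ) : Prop :=
  (∀ k, 1 ≤ k → k ≤ t → IsSubsectionPair a b (I k) (J k)) ∧
  (∀ k, 1 ≤ k → k < t → FinsetAbove (I k) (I (k + 1)) ∧ FinsetAbove (J k) (J (k + 1)))

/-- `e(I, J)`: the number of chords of `E` with first coordinate in `I` and second in `J`. -/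
def eCount (E : Finset (ℕ × ℕ)) (I J : Finset ℕ) : ℕ :=
  (E.filter (fun e => e.1 ∈ I ∧ e.2 ∈ J)).card

def Opt1 (m : ℕ) (E : Finset (ℕ × ℕ)) (I J : Finset ℕ) : Prop :=
  (∃ i₀ ∈ I, (eCount E I J : ℝ) / (6 * Real.logb 2 m) ≤
      ((E.filter (fun e => e.1 = i₀ ∧ e.1 ∈ I ∧ e.2 ∈ J)).card : ℝ)) ∨
  (∃ j₀ ∈ J, (eCount E I J : ℝ) / (6 * Real.logb 2 m) ≤
      ((E.filter (fun e => e.2 = j₀ ∧ e.1 ∈ I ∧ e.2 ∈ J)).card : ℝ))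

def Opt2 (m : ℕ) (E : Finset (ℕ × ℕ)) (I J : Finset ℕ) : Prop :=
  ∃ f ∈ E.filter (fun e => e.1 ∈ I ∧ e.2 ∈ J),
    (eCount E I J : ℝ) / (6 * Real.logb 2 m) ≤
      ((E.filter (fun e => e.1 ∈ I ∧ e.2 ∈ J ∧ Chord.Interlacing f e)).card : ℝ)

def PairAbove (p q : Finset ℕ × Finset ℕ) : Prop :=
  FinsetAbove p.1 q.1 ∧ FinsetAbove p.2 q.2

lemma logb_ge_div {p q : ℕ} {x : ℝ} (hq : 0 < q) (hx : 0 < x) (h : (2:ℝ)^p ≤ x^q) :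
    (p:ℝ)/(q:ℝ) ≤ Real.logb 2 x := by
  have h2 : Real.logb 2 ((2:ℝ)^p) ≤ Real.logb 2 (x^q) :=
    Real.logb_le_logb_of_le (by norm_num) (by positivity) h
  rw [Real.logb_pow, Real.logb_pow, Real.logb_self_eq_one (by norm_num)] at h2
  rw [div_le_iff₀ (by positivity)]
  nlinarith [h2]

lemma keysplit (g : ℕ × ℕ → ℕ) (s : Finset (ℕ × ℕ)) (k : ℕ) :
    (s.filter (fun c => g c ≤ k)).card ≤
      (s.filter (fun c => g c ≤ k - 1)).card + (s.filter (fun c => g c = k)).card := by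
  classical
  refine le_trans (Finset.card_le_card ?_) (Finset.card_union_le _ _)
  intro c hc
  simp only [Finset.mem_filter] at hc
  rcases eq_or_ne (g c) k with h | h
  · exact Finset.mem_union_right _ (Finset.mem_filter.mpr ⟨hc.1, h⟩)
  · exact Finset.mem_union_left _ (Finset.mem_filter.mpr ⟨hc.1, by omega⟩)

lemma keysplit2 (g : ℕ × ℕ → ℕ) (s : Finset (ℕ × ℕ)) (k : ℕ) (hk : 1 ≤ k) :
    (s.filter (fun c => ¬(g c ≤ k - 1))).card ≤
      (s.filter (fun c => ¬(g c ≤ k))).card + (s.filter (fun c => g c = k)).card := by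
  classical
  refine le_trans (Finset.card_le_card ?_) (Finset.card_union_le _ _)
  intro c hc
  simp only [Finset.mem_filter] at hc
  rcases eq_or_ne (g c) k with h | h
  · exact Finset.mem_union_right _ (Finset.mem_filter.mpr ⟨hc.1, h⟩)
  · exact Finset.mem_union_left _ (Finset.mem_filter.mpr ⟨hc.1, by omega⟩)

lemma split_lemma (a b m : ℕ) (E : Finset (ℕ × ℕ)) (I J : Finset ℕ)
    (hsub : IsSubsectionPair a b I J)
    (hm : (19:ℝ)/4 ≤ Real.logb 2 m)
    (hbig : 6 * Real.logb 2 m < (eCount E I J : ℝ))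
    (hcol : ∀ i₀ ∈ I, ((E.filter (fun c => c.1 = i₀ ∧ c.1 ∈ I ∧ c.2 ∈ J)).card : ℝ) <
        (eCount E I J : ℝ) / (6 * Real.logb 2 m))
    (hrow : ∀ j₀ ∈ J, ((E.filter (fun c => c.2 = j₀ ∧ c.1 ∈ I ∧ c.2 ∈ J)).card : ℝ) <
        (eCount E I J : ℝ) / (6 * Real.logb 2 m))
    (hOpt2 : ¬ Opt2 m E I J) :
    ∃ I₁ J₁ I₂ J₂ : Finset ℕ,
      IsSubsectionPair a b I₁ J₁ ∧ IsSubsectionPair a b I₂ J₂ ∧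
      I₁ ⊆ I ∧ I₂ ⊆ I ∧ J₁ ⊆ J ∧ J₂ ⊆ J ∧
      FinsetAbove I₁ I₂ ∧ FinsetAbove J₁ J₂ ∧
      (eCount E I₁ J₁ : ℝ) ≤ 5/9 * (eCount E I J : ℝ) ∧
      (eCount E I₂ J₂ : ℝ) ≤ 5/9 * (eCount E I J : ℝ) ∧
      (eCount E I J : ℝ) - (eCount E I J : ℝ) / (2 * Real.logb 2 m) ≤
        (eCount E I₁ J₁ : ℝ) + (eCount E I₂ J₂ : ℝ) := by
  classical
  obtain ⟨hI, hJ, hIint, hJint, hIa, hJb⟩ := hsub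
  set L : ℝ := Real.logb 2 m with hLdef
  set S : Finset (ℕ × ℕ) := E.filter (fun c => c.1 ∈ I ∧ c.2 ∈ J) with hSdef
  have heq : eCount E I J = S.card := rfl
  set T : ℝ := (S.card : ℝ) / (6 * L) with hTdef
  rw [heq] at hbig hcol hrow
  have hL0 : (0:ℝ) < L := lt_of_lt_of_le (by norm_num) hm
  have heR : (0:ℝ) < (S.card : ℝ) := lt_trans (by positivity) hbig
  have he1 : 1 ≤ S.card := by exact_mod_cast Nat.one_le_cast.mpr (by exact_mod_cast heR)
  have hT0 : (0:ℝ) < T := by positivity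
  have hT1 : (1:ℝ) < T := by
    rw [hTdef, lt_div_iff₀ (by positivity)]; linarith
  have hTle : T ≤ 2 * (S.card : ℝ) / 57 := by
    rw [hTdef]
    rw [div_le_div_iff₀ (by positivity) (by norm_num)]
    nlinarith [heR.le]
  -- column and row counts
  have hcolS : ∀ i ∈ I, ((S.filter (fun c => c.1 = i)).card : ℝ) < T := by
    intro i hi
    have hset : S.filter (fun c => c.1 = i) =
        E.filter (fun c => c.1 = i ∧ c.1 ∈ I ∧ c.2 ∈ J) := by
      rw [hSdef]; ext c; simp only [Finset.mem_filter]; tauto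
    rw [hset]; exact hcol i hi
  have hrowS : ∀ j ∈ J, ((S.filter (fun c => c.2 = j)).card : ℝ) < T := by
    intro j hj
    have hset : S.filter (fun c => c.2 = j) =
        E.filter (fun c => c.2 = j ∧ c.1 ∈ I ∧ c.2 ∈ J) := by
      rw [hSdef]; ext c; simp only [Finset.mem_filter]; tauto
    rw [hset]; exact hrow j hj
  have hmemS : ∀ c ∈ S, c.1 ∈ I ∧ c.2 ∈ J := by
    intro c hc; rw [hSdef] at hc; exact (Finset.mem_filter.mp hc).2
  set maxI := I.max' hI with hmaxIdef
  set minI := I.min' hI with hminIdef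
  set maxJ := J.max' hJ with hmaxJdef
  set minJ := J.min' hJ with hminJdef
  -- max I ≥ 1
  have hmaxI1 : 1 ≤ maxI := by
    by_contra h0
    have hmax0 : maxI = 0 := by omega
    have : S.filter (fun c => c.1 = 0) = S := by
      apply Finset.filter_true_of_mem
      intro c hc
      have := I.le_max' c.1 (hmemS c hc).1
      omega
    have h2 := hcolS 0 (by rw [← hmax0]; exact I.max'_mem hI)
    rw [this] at h2
    linarith
  have hmaxJ1 : 1 ≤ maxJ := by
    by_contra h0
    have hmax0 : maxJ = 0 := by omega
    have : S.filter (fun c => c.2 = 0) = S := by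
      apply Finset.filter_true_of_mem
      intro c hc
      have := J.le_max' c.2 (hmemS c hc).2
      omega
    have h2 := hrowS 0 (by rw [← hmax0]; exact J.max'_mem hJ)
    rw [this] at h2
    linarith
  -- the vertical cut
  set cum : ℕ → ℕ := fun i => (S.filter (fun c => c.1 ≤ i)).card with hcumdef
  have hcum_eq : ∀ i, cum i = (S.filter (fun c => c.1 ≤ i)).card := fun _ => rfl
  have hPex : ∃ i, S.card ≤ 2 * cum i := by
    refine ⟨maxI, ?_⟩
    have : S.filter (fun c => c.1 ≤ maxI) = S :=
      Finset.filter_true_of_mem (fun c hc => I.le_max' c.1 (hmemS c hc).1)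
    rw [hcum_eq, this]; omega
  set istar := Nat.find hPex with histardef
  have hp2 : S.card ≤ 2 * cum istar := by rw [histardef]; exact Nat.find_spec hPex
  have hpmin : ∀ i < istar, ¬ (S.card ≤ 2 * cum i) := fun i hi => Nat.find_min hPex hi
  -- istar < maxI
  have hcum_max : S.card ≤ 2 * cum (maxI - 1) := by
    have hsplit : S.card ≤ cum (maxI - 1) + (S.filter (fun c => c.1 = maxI)).card := by
      have hparts := Finset.card_filter_add_card_filter_not
        (s := S) (p := fun c => c.1 ≤ maxI - 1)
      have hsub2 : S.filter (fun c => ¬(c.1 ≤ maxI - 1)) ⊆ S.filter (fun c => c.1 = maxI) := by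
        intro c hc
        simp only [Finset.mem_filter] at hc ⊢
        have := I.le_max' c.1 (hmemS c hc.1).1
        exact ⟨hc.1, by omega⟩
      have := Finset.card_le_card hsub2
      rw [hcum_eq]; omega
    have hcolmax : ((S.filter (fun c => c.1 = maxI)).card : ℝ) < T :=
      hcolS maxI (I.max'_mem hI)
    have : ((S.card : ℝ)) ≤ (cum (maxI - 1) : ℝ) + ((S.filter (fun c => c.1 = maxI)).card : ℝ) := by
      exact_mod_cast hsplit
    have hfin : (S.card : ℝ) ≤ 2 * (cum (maxI - 1) : ℝ) := by linarith
    exact_mod_cast hfin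
  have histar_le : istar ≤ maxI - 1 := by rw [histardef]; exact Nat.find_le hcum_max
  have histar_lt : istar < maxI := by omega
  -- istar ∈ I
  have hcum_pos : 1 ≤ cum istar := by omega
  have histar_in : istar ∈ I := by
    have hpos' : 0 < cum istar := by omega
    rw [hcum_eq] at hpos'
    obtain ⟨c, hc⟩ := Finset.card_pos.mp hpos'
    simp only [Finset.mem_filter] at hc
    exact hIint c.1 (hmemS c hc.1).1 maxI (I.max'_mem hI) istar hc.2 (by omega)
  -- istar ≥ 1
  have histar1 : 1 ≤ istar := by
    by_contra h0
    have h00 : istar = 0 := by omega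
    have hset : S.filter (fun c => c.1 ≤ (0:ℕ)) = S.filter (fun c => c.1 = 0) := by
      apply Finset.filter_congr; intro c _; simp only [Nat.le_zero]
    have hcl := hcolS 0 (h00 ▸ histar_in)
    have h1 : (cum istar : ℝ) < T := by
      rw [h00, hcum_eq, hset]; exact hcl
    have h2 : (S.card : ℝ) ≤ 2 * (cum istar : ℝ) := by exact_mod_cast hp2
    linarith
  -- upper bound on p
  have hpU : ((cum istar : ℕ) : ℝ) < (S.card : ℝ) / 2 + T := by
    have hk := keysplit Prod.fst S istar
    have hprev := hpmin (istar - 1) (by omega)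
    have hprev' : (2 * cum (istar - 1) : ℝ) < (S.card : ℝ) := by
      push_cast
      exact_mod_cast Nat.lt_of_not_le hprev
    have hcl := hcolS istar histar_in
    have hk' : ((cum istar : ℕ) : ℝ) ≤ (cum (istar - 1) : ℝ) +
        ((S.filter (fun c => c.1 = istar)).card : ℝ) := by exact_mod_cast hk
    linarith
  set p := cum istar with hpdef
  have hpR : (S.card : ℝ) ≤ 2 * (p : ℝ) := by exact_mod_cast hp2
  -- the two halves
  set S₁ := S.filter (fun c => c.1 ≤ istar) with hS1def
  set S₂ := S.filter (fun c => ¬(c.1 ≤ istar)) with hS2def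
  have hS1card : S₁.card = p := rfl
  have hS12 : S₁.card + S₂.card = S.card := by
    rw [hS1def, hS2def]
    exact Finset.card_filter_add_card_filter_not (s := S) (p := fun c => c.1 ≤ istar)
  -- the horizontal cut
  set Bf : ℕ → ℕ := fun ℓ => (S₁.filter (fun c => ¬(c.2 ≤ ℓ))).card with hBdef
  set Cf : ℕ → ℕ := fun ℓ => (S₂.filter (fun c => c.2 ≤ ℓ)).card with hCdef
  have hBf_eq : ∀ ℓ, Bf ℓ = (S₁.filter (fun c => ¬(c.2 ≤ ℓ))).card := fun _ => rfl
  have hCf_eq : ∀ ℓ, Cf ℓ = (S₂.filter (fun c => c.2 ≤ ℓ)).card := fun _ => rfl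
  have hQex : ∃ ℓ, Bf ℓ ≤ Cf ℓ := by
    refine ⟨maxJ, ?_⟩
    have : S₁.filter (fun c => ¬(c.2 ≤ maxJ)) = ∅ := by
      apply Finset.filter_false_of_mem
      intro c hc
      have := J.le_max' c.2 (hmemS c (Finset.mem_filter.mp hc).1).2
      omega
    rw [hBf_eq, this]; simp
  set lstar := Nat.find hQex with hlstardef
  have hQ : Bf lstar ≤ Cf lstar := by rw [hlstardef]; exact Nat.find_spec hQex
  have hQmin : ∀ ℓ < lstar, ¬ (Bf ℓ ≤ Cf ℓ) := fun ℓ hl => Nat.find_min hQex hl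
  -- lstar < maxJ
  have hQmax : Bf (maxJ - 1) ≤ Cf (maxJ - 1) := by
    have hB : Bf (maxJ - 1) ≤ (S.filter (fun c => c.2 = maxJ)).card := by
      apply Finset.card_le_card
      intro c hc
      simp only [hS1def, Finset.mem_filter] at hc ⊢
      have := J.le_max' c.2 (hmemS c hc.1.1).2
      exact ⟨hc.1.1, by omega⟩
    have hC : S₂.card ≤ Cf (maxJ - 1) + (S.filter (fun c => c.2 = maxJ)).card := by
      have hparts := Finset.card_filter_add_card_filter_not
        (s := S₂) (p := fun c => c.2 ≤ maxJ - 1)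
      have hsub2 : S₂.filter (fun c => ¬(c.2 ≤ maxJ - 1)) ⊆ S.filter (fun c => c.2 = maxJ) := by
        intro c hc
        simp only [hS2def, Finset.mem_filter] at hc ⊢
        have := J.le_max' c.2 (hmemS c hc.1.1).2
        exact ⟨hc.1.1, by omega⟩
      have := Finset.card_le_card hsub2
      have hCeq' : Cf (maxJ - 1) = (S₂.filter (fun c => c.2 ≤ maxJ - 1)).card := hCf_eq _
      omega
    have hrmax : ((S.filter (fun c => c.2 = maxJ)).card : ℝ) < T := hrowS maxJ (J.max'_mem hJ)
    have hBR : (Bf (maxJ - 1) : ℝ) ≤ ((S.filter (fun c => c.2 = maxJ)).card : ℝ) := by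
      exact_mod_cast hB
    have hCR : (S₂.card : ℝ) ≤ (Cf (maxJ - 1) : ℝ) + ((S.filter (fun c => c.2 = maxJ)).card : ℝ) := by
      exact_mod_cast hC
    have hS2R : (S.card : ℝ) - (p : ℝ) = (S₂.card : ℝ) := by
      have : (S₁.card : ℝ) + (S₂.card : ℝ) = (S.card : ℝ) := by exact_mod_cast hS12
      rw [hS1card] at this; linarith
    have : (Bf (maxJ - 1) : ℝ) < (Cf (maxJ - 1) : ℝ) := by linarith
    exact_mod_cast this.le
  have hlstar_le : lstar ≤ maxJ - 1 := by rw [hlstardef]; exact Nat.find_le hQmax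
  have hlstar_lt : lstar < maxJ := by omega
  -- minJ ≤ lstar
  have hminJ_le : minJ ≤ lstar := by
    by_contra h0
    push_neg at h0
    have hC0 : Cf lstar = 0 := by
      rw [hCf_eq]
      rw [Finset.card_eq_zero]
      apply Finset.filter_false_of_mem
      intro c hc
      have := J.min'_le c.2 (hmemS c (Finset.mem_filter.mp hc).1).2
      omega
    have hB0 : Bf lstar = p := by
      rw [hBf_eq]
      have htr : S₁.filter (fun c => ¬(c.2 ≤ lstar)) = S₁ := by
        apply Finset.filter_true_of_mem
        intro c hc
        rw [hS1def] at hc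
        have := J.min'_le c.2 (hmemS c (Finset.mem_filter.mp hc).1).2
        omega
      rw [htr, hS1card]
    omega
  have hlstar_in : lstar ∈ J :=
    hJint minJ (J.min'_mem hJ) maxJ (J.max'_mem hJ) lstar hminJ_le (by omega)
  set eB := Bf lstar with heBdef
  set eC := Cf lstar with heCdef
  have heBC : eB ≤ eC := hQ
  -- eC < eB + T
  have heC_lt : (eC : ℝ) < (eB : ℝ) + T := by
    rcases Nat.eq_zero_or_pos lstar with h0 | hpos
    · have hsub2 : S₂.filter (fun c => c.2 ≤ lstar) ⊆ S.filter (fun c => c.2 = lstar) := by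
        intro c hc
        simp only [hS2def, Finset.mem_filter] at hc ⊢
        exact ⟨hc.1.1, by omega⟩
      have h1 : (eC : ℝ) ≤ ((S.filter (fun c => c.2 = lstar)).card : ℝ) := by
        exact_mod_cast Finset.card_le_card hsub2
      have h2 := hrowS lstar hlstar_in
      have : (0:ℝ) ≤ (eB : ℝ) := by positivity
      linarith
    · have hnq := hQmin (lstar - 1) (by omega)
      have hnq' : Cf (lstar - 1) < Bf (lstar - 1) := by omega
      have hCk : Cf lstar ≤ Cf (lstar - 1) + (S₂.filter (fun c => c.2 = lstar)).card :=
        keysplit Prod.snd S₂ lstar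
      have hBk : Bf (lstar - 1) ≤ Bf lstar + (S₁.filter (fun c => c.2 = lstar)).card :=
        keysplit2 Prod.snd S₁ lstar hpos
      have hrr : (S₁.filter (fun c => c.2 = lstar)).card +
          (S₂.filter (fun c => c.2 = lstar)).card = (S.filter (fun c => c.2 = lstar)).card := by
        have h1 : S₁.filter (fun c => c.2 = lstar) =
            (S.filter (fun c => c.2 = lstar)).filter (fun c => c.1 ≤ istar) := by
          rw [hS1def, Finset.filter_comm]
        have h2 : S₂.filter (fun c => c.2 = lstar) =
            (S.filter (fun c => c.2 = lstar)).filter (fun c => ¬(c.1 ≤ istar)) := by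
          rw [hS2def, Finset.filter_comm]
        rw [h1, h2]
        exact Finset.card_filter_add_card_filter_not
          (s := S.filter (fun c => c.2 = lstar)) (p := fun c => c.1 ≤ istar)
      have hrT := hrowS lstar hlstar_in
      have hcast : (eC : ℝ) ≤ (Cf (lstar-1) : ℝ) + ((S₂.filter (fun c => c.2 = lstar)).card : ℝ) := by
        exact_mod_cast hCk
      have hcast2 : (Bf (lstar-1) : ℝ) ≤ (eB : ℝ) + ((S₁.filter (fun c => c.2 = lstar)).card : ℝ) := by
        exact_mod_cast hBk
      have hcast3 : (Cf (lstar-1) : ℝ) + 1 ≤ (Bf (lstar-1) : ℝ) := by exact_mod_cast hnq'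
      have hcast4 : ((S₁.filter (fun c => c.2 = lstar)).card : ℝ) +
          ((S₂.filter (fun c => c.2 = lstar)).card : ℝ) =
          ((S.filter (fun c => c.2 = lstar)).card : ℝ) := by exact_mod_cast hrr
      linarith
  -- eB < T  (using ¬ Opt2)
  have heB_lt : (eB : ℝ) < T := by
    rcases Nat.eq_zero_or_pos eC with h0 | hpos
    · have : eB = 0 := by omega
      rw [this]; simpa using hT0
    · obtain ⟨c, hc⟩ := Finset.card_pos.mp hpos
      simp only [hS2def, hSdef, Finset.mem_filter] at hc
      obtain ⟨⟨⟨hcE, hcI, hcJ⟩, hci⟩, hcj⟩ := hc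
      have hsubB : S₁.filter (fun x => ¬(x.2 ≤ lstar)) ⊆
          E.filter (fun x => x.1 ∈ I ∧ x.2 ∈ J ∧ Chord.Interlacing c x) := by
        intro x hx
        simp only [hS1def, hSdef, Finset.mem_filter] at hx ⊢
        obtain ⟨⟨⟨hxE, hxI, hxJ⟩, hxi⟩, hxj⟩ := hx
        exact ⟨hxE, hxI, hxJ, Or.inr ⟨by omega, by omega⟩⟩
      rw [Opt2] at hOpt2
      push_neg at hOpt2
      have hcmem : c ∈ E.filter (fun e => e.1 ∈ I ∧ e.2 ∈ J) :=
        Finset.mem_filter.mpr ⟨hcE, hcI, hcJ⟩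
      have hlt := hOpt2 c hcmem
      rw [heq] at hlt
      have : (eB : ℝ) ≤ ((E.filter (fun x => x.1 ∈ I ∧ x.2 ∈ J ∧ Chord.Interlacing c x)).card : ℝ) := by
        exact_mod_cast Finset.card_le_card hsubB
      exact lt_of_le_of_lt this hlt
  -- quadrant counts
  set eA := (S₁.filter (fun c => c.2 ≤ lstar)).card with heAdef
  set eD := (S₂.filter (fun c => ¬(c.2 ≤ lstar))).card with heDdef
  have hS1split : eA + eB = p := by
    rw [heAdef, heBdef, hBf_eq, ← hS1card]
    exact Finset.card_filter_add_card_filter_not (s := S₁) (p := fun c => c.2 ≤ lstar)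
  have hS2split : eC + eD = S₂.card := by
    rw [heCdef, heDdef, hCf_eq]
    exact Finset.card_filter_add_card_filter_not (s := S₂) (p := fun c => c.2 ≤ lstar)
  have htotal : eA + eB + eC + eD = S.card := by omega
  -- the four sets
  set I₁ := I.filter (fun x => x ≤ istar) with hI1def
  set I₂ := I.filter (fun x => ¬(x ≤ istar)) with hI2def
  set J₁ := J.filter (fun x => x ≤ lstar) with hJ1def
  set J₂ := J.filter (fun x => ¬(x ≤ lstar)) with hJ2def
  have hA_eq : eCount E I₁ J₁ = eA := by
    rw [eCount, heAdef]
    congr 1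
    ext c
    simp only [hS1def, hSdef, hI1def, hJ1def, Finset.mem_filter]
    tauto
  have hD_eq : eCount E I₂ J₂ = eD := by
    rw [eCount, heDdef]
    congr 1
    ext c
    simp only [hS2def, hSdef, hI2def, hJ2def, Finset.mem_filter]
    tauto
  refine ⟨I₁, J₁, I₂, J₂, ?_, ?_, Finset.filter_subset _ _, Finset.filter_subset _ _,
    Finset.filter_subset _ _, Finset.filter_subset _ _, ?_, ?_, ?_, ?_, ?_⟩
  · -- IsSubsectionPair a b I₁ J₁
    refine ⟨⟨minI, Finset.mem_filter.mpr ⟨I.min'_mem hI, I.min'_le istar histar_in⟩⟩,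
      ⟨minJ, Finset.mem_filter.mpr ⟨J.min'_mem hJ, hminJ_le⟩⟩, ?_, ?_, ?_, ?_⟩
    · intro x hx z hz y hxy hyz
      simp only [hI1def, Finset.mem_filter] at hx hz ⊢
      exact ⟨hIint x hx.1 z hz.1 y hxy hyz, le_trans hyz hz.2⟩
    · intro x hx z hz y hxy hyz
      simp only [hJ1def, Finset.mem_filter] at hx hz ⊢
      exact ⟨hJint x hx.1 z hz.1 y hxy hyz, le_trans hyz hz.2⟩
    · exact fun i hi => hIa i (Finset.mem_of_mem_filter i hi)
    · exact fun j hj => hJb j (Finset.mem_of_mem_filter j hj)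
  · -- IsSubsectionPair a b I₂ J₂
    refine ⟨⟨maxI, Finset.mem_filter.mpr ⟨I.max'_mem hI, by omega⟩⟩,
      ⟨maxJ, Finset.mem_filter.mpr ⟨J.max'_mem hJ, by omega⟩⟩, ?_, ?_, ?_, ?_⟩
    · intro x hx z hz y hxy hyz
      simp only [hI2def, Finset.mem_filter] at hx hz ⊢
      refine ⟨hIint x hx.1 z hz.1 y hxy hyz, by omega⟩
    · intro x hx z hz y hxy hyz
      simp only [hJ2def, Finset.mem_filter] at hx hz ⊢
      refine ⟨hJint x hx.1 z hz.1 y hxy hyz, by omega⟩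
    · exact fun i hi => hIa i (Finset.mem_of_mem_filter i hi)
    · exact fun j hj => hJb j (Finset.mem_of_mem_filter j hj)
  · -- FinsetAbove I₁ I₂
    intro x hx y hy
    simp only [hI1def, hI2def, Finset.mem_filter] at hx hy
    omega
  · -- FinsetAbove J₁ J₂
    intro x hx y hy
    simp only [hJ1def, hJ2def, Finset.mem_filter] at hx hy
    omega
  · -- eA ≤ 5/9 e
    rw [hA_eq, heq]
    have h0 : eA ≤ p := by omega
    have h1 : (eA : ℝ) ≤ (p : ℝ) := by exact_mod_cast h0
    linarith
  · -- eD ≤ 5/9 e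
    rw [hD_eq, heq]
    have h1 : (eD : ℝ) ≤ (S.card : ℝ) - (p : ℝ) := by
      have : eD ≤ S₂.card := by omega
      have h2 : (eD : ℝ) ≤ (S₂.card : ℝ) := by exact_mod_cast this
      have h3 : (S₁.card : ℝ) + (S₂.card : ℝ) = (S.card : ℝ) := by exact_mod_cast hS12
      rw [hS1card] at h3
      linarith
    linarith
  · -- retained
    rw [hA_eq, hD_eq, heq]
    have h1 : (eA : ℝ) + (eD : ℝ) = (S.card : ℝ) - (eB : ℝ) - (eC : ℝ) := by
      have : ((eA + eB + eC + eD : ℕ) : ℝ) = (S.card : ℝ) := by exact_mod_cast htotal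
      push_cast at this
      linarith
    have h2 : (eB : ℝ) + (eC : ℝ) < 3 * T := by linarith
    have h3 : 3 * T = (S.card : ℝ) / (2 * L) := by
      rw [hTdef]; field_simp; ring
    linarith

lemma opt1_of_small (m : ℕ) (E : Finset (ℕ × ℕ)) (I J : Finset ℕ) (hI : I.Nonempty)
    (hL0 : 0 < Real.logb 2 m)
    (hsmall : (eCount E I J : ℝ) ≤ 6 * Real.logb 2 m) : Opt1 m E I J := by
  classical
  left
  rcases Nat.eq_zero_or_pos (eCount E I J) with h0 | hpos
  · exact ⟨I.min' hI, I.min'_mem hI, by rw [h0]; simp only [Nat.cast_zero, zero_div]; positivity⟩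
  · rw [eCount] at hpos
    obtain ⟨c, hc⟩ := Finset.card_pos.mp hpos
    rw [Finset.mem_filter] at hc
    obtain ⟨hcE, hcI, hcJ⟩ := hc
    refine ⟨c.1, hcI, ?_⟩
    have hmem : c ∈ E.filter (fun e => e.1 = c.1 ∧ e.1 ∈ I ∧ e.2 ∈ J) :=
      Finset.mem_filter.mpr ⟨hcE, rfl, hcI, hcJ⟩
    have h1 : (1:ℝ) ≤ ((E.filter (fun e => e.1 = c.1 ∧ e.1 ∈ I ∧ e.2 ∈ J)).card : ℝ) := by
      exact_mod_cast Finset.card_pos.mpr ⟨c, hmem⟩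
    have h2 : (eCount E I J : ℝ) / (6 * Real.logb 2 m) ≤ 1 := by
      rw [div_le_one (by positivity)]; exact hsmall
    linarith

lemma leaf_lemma (a b m : ℕ) (E : Finset (ℕ × ℕ)) (I J : Finset ℕ)
    (hL0 : 0 < Real.logb 2 m)
    (hcond : Opt1 m E I J ∨ Opt2 m E I J) (hsub : IsSubsectionPair a b I J) :
    ∃ L : List (Finset ℕ × Finset ℕ),
      L.Pairwise PairAbove ∧
      (∀ q ∈ L, IsSubsectionPair a b q.1 q.2 ∧ q.1 ⊆ I ∧ q.2 ⊆ J ∧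
        (Opt1 m E q.1 q.2 ∨ Opt2 m E q.1 q.2)) ∧
      (eCount E I J : ℝ) * (1 - 5 * Real.logb 2 (eCount E I J) / (6 * Real.logb 2 m)) ≤
        (List.map (fun q => (eCount E q.1 q.2 : ℝ)) L).sum := by
  refine ⟨[(I, J)], List.pairwise_singleton _ _, ?_, ?_⟩
  · intro q hq
    rw [List.mem_singleton] at hq
    subst hq
    exact ⟨hsub, subset_rfl, subset_rfl, hcond⟩
  · simp only [List.map_cons, List.map_nil, List.sum_cons, List.sum_nil, add_zero]
    rcases Nat.eq_zero_or_pos (eCount E I J) with h0 | hpos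
    · rw [h0]; norm_num
    · have hx : 0 ≤ Real.logb 2 (eCount E I J) :=
        Real.logb_nonneg (by norm_num) (by exact_mod_cast hpos)
      have hfac : 1 - 5 * Real.logb 2 (eCount E I J) / (6 * Real.logb 2 m) ≤ 1 := by
        have : 0 ≤ 5 * Real.logb 2 (eCount E I J) / (6 * Real.logb 2 m) := by positivity
        linarith
      nlinarith [(Nat.cast_pos (α := ℝ)).mpr hpos]

lemma rec_lemma (a b m : ℕ) (E : Finset (ℕ × ℕ))
    (hmL : (19:ℝ)/4 ≤ Real.logb 2 m) (hEm : E.card ≤ m) :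
    ∀ (n : ℕ) (I J : Finset ℕ), eCount E I J ≤ n → IsSubsectionPair a b I J →
    ∃ L : List (Finset ℕ × Finset ℕ),
      L.Pairwise PairAbove ∧
      (∀ q ∈ L, IsSubsectionPair a b q.1 q.2 ∧ q.1 ⊆ I ∧ q.2 ⊆ J ∧
        (Opt1 m E q.1 q.2 ∨ Opt2 m E q.1 q.2)) ∧
      (eCount E I J : ℝ) * (1 - 5 * Real.logb 2 (eCount E I J) / (6 * Real.logb 2 m)) ≤
        (List.map (fun q => (eCount E q.1 q.2 : ℝ)) L).sum := by
  have hL0 : (0:ℝ) < Real.logb 2 m := lt_of_lt_of_le (by norm_num) hmL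
  intro n
  induction n with
  | zero =>
    intro I J hn hsub
    exact leaf_lemma a b m E I J hL0
      (Or.inl (opt1_of_small m E I J hsub.1 hL0 (by
        rw [Nat.le_zero.mp hn]; simp only [Nat.cast_zero]; positivity))) hsub
  | succ n ih =>
    intro I J hn hsub
    by_cases hsmall : (eCount E I J : ℝ) ≤ 6 * Real.logb 2 m
    · exact leaf_lemma a b m E I J hL0
        (Or.inl (opt1_of_small m E I J hsub.1 hL0 hsmall)) hsub
    by_cases h1 : Opt1 m E I J
    · exact leaf_lemma a b m E I J hL0 (Or.inl h1) hsub
    by_cases h2 : Opt2 m E I J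
    · exact leaf_lemma a b m E I J hL0 (Or.inr h2) hsub
    rw [not_le] at hsmall
    rw [Opt1] at h1
    push_neg at h1
    obtain ⟨hcol, hrow⟩ := h1
    obtain ⟨I₁, J₁, I₂, J₂, hsp1, hsp2, hI1s, hI2s, hJ1s, hJ2s, hab1, hab2, hA5, hD5, hret⟩ :=
      split_lemma a b m E I J hsub hmL hsmall hcol hrow h2
    -- abbreviations
    set e : ℕ := eCount E I J with hedef
    set eA : ℕ := eCount E I₁ J₁ with heAdef
    set eD : ℕ := eCount E I₂ J₂ with heDdef
    have heR : (0:ℝ) < (e:ℝ) := lt_trans (by positivity) hsmall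
    have he1 : 1 ≤ e := by exact_mod_cast Nat.one_le_cast.mpr (by exact_mod_cast heR)
    have hAn : eA ≤ n := by
      have : (eA:ℝ) < (e:ℝ) := lt_of_le_of_lt hA5 (by linarith)
      have : eA < e := by exact_mod_cast this
      omega
    have hDn : eD ≤ n := by
      have : (eD:ℝ) < (e:ℝ) := lt_of_le_of_lt hD5 (by linarith)
      have : eD < e := by exact_mod_cast this
      omega
    obtain ⟨LA, hLA_pw, hLA_mem, hLA_sum⟩ := ih I₁ J₁ hAn hsp1
    obtain ⟨LD, hLD_pw, hLD_mem, hLD_sum⟩ := ih I₂ J₂ hDn hsp2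
    refine ⟨LA ++ LD, ?_, ?_, ?_⟩
    · rw [List.pairwise_append]
      refine ⟨hLA_pw, hLD_pw, ?_⟩
      intro q hq r hr
      obtain ⟨_, hq1, hq2, _⟩ := hLA_mem q hq
      obtain ⟨_, hr1, hr2, _⟩ := hLD_mem r hr
      constructor
      · intro x hx y hy; exact hab1 x (hq1 hx) y (hr1 hy)
      · intro x hx y hy; exact hab2 x (hq2 hx) y (hr2 hy)
    · intro q hq
      rcases List.mem_append.mp hq with hq' | hq'
      · obtain ⟨hs, hq1, hq2, hopt⟩ := hLA_mem q hq'
        exact ⟨hs, subset_trans hq1 hI1s, subset_trans hq2 hJ1s, hopt⟩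
      · obtain ⟨hs, hq1, hq2, hopt⟩ := hLD_mem q hq'
        exact ⟨hs, subset_trans hq1 hI2s, subset_trans hq2 hJ2s, hopt⟩
    · rw [List.map_append, List.sum_append]
      set L : ℝ := Real.logb 2 m with hLdef
      set x : ℝ := Real.logb 2 (e:ℝ) with hxdef
      have hx0 : 0 ≤ x := Real.logb_nonneg (by norm_num) (by exact_mod_cast he1)
      have hxL : x ≤ L := by
        rw [hxdef, hLdef]
        apply Real.logb_le_logb_of_le (by norm_num) (by exact_mod_cast he1)
        have h1 : e ≤ E.card := Finset.card_filter_le _ _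
        exact_mod_cast le_trans h1 hEm
      have key : ∀ (ec : ℕ), (ec:ℝ) ≤ 5/9 * (e:ℝ) →
          (ec:ℝ) * (1 - 5 * (x - 4/5) / (6 * L)) ≤
          (ec:ℝ) * (1 - 5 * Real.logb 2 (ec:ℝ) / (6 * L)) := by
        intro ec hec
        rcases Nat.eq_zero_or_pos ec with h0 | hpos
        · rw [h0]; norm_num
        · apply mul_le_mul_of_nonneg_left _ (by positivity)
          have hlog : Real.logb 2 (ec:ℝ) ≤ x - 4/5 := by
            have hle : Real.logb 2 (ec:ℝ) ≤ Real.logb 2 (5/9 * (e:ℝ)) :=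
              Real.logb_le_logb_of_le (by norm_num) (by exact_mod_cast hpos) hec
            have hmul : Real.logb 2 (5/9 * (e:ℝ)) = Real.logb 2 ((5:ℝ)/9) + x := by
              rw [hxdef, Real.logb_mul (by norm_num) (by positivity)]
            have hinv : Real.logb 2 ((5:ℝ)/9) ≤ -(4/5) := by
              have h95 : (4:ℝ)/5 ≤ Real.logb 2 ((9:ℝ)/5) := by
                have := logb_ge_div (p := 4) (q := 5) (x := (9:ℝ)/5) (by norm_num)
                  (by norm_num) (by norm_num)
                norm_num at this ⊢; linarith
              have : Real.logb 2 ((5:ℝ)/9) = - Real.logb 2 ((9:ℝ)/5) := by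
                rw [show (5:ℝ)/9 = ((9:ℝ)/5)⁻¹ by norm_num, Real.logb_inv]
              linarith
            linarith
          have h6L : (0:ℝ) < 6 * L := by linarith
          have := div_le_div_of_nonneg_right (c := 6*L) (by linarith :
            5 * Real.logb 2 (ec:ℝ) ≤ 5 * (x - 4/5)) h6L.le
          linarith [this]
      have hfacpos : 0 ≤ 1 - 5 * (x - 4/5) / (6 * L) := by
        rw [sub_nonneg, div_le_one (by linarith)]
        linarith
      have hstep1 : ((e:ℝ) - (e:ℝ)/(2*L)) * (1 - 5 * (x - 4/5) / (6 * L)) ≤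
          ((eA:ℝ) + (eD:ℝ)) * (1 - 5 * (x - 4/5) / (6 * L)) :=
        mul_le_mul_of_nonneg_right hret hfacpos
      have hstep2 : ((eA:ℝ) + (eD:ℝ)) * (1 - 5 * (x - 4/5) / (6 * L)) ≤
          (List.map (fun q => (eCount E q.1 q.2 : ℝ)) LA).sum +
          (List.map (fun q => (eCount E q.1 q.2 : ℝ)) LD).sum := by
        have kA := key eA hA5
        have kD := key eD hD5
        have : ((eA:ℝ) + (eD:ℝ)) * (1 - 5 * (x - 4/5) / (6 * L)) =
            (eA:ℝ) * (1 - 5 * (x - 4/5) / (6 * L)) + (eD:ℝ) * (1 - 5 * (x - 4/5) / (6 * L)) := by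
          ring
        rw [this]
        exact add_le_add (le_trans kA hLA_sum) (le_trans kD hLD_sum)
      have hstep0 : (e:ℝ) * (1 - 5 * x / (6 * L)) ≤
          ((e:ℝ) - (e:ℝ)/(2*L)) * (1 - 5 * (x - 4/5) / (6 * L)) := by
        rw [← sub_nonneg]
        have hexp : ((e:ℝ) - (e:ℝ)/(2*L)) * (1 - 5 * (x - 4/5) / (6 * L)) -
            (e:ℝ) * (1 - 5 * x / (6 * L)) = (e:ℝ) * (2*L + 5*x - 4) / (12 * L^2) := by
          field_simp
          ring
        rw [hexp]
        apply div_nonneg _ (by positivity)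
        apply mul_nonneg heR.le
        linarith
      linarith

lemma sum_Icc_eq_range (g : ℕ → ℝ) (t : ℕ) :
    ∑ k ∈ Finset.Icc 1 t, g k = ∑ i ∈ Finset.range t, g (i+1) := by
  induction t with
  | zero => simp
  | succ t ih =>
    rw [Finset.sum_Icc_succ_top (by omega), ih, Finset.sum_range_succ]

lemma sum_range_getD {α : Type*} (f : α → ℝ) (d : α) (l : List α) :
    ∑ i ∈ Finset.range l.length, f (l.getD i d) = (l.map f).sum := by
  induction l with
  | nil => simp
  | cons a tl ih =>
    rw [List.length_cons, Finset.sum_range_succ']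
    simp only [List.getD_cons_succ, List.getD_cons_zero]
    rw [ih, List.map_cons, List.sum_cons]
    ring

lemma filter_sum_split {α : Type*} (f : α → ℝ) (q : α → Bool) (l : List α) :
    ((l.filter q).map f).sum + ((l.filter (fun a => !(q a))).map f).sum = (l.map f).sum := by
  induction l with
  | nil => simp
  | cons a tl ih =>
    cases hq : q a <;> simp [List.filter_cons, hq, ← ih] <;> ring

lemma assemble (a b m : ℕ) (E : Finset (ℕ × ℕ)) (W : List (Finset ℕ × Finset ℕ))
    (hpw : W.Pairwise PairAbove)
    (hmem : ∀ q ∈ W, IsSubsectionPair a b q.1 q.2)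
    (hsum : (m:ℝ)/24 ≤ (W.map (fun q => (eCount E q.1 q.2 : ℝ))).sum)
    (hm0 : 0 < (m:ℝ)) :
    ∃ (t : ℕ) (If Jf : ℕ → Finset ℕ), 1 ≤ t ∧ IsParallelColl a b t If Jf ∧
      (m : ℝ)/24 ≤ ∑ k ∈ Finset.Icc 1 t, (eCount E (If k) (Jf k) : ℝ) ∧
      (∀ k, 1 ≤ k → k ≤ t → (If k, Jf k) ∈ W) := by
  classical
  have hne : W ≠ [] := by
    intro h; rw [h] at hsum; simp at hsum; linarith
  have ht1 : 1 ≤ W.length := List.length_pos_iff.mpr hne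
  refine ⟨W.length, fun k => (W.getD (k-1) (∅,∅)).1, fun k => (W.getD (k-1) (∅,∅)).2,
    ht1, ?_, ?_, ?_⟩
  · constructor
    · intro k hk1 hk2
      show IsSubsectionPair a b (W.getD (k-1) (∅,∅)).1 (W.getD (k-1) (∅,∅)).2
      have hlt : k - 1 < W.length := by omega
      rw [List.getD_eq_getElem _ _ hlt]
      exact hmem _ (List.getElem_mem hlt)
    · intro k hk1 hkt
      show FinsetAbove (W.getD (k-1) (∅,∅)).1 (W.getD (k+1-1) (∅,∅)).1 ∧
        FinsetAbove (W.getD (k-1) (∅,∅)).2 (W.getD (k+1-1) (∅,∅)).2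
      have hlt1 : k - 1 < W.length := by omega
      have hlt2 : k + 1 - 1 < W.length := by omega
      have hfin : (⟨k-1, hlt1⟩ : Fin W.length) < ⟨k+1-1, hlt2⟩ := by
        simp only [Fin.mk_lt_mk]; omega
      have := List.pairwise_iff_get.mp hpw ⟨k-1, hlt1⟩ ⟨k+1-1, hlt2⟩ hfin
      rw [List.getD_eq_getElem _ _ hlt1, List.getD_eq_getElem _ _ hlt2]
      exact this
  · show (m:ℝ)/24 ≤ ∑ k ∈ Finset.Icc 1 W.length,
      ((eCount E (W.getD (k-1) (∅,∅)).1 (W.getD (k-1) (∅,∅)).2 : ℕ) : ℝ)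
    have h1 : ∑ k ∈ Finset.Icc 1 W.length,
        ((eCount E (W.getD (k-1) (∅,∅)).1 (W.getD (k-1) (∅,∅)).2 : ℕ) : ℝ) =
        ∑ i ∈ Finset.range W.length,
        ((eCount E (W.getD i (∅,∅)).1 (W.getD i (∅,∅)).2 : ℕ) : ℝ) := by
      rw [sum_Icc_eq_range (fun k => ((eCount E (W.getD (k-1) (∅,∅)).1 (W.getD (k-1) (∅,∅)).2 : ℕ) : ℝ))]
      simp only [Nat.add_sub_cancel]
    rw [h1, sum_range_getD (fun q => (eCount E q.1 q.2 : ℝ)) (∅,∅) W]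
    exact hsum
  · intro k hk1 hk2
    show ((W.getD (k-1) (∅,∅)).1, (W.getD (k-1) (∅,∅)).2) ∈ W
    have hlt : k - 1 < W.length := by omega
    rw [List.getD_eq_getElem _ _ hlt]
    exact List.getElem_mem hlt

lemma small_m_log (m : ℕ) (h2 : 2 ≤ m) (h26 : m ≤ 26) : (m:ℝ) ≤ 6 * Real.logb 2 m := by
  have hc : (2:ℝ) ≤ (m:ℝ) := by exact_mod_cast h2
  rcases le_or_gt m 6 with h | h
  · have h1 : (1:ℝ) ≤ Real.logb 2 m := by
      have := logb_ge_div (p := 1) (q := 1) (x := (m:ℝ)) (by norm_num) (by linarith)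
        (by norm_num; linarith)
      norm_num at this; linarith
    have : (m:ℝ) ≤ 6 := by exact_mod_cast h
    linarith
  rcases le_or_gt m 12 with h' | h'
  · have hc7 : (7:ℝ) ≤ (m:ℝ) := by exact_mod_cast h
    have h1 : (2:ℝ) ≤ Real.logb 2 m := by
      have := logb_ge_div (p := 2) (q := 1) (x := (m:ℝ)) (by norm_num) (by linarith)
        (by norm_num; linarith)
      norm_num at this; linarith
    have : (m:ℝ) ≤ 12 := by exact_mod_cast h'
    linarith
  rcases le_or_gt m 18 with h'' | h''
  · have hc13 : (13:ℝ) ≤ (m:ℝ) := by exact_mod_cast h'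
    have h1 : (3:ℝ) ≤ Real.logb 2 m := by
      have := logb_ge_div (p := 3) (q := 1) (x := (m:ℝ)) (by norm_num) (by linarith)
        (by norm_num; linarith)
      norm_num at this; linarith
    have : (m:ℝ) ≤ 18 := by exact_mod_cast h''
    linarith
  rcases le_or_gt m 24 with h''' | h'''
  · have hc19 : (19:ℝ) ≤ (m:ℝ) := by exact_mod_cast h''
    have h1 : (4:ℝ) ≤ Real.logb 2 m := by
      have := logb_ge_div (p := 4) (q := 1) (x := (m:ℝ)) (by norm_num) (by linarith)
        (by norm_num; linarith)
      norm_num at this; linarith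
    have : (m:ℝ) ≤ 24 := by exact_mod_cast h'''
    linarith
  · have hc25 : (25:ℝ) ≤ (m:ℝ) := by exact_mod_cast h'''
    have h1 : (13:ℝ)/3 ≤ Real.logb 2 m := by
      have := logb_ge_div (p := 13) (q := 3) (x := (m:ℝ)) (by norm_num) (by linarith)
        (by
          have h3 : (25:ℝ)^3 ≤ (m:ℝ)^3 := pow_le_pow_left₀ (by norm_num) hc25 3
          norm_num at h3 ⊢; linarith)
      norm_num at this; linarith
    have : (m:ℝ) ≤ 26 := by exact_mod_cast h26
    linarith

/-- splitting process: there is a parallel collection of subsection pairs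
carrying at least `m/24` chords in total such that either every pair has a high-degree
vertex, or every pair has a chord interlacing many chords of that pair. -/
theorem sectionPair_splitting_process
    (a b m : ℕ) (E : Finset (ℕ × ℕ))
    (ha : 2 ≤ a) (hb : 2 ≤ b)
    (hE : ∀ e ∈ E, e.1 < a ∧ e.2 < b)
    (hcard : E.card = m) (hm : 2 ≤ m) :
    ∃ (t : ℕ) (I J : ℕ → Finset ℕ), 1 ≤ t ∧ IsParallelColl a b t I J ∧
      (m : ℝ) / 24 ≤ ∑ k ∈ Finset.Icc 1 t, (eCount E (I k) (J k) : ℝ) ∧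
      ((∀ k, 1 ≤ k → k ≤ t →
          (∃ i₀ ∈ I k, (eCount E (I k) (J k) : ℝ) / (6 * Real.logb 2 m) ≤
            ((E.filter (fun e => e.1 = i₀ ∧ e.1 ∈ I k ∧ e.2 ∈ J k)).card : ℝ)) ∨
          (∃ j₀ ∈ J k, (eCount E (I k) (J k) : ℝ) / (6 * Real.logb 2 m) ≤
            ((E.filter (fun e => e.2 = j₀ ∧ e.1 ∈ I k ∧ e.2 ∈ J k)).card : ℝ))) ∨
       (∀ k, 1 ≤ k → k ≤ t →
          ∃ f ∈ E.filter (fun e => e.1 ∈ I k ∧ e.2 ∈ J k),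
            (eCount E (I k) (J k) : ℝ) / (6 * Real.logb 2 m) ≤
              ((E.filter (fun e => e.1 ∈ I k ∧ e.2 ∈ J k ∧
                Chord.Interlacing f e)).card : ℝ))) := by
  classical
  have hroot : IsSubsectionPair a b (Finset.range a) (Finset.range b) := by
    refine ⟨⟨0, Finset.mem_range.mpr (by omega)⟩, ⟨0, Finset.mem_range.mpr (by omega)⟩,
      ?_, ?_, ?_, ?_⟩
    · intro x hx z hz y _ hyz
      rw [Finset.mem_range] at hz ⊢; omega
    · intro x hx z hz y _ hyz
      rw [Finset.mem_range] at hz ⊢; omega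
    · intro i hi; exact Finset.mem_range.mp hi
    · intro j hj; exact Finset.mem_range.mp hj
  have hroot_count : eCount E (Finset.range a) (Finset.range b) = m := by
    rw [eCount, Finset.filter_true_of_mem, hcard]
    intro c hc
    simp only [Finset.mem_range]
    exact hE c hc
  have hm0 : (0:ℝ) < (m:ℝ) := by exact_mod_cast (by omega : 0 < m)
  have hL0 : (0:ℝ) < Real.logb 2 m :=
    Real.logb_pos (by norm_num) (by exact_mod_cast Nat.one_lt_cast.mpr (by omega))
  by_cases hbig : 27 ≤ m
  · -- large m : run the splitting process
    have hmL : (19:ℝ)/4 ≤ Real.logb 2 m := by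
      have hc27 : (27:ℝ) ≤ (m:ℝ) := by exact_mod_cast hbig
      have := logb_ge_div (p := 19) (q := 4) (x := (m:ℝ)) (by norm_num) (by linarith)
        (by
          have h4 : (27:ℝ)^4 ≤ (m:ℝ)^4 := pow_le_pow_left₀ (by norm_num) hc27 4
          norm_num at h4 ⊢; linarith)
      norm_num at this; linarith
    obtain ⟨L, hpw, hmem, hsum⟩ := rec_lemma a b m E hmL (le_of_eq hcard) m
      (Finset.range a) (Finset.range b) (le_of_eq hroot_count) hroot
    rw [hroot_count] at hsum
    have hsum6 : (m:ℝ)/6 ≤ (L.map (fun q => (eCount E q.1 q.2 : ℝ))).sum := by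
      have heq2 : (m:ℝ) * (1 - 5 * Real.logb 2 m / (6 * Real.logb 2 m)) = (m:ℝ)/6 := by
        field_simp; ring
      rw [heq2] at hsum; exact hsum
    set q : (Finset ℕ × Finset ℕ) → Bool := fun p => decide (Opt1 m E p.1 p.2) with hqdef
    have hsplit := filter_sum_split (fun q => (eCount E q.1 q.2 : ℝ)) q L
    set S1 := ((L.filter q).map (fun q => (eCount E q.1 q.2 : ℝ))).sum with hS1
    set S2 := ((L.filter (fun a => !(q a))).map (fun q => (eCount E q.1 q.2 : ℝ))).sum with hS2
    by_cases hw : (m:ℝ)/24 ≤ S1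
    · -- use the Opt1 class
      obtain ⟨t, If, Jf, ht, hpar, hsumW, hmemW⟩ :=
        assemble a b m E (L.filter q) (hpw.sublist (List.filter_sublist (l := L)))
          (fun r hr => (hmem r (List.mem_of_mem_filter hr)).1) hw hm0
      refine ⟨t, If, Jf, ht, hpar, hsumW, Or.inl ?_⟩
      intro k hk1 hk2
      have hmemk := hmemW k hk1 hk2
      have h2 := (List.mem_filter.mp hmemk).2
      rw [hqdef, decide_eq_true_eq] at h2
      exact h2
    · -- use the Opt2 class
      have hw2 : (m:ℝ)/24 ≤ S2 := by
        by_contra hc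
        push_neg at hc hw
        have : (m:ℝ)/6 ≤ S1 + S2 := by rw [hS1, hS2, hsplit]; exact hsum6
        linarith
      obtain ⟨t, If, Jf, ht, hpar, hsumW, hmemW⟩ :=
        assemble a b m E (L.filter (fun a => !(q a))) (hpw.sublist (List.filter_sublist (l := L)))
          (fun r hr => (hmem r (List.mem_of_mem_filter hr)).1) hw2 hm0
      refine ⟨t, If, Jf, ht, hpar, hsumW, Or.inr ?_⟩
      intro k hk1 hk2
      have hmemk := hmemW k hk1 hk2
      have h2 := (List.mem_filter.mp hmemk).2
      rw [hqdef] at h2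
      simp only [Bool.not_eq_true', decide_eq_false_iff_not] at h2
      have hopt := (hmem _ (List.mem_of_mem_filter hmemk)).2.2.2
      rcases hopt with h | h
      · exact absurd h h2
      · exact h
  · -- small m : one big pair works
    push_neg at hbig
    have hsmall : (m:ℝ) ≤ 6 * Real.logb 2 m := small_m_log m hm (by omega)
    have hopt1 : Opt1 m E (Finset.range a) (Finset.range b) :=
      opt1_of_small m E _ _ hroot.1 hL0 (by rw [hroot_count]; exact hsmall)
    refine ⟨1, fun _ => Finset.range a, fun _ => Finset.range b, le_refl 1, ?_, ?_, Or.inl ?_⟩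
    · exact ⟨fun k _ _ => hroot, fun k hk1 hk2 => by omega⟩
    · simp only [Finset.Icc_self, Finset.sum_singleton, hroot_count]
      linarith
    · intro k _ _
      exact hopt1
end

section
/- There is an absolute constant c > 0 such that the following holds. Let k ≥ 1, let a, b ≥ 2, and let E be a set of chords with |E| = m ≥ 1 such that every index i < a occurs as the first coordinate of at most m/(10k²) chords of E and every index j < b occurs as the second coordinate of at most m/(10k²) chords of E. Then there is a collection of k subsection pairs (I_1,J_1),…,(I_k,J_k), which is either parallel or interlacing, such that e(I_l,J_l) ≥ c·m/k⁴ for every 1 ≤ l ≤ k. -/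
open Finset

/-- Greedy partition of the chords along coordinate `f`. -/
lemma greedy_partition (E : Finset (ℕ × ℕ)) (f : ℕ × ℕ → ℕ) (a D : ℕ) (hD : 1 ≤ D)
    (hfa : ∀ e ∈ E, f e < a)
    (hdeg : ∀ i, (E.filter (fun e => f e = i)).card ≤ D) :
    ∃ x : ℕ → ℕ, x 0 = 0 ∧
      (∀ s t, s ≤ t → t ≤ E.card / (2 * D) → x s ≤ x t) ∧
      (∀ t, t ≤ E.card / (2 * D) → x t ≤ a) ∧
      (∀ t, t < E.card / (2 * D) →
        (E.filter (fun e => x t ≤ f e ∧ f e < x (t + 1))).card ≤ 3 * D - 1) ∧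
      (E.filter (fun e => x (E.card / (2 * D)) ≤ f e)).card ≤ 2 * D - 1 := by
  classical
  set m := E.card with hm
  set N := m / (2 * D) with hN
  set cnt : ℕ → ℕ := fun u => (E.filter (fun e => f e < u)).card with hcnt
  have cnt_mono : ∀ u v, u ≤ v → cnt u ≤ cnt v := by
    intro u v huv
    apply card_le_card
    intro e he
    simp only [hcnt, mem_filter] at he ⊢
    exact ⟨he.1, lt_of_lt_of_le he.2 huv⟩
  have cnt_zero : cnt 0 = 0 := by simp [hcnt]
  have cnt_le : ∀ u, cnt u ≤ m := fun u => card_le_card (filter_subset _ _)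
  have cnt_top : cnt a = m := by
    have : E.filter (fun e => f e < a) = E := filter_true_of_mem hfa
    simp [hcnt, this, hm]
  have cnt_succ : ∀ u, cnt (u + 1) ≤ cnt u + D := by
    intro u
    have hsub : E.filter (fun e => f e < u + 1) ⊆
        E.filter (fun e => f e < u) ∪ E.filter (fun e => f e = u) := by
      intro e he
      simp only [mem_filter, mem_union] at he ⊢
      rcases he with ⟨he, hlt⟩
      rcases Nat.lt_succ_iff_lt_or_eq.mp hlt with h | h
      · exact Or.inl ⟨he, h⟩
      · exact Or.inr ⟨he, h⟩
    calc cnt (u + 1) ≤ (E.filter (fun e => f e < u) ∪ E.filter (fun e => f e = u)).card :=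
          card_le_card hsub
      _ ≤ cnt u + (E.filter (fun e => f e = u)).card := card_union_le _ _
      _ ≤ cnt u + D := by have := hdeg u; omega
  -- the cut points
  set x : ℕ → ℕ := fun t => sInf {u | 2 * D * t ≤ cnt u} with hx
  have hmem : ∀ t, t ≤ N → a ∈ {u | 2 * D * t ≤ cnt u} := by
    intro t ht
    have h1 : 2 * D * t ≤ 2 * D * N := Nat.mul_le_mul_left _ ht
    have h2 : 2 * D * N ≤ m := by
      rw [hN, mul_comm]; exact Nat.div_mul_le_self m (2 * D)
    simp only [Set.mem_setOf_eq, cnt_top]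
    exact le_trans h1 h2
  have hxle : ∀ t, t ≤ N → x t ≤ a := fun t ht => Nat.sInf_le (hmem t ht)
  have hxcnt : ∀ t, t ≤ N → 2 * D * t ≤ cnt (x t) :=
    fun t ht => Nat.sInf_mem ⟨a, hmem t ht⟩
  have hxcnt' : ∀ t, cnt (x t) ≤ 2 * D * t + D - 1 := by
    intro t
    rcases Nat.eq_zero_or_pos (x t) with h0 | hpos
    · rw [h0, cnt_zero]; exact Nat.zero_le _
    · obtain ⟨s, hs⟩ : ∃ s, x t = s + 1 := ⟨x t - 1, by omega⟩
      have hslt : s < x t := by omega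
      have hsnot : s ∉ {u | 2 * D * t ≤ cnt u} := Nat.notMem_of_lt_sInf hslt
      simp only [Set.mem_setOf_eq, not_le] at hsnot
      have h2 := cnt_succ s
      rw [hs]
      omega
  have hxmono : ∀ s t, s ≤ t → t ≤ N → x s ≤ x t := by
    intro s t hst ht
    apply Nat.sInf_le
    have h1 := hxcnt t ht
    simp only [Set.mem_setOf_eq]
    calc 2 * D * s ≤ 2 * D * t := Nat.mul_le_mul_left _ hst
      _ ≤ cnt (x t) := h1
  refine ⟨x, ?_, hxmono, hxle, ?_, ?_⟩
  · have h0 : (0 : ℕ) ∈ {u | 2 * D * 0 ≤ cnt u} := by simp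
    exact Nat.eq_zero_of_le_zero (Nat.sInf_le h0)
  · intro t ht
    have hsub : E.filter (fun e => x t ≤ f e ∧ f e < x (t + 1)) =
        E.filter (fun e => f e < x (t + 1)) \ E.filter (fun e => f e < x t) := by
      ext e
      simp only [mem_filter, mem_sdiff]
      constructor
      · rintro ⟨he, h1, h2⟩; exact ⟨⟨he, h2⟩, fun h => absurd h.2 (by omega)⟩
      · rintro ⟨⟨he, h2⟩, h1⟩
        refine ⟨he, ?_, h2⟩
        by_contra hc
        exact h1 ⟨he, by omega⟩
    have hss : E.filter (fun e => f e < x t) ⊆ E.filter (fun e => f e < x (t + 1)) := by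
      intro e he
      simp only [mem_filter] at he ⊢
      exact ⟨he.1, lt_of_lt_of_le he.2 (hxmono t (t + 1) (Nat.le_succ t) ht)⟩
    rw [hsub, card_sdiff_of_subset hss]
    have h1 := hxcnt' (t + 1)
    have h2 : 2 * D * t ≤ cnt (x t) := hxcnt t (Nat.le_of_lt ht)
    have e1 : 2 * D * (t + 1) = 2 * D * t + 2 * D := by ring
    rw [e1] at h1
    change cnt (x (t + 1)) - cnt (x t) ≤ 3 * D - 1
    omega
  · have hsub : E.filter (fun e => x N ≤ f e) = E \ E.filter (fun e => f e < x N) := by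
      ext e
      simp only [mem_filter, mem_sdiff]
      constructor
      · rintro ⟨he, h1⟩; exact ⟨he, fun h => absurd h.2 (by omega)⟩
      · rintro ⟨he, h1⟩
        refine ⟨he, ?_⟩
        by_contra hc
        exact h1 ⟨he, by omega⟩
    rw [hsub, card_sdiff_of_subset (filter_subset _ _)]
    have h1 := hxcnt N le_rfl
    have h2 : m - 2 * D * N ≤ 2 * D - 1 := by
      have h3 := Nat.div_add_mod m (2 * D)
      have hmod : m % (2 * D) < 2 * D := Nat.mod_lt _ (by omega)
      rw [hN] at *
      omega
    have h3 := cnt_le (x N)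
    change m - cnt (x N) ≤ 2 * D - 1
    omega

def IsChain2 (C : Finset (ℕ × ℕ)) (r₂ : ℕ → ℕ → Prop) (n : ℕ) (ch : ℕ → ℕ × ℕ) : Prop :=
  (∀ i, 1 ≤ i → i ≤ n → ch i ∈ C) ∧
  (∀ i, 1 ≤ i → i < n → (ch i).1 < (ch (i + 1)).1 ∧ r₂ (ch i).2 (ch (i + 1)).2)

def ChainEnd (C : Finset (ℕ × ℕ)) (r₂ : ℕ → ℕ → Prop) (n : ℕ) (c : ℕ × ℕ) : Prop :=
  ∃ ch, IsChain2 C r₂ n ch ∧ ch n = c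

lemma chainEnd_one {C : Finset (ℕ × ℕ)} {r₂ : ℕ → ℕ → Prop} {c : ℕ × ℕ} (hc : c ∈ C) :
    ChainEnd C r₂ 1 c := by
  refine ⟨fun _ => c, ⟨fun i _ _ => hc, fun i h1 h2 => absurd h2 (by omega)⟩, rfl⟩

lemma chainEnd_extend {C : Finset (ℕ × ℕ)} {r₂ : ℕ → ℕ → Prop} {n : ℕ} {c c' : ℕ × ℕ}
    (h : ChainEnd C r₂ n c) (hc' : c' ∈ C) (h1 : c.1 < c'.1) (h2 : r₂ c.2 c'.2) :
    ChainEnd C r₂ (n + 1) c' := by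
  obtain ⟨ch, ⟨hmem, hstep⟩, hend⟩ := h
  refine ⟨fun i => if i ≤ n then ch i else c', ⟨?_, ?_⟩, ?_⟩
  · intro i hi1 hi2
    by_cases hin : i ≤ n
    · simpa [hin] using hmem i hi1 hin
    · simp [hin, hc']
  · intro i hi1 hi2
    by_cases hin : i + 1 ≤ n
    · have : i ≤ n := by omega
      simpa [hin, this] using hstep i hi1 (by omega)
    · have hi : i = n := by omega
      subst hi
      simp only [le_refl, if_true, hin, if_false, hend]
      exact ⟨h1, h2⟩
  · simp

lemma share_line (S : Finset (ℕ × ℕ)) (c₀ : ℕ × ℕ) (hc₀ : c₀ ∈ S)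
    (h : ∀ c ∈ S, ∀ c' ∈ S, c.1 = c'.1 ∨ c.2 = c'.2) :
    (∀ c ∈ S, c.1 = c₀.1) ∨ (∀ c ∈ S, c.2 = c₀.2) := by
  by_contra hcon
  push_neg at hcon
  obtain ⟨⟨b, hb, hb1⟩, d, hd, hd2⟩ := hcon
  have h1 : b.2 = c₀.2 := (h b hb c₀ hc₀).resolve_left hb1
  have h2 : d.1 = c₀.1 := (h d hd c₀ hc₀).resolve_right hd2
  rcases h b hb d hd with h3 | h3
  · exact hb1 (h3.trans h2)
  · exact hd2 (h3.symm.trans h1)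

lemma chain_or_classes (k : ℕ) (C : Finset (ℕ × ℕ))
    (hno1 : ¬ ∃ ch, IsChain2 C (· < ·) k ch)
    (hno2 : ¬ ∃ ch, IsChain2 C (· > ·) k ch) :
    ∃ φ : ℕ × ℕ → ℕ × ℕ,
      (∀ c ∈ C, φ c ∈ Finset.Icc 1 (k - 1) ×ˢ Finset.Icc 1 (k - 1)) ∧
      (∀ c ∈ C, ∀ c' ∈ C, φ c = φ c' → c.1 = c'.1 ∨ c.2 = c'.2) := by
  classical
  rcases Nat.lt_or_ge k 2 with hk2 | hk2
  · -- k ≤ 1 : C must be empty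
    refine ⟨id, fun c hc => ?_, fun c hc c' hc' _ => ?_⟩ <;>
    · exfalso
      rcases Nat.lt_or_ge k 1 with hk1 | hk1
      · interval_cases k
        · exact hno1 ⟨fun _ => c, fun i h1 h2 => absurd h2 (by omega),
            fun i h1 h2 => absurd h2 (by omega)⟩
      · have hk1' : k = 1 := by omega
        subst hk1'
        exact hno1 ⟨fun _ => c, fun i _ _ => hc, fun i h1 h2 => absurd h2 (by omega)⟩
  · set f : ℕ × ℕ → ℕ := fun c => Nat.findGreatest (fun n => ChainEnd C (· < ·) n c) (k - 1)
      with hf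
    set g : ℕ × ℕ → ℕ := fun c => Nat.findGreatest (fun n => ChainEnd C (· > ·) n c) (k - 1)
      with hg
    have hk1 : 1 ≤ k - 1 := by omega
    have hfmem : ∀ c ∈ C, 1 ≤ f c ∧ f c ≤ k - 1 := fun c hc =>
      ⟨Nat.le_findGreatest hk1 (chainEnd_one hc), Nat.findGreatest_le _⟩
    have hgmem : ∀ c ∈ C, 1 ≤ g c ∧ g c ≤ k - 1 := fun c hc =>
      ⟨Nat.le_findGreatest hk1 (chainEnd_one hc), Nat.findGreatest_le _⟩
    have hfspec : ∀ c ∈ C, ChainEnd C (· < ·) (f c) c := fun c hc =>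
      Nat.findGreatest_spec (P := fun n => ChainEnd C (· < ·) n c) hk1 (chainEnd_one hc)
    have hgspec : ∀ c ∈ C, ChainEnd C (· > ·) (g c) c := fun c hc =>
      Nat.findGreatest_spec (P := fun n => ChainEnd C (· > ·) n c) hk1 (chainEnd_one hc)
    -- key monotonicity
    have key1 : ∀ c ∈ C, ∀ c' ∈ C, c.1 < c'.1 → c.2 < c'.2 → f c < f c' := by
      intro c hc c' hc' h1 h2
      have hext : ChainEnd C (· < ·) (f c + 1) c' := chainEnd_extend (hfspec c hc) hc' h1 h2
      rcases Nat.lt_or_ge (f c) (k - 1) with hlt | hge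
      · have h5 : f c + 1 ≤ f c' :=
          Nat.le_findGreatest (P := fun n => ChainEnd C (· < ·) n c') (by omega) hext
        omega
      · exfalso
        have hfc : f c = k - 1 := le_antisymm (hfmem c hc).2 hge
        rw [hfc] at hext
        have hkk : k - 1 + 1 = k := by omega
        rw [hkk] at hext
        obtain ⟨ch, hch, _⟩ := hext
        exact hno1 ⟨ch, hch⟩
    have key2 : ∀ c ∈ C, ∀ c' ∈ C, c.1 < c'.1 → c'.2 < c.2 → g c < g c' := by
      intro c hc c' hc' h1 h2
      have hext : ChainEnd C (· > ·) (g c + 1) c' := chainEnd_extend (hgspec c hc) hc' h1 h2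
      rcases Nat.lt_or_ge (g c) (k - 1) with hlt | hge
      · have h5 : g c + 1 ≤ g c' :=
          Nat.le_findGreatest (P := fun n => ChainEnd C (· > ·) n c') (by omega) hext
        omega
      · exfalso
        have hgc : g c = k - 1 := le_antisymm (hgmem c hc).2 hge
        rw [hgc] at hext
        have hkk : k - 1 + 1 = k := by omega
        rw [hkk] at hext
        obtain ⟨ch, hch, _⟩ := hext
        exact hno2 ⟨ch, hch⟩
    refine ⟨fun c => (f c, g c), fun c hc => ?_, fun c hc c' hc' heq => ?_⟩
    · simp only [mem_product, mem_Icc]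
      exact ⟨⟨(hfmem c hc).1, (hfmem c hc).2⟩, (hgmem c hc).1, (hgmem c hc).2⟩
    · have hfeq : f c = f c' := congrArg Prod.fst heq
      have hgeq : g c = g c' := congrArg Prod.snd heq
      rcases lt_trichotomy c.1 c'.1 with h1 | h1 | h1
      · rcases lt_trichotomy c.2 c'.2 with h2 | h2 | h2
        · exact absurd hfeq (Nat.ne_of_lt (key1 c hc c' hc' h1 h2))
        · exact Or.inr h2
        · exact absurd hgeq (Nat.ne_of_lt (key2 c hc c' hc' h1 h2))
      · exact Or.inl h1
      · rcases lt_trichotomy c.2 c'.2 with h2 | h2 | h2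
        · exact absurd hgeq.symm (Nat.ne_of_lt (key2 c' hc' c hc h1 h2))
        · exact Or.inr h2
        · exact absurd hfeq.symm (Nat.ne_of_lt (key1 c' hc' c hc h1 h2))

/-- initial split: if no vertex is incident to more than `m/(10k²)` of
the `m` chords, then there is a parallel or interlacing collection of `k` subsection pairs,
each carrying at least `c·m/k⁴` chords. -/
theorem sectionPair_initial_split :
    ∃ c : ℝ, 0 < c ∧
      ∀ (k a b m : ℕ) (E : Finset (ℕ × ℕ))
        (hk : 1 ≤ k) (ha : 2 ≤ a) (hb : 2 ≤ b)
        (hE : ∀ e ∈ E, e.1 < a ∧ e.2 < b)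
        (hcard : E.card = m) (hm : 1 ≤ m)
        (hdegX : ∀ i : ℕ, ((E.filter (fun e => e.1 = i)).card : ℝ) ≤ m / (10 * k ^ 2))
        (hdegY : ∀ j : ℕ, ((E.filter (fun e => e.2 = j)).card : ℝ) ≤ m / (10 * k ^ 2)),
        ∃ I J : ℕ → Finset ℕ,
          (IsParallelColl a b k I J ∨ IsInterlacingColl a b k I J) ∧
          ∀ l, 1 ≤ l → l ≤ k → c * m / k ^ 4 ≤ (eCount E (I l) (J l) : ℝ) := by
  classical
  refine ⟨1 / 400, by norm_num, ?_⟩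
  intro k a b m E hk ha hb hE hcard hm hdegX hdegY
  have hkR : (1 : ℝ) ≤ (k : ℝ) := by exact_mod_cast hk
  have hkpos : (0 : ℝ) < 10 * (k : ℝ) ^ 2 := by positivity
  have hk2pos : 0 < 10 * k ^ 2 := by positivity
  -- m ≥ 10 k²
  have hm10 : 10 * k ^ 2 ≤ m := by
    obtain ⟨e₀, he₀⟩ := card_pos.mp (show 0 < E.card by omega)
    have h1 : 1 ≤ (E.filter (fun e => e.1 = e₀.1)).card :=
      card_pos.mpr ⟨e₀, mem_filter.mpr ⟨he₀, rfl⟩⟩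
    have h3 : (1 : ℝ) ≤ (m : ℝ) / (10 * (k : ℝ) ^ 2) :=
      le_trans (by exact_mod_cast h1) (hdegX e₀.1)
    have h4 : (10 * (k : ℝ) ^ 2) ≤ (m : ℝ) := by
      rw [le_div_iff₀ hkpos] at h3; linarith
    exact_mod_cast h4
  obtain ⟨D, hDdef⟩ : ∃ D, D = m / (10 * k ^ 2) := ⟨_, rfl⟩
  have hD1 : 1 ≤ D := by rw [hDdef]; exact (Nat.one_le_div_iff hk2pos).mpr hm10
  have hDle : 10 * k ^ 2 * D ≤ m := by
    rw [hDdef, mul_comm]; exact Nat.div_mul_le_self _ _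
  have hm20 : m ≤ 20 * k ^ 2 * D := by
    have h1 := Nat.div_add_mod m (10 * k ^ 2)
    have h2 : m % (10 * k ^ 2) < 10 * k ^ 2 := Nat.mod_lt _ hk2pos
    have h3 : 10 * k ^ 2 ≤ 10 * k ^ 2 * D := Nat.le_mul_of_pos_right _ (by omega)
    have h4 : 20 * k ^ 2 * D = 10 * k ^ 2 * D + 10 * k ^ 2 * D := by ring
    rw [← hDdef] at h1
    omega
  -- nat degree bounds
  have hdegX' : ∀ i, (E.filter (fun e => e.1 = i)).card ≤ D := by
    intro i
    rw [hDdef, Nat.le_div_iff_mul_le hk2pos]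
    have h2 : ((E.filter (fun e => e.1 = i)).card : ℝ) * (10 * (k : ℝ) ^ 2) ≤ m :=
      calc ((E.filter (fun e => e.1 = i)).card : ℝ) * (10 * (k : ℝ) ^ 2)
          ≤ ((m : ℝ) / (10 * (k : ℝ) ^ 2)) * (10 * (k : ℝ) ^ 2) :=
            mul_le_mul_of_nonneg_right (hdegX i) (le_of_lt hkpos)
        _ = m := div_mul_cancel₀ _ (ne_of_gt hkpos)
    exact_mod_cast h2
  have hdegY' : ∀ j, (E.filter (fun e => e.2 = j)).card ≤ D := by
    intro j
    rw [hDdef, Nat.le_div_iff_mul_le hk2pos]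
    have h2 : ((E.filter (fun e => e.2 = j)).card : ℝ) * (10 * (k : ℝ) ^ 2) ≤ m :=
      calc ((E.filter (fun e => e.2 = j)).card : ℝ) * (10 * (k : ℝ) ^ 2)
          ≤ ((m : ℝ) / (10 * (k : ℝ) ^ 2)) * (10 * (k : ℝ) ^ 2) :=
            mul_le_mul_of_nonneg_right (hdegY j) (le_of_lt hkpos)
        _ = m := div_mul_cancel₀ _ (ne_of_gt hkpos)
    exact_mod_cast h2
  -- the two greedy partitions
  obtain ⟨x, hx0, hxmono, hxle, hxrow, hxout⟩ :=
    greedy_partition E Prod.fst a D hD1 (fun e he => (hE e he).1) hdegX'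
  obtain ⟨y, hy0, hymono, hyle, hyrow, hyout⟩ :=
    greedy_partition E Prod.snd b D hD1 (fun e he => (hE e he).2) hdegY'
  obtain ⟨N, hNdef⟩ : ∃ N, N = m / (2 * D) := ⟨_, rfl⟩
  rw [hcard, ← hNdef] at hxmono hxle hxrow hxout hymono hyle hyrow hyout
  -- the cell count matrix, heaviness threshold and heavy cells
  set M : ℕ → ℕ → ℕ := fun p q =>
    (E.filter (fun e => (x p ≤ e.1 ∧ e.1 < x (p + 1)) ∧ (y q ≤ e.2 ∧ e.2 < y (q + 1)))).card
    with hMdef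
  obtain ⟨H, hHdef⟩ : ∃ H, H = D * D / m + 1 := ⟨_, rfl⟩
  set C := (range N ×ˢ range N).filter (fun c => H ≤ M c.1 c.2) with hCdef
  have hCmem : ∀ c ∈ C, c.1 < N ∧ c.2 < N ∧ H ≤ M c.1 c.2 := by
    intro c hc
    rw [hCdef, mem_filter, mem_product, mem_range, mem_range] at hc
    exact ⟨hc.1.1, hc.1.2, hc.2⟩
  -- real-number facts
  have hH1 : (1 / 400 : ℝ) * m / (k : ℝ) ^ 4 ≤ H := by
    have hDD : D * D < m * H := by
      have h1 := Nat.div_add_mod (D * D) m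
      have h2 : D * D % m < m := Nat.mod_lt _ (by omega)
      rw [hHdef]
      have h4 : m * (D * D / m + 1) = m * (D * D / m) + m := by ring
      omega
    have hDDR : (D : ℝ) * D < (m : ℝ) * H := by exact_mod_cast hDD
    have hm20R : (m : ℝ) ≤ 20 * (k : ℝ) ^ 2 * D := by exact_mod_cast hm20
    have hmR : (1 : ℝ) ≤ m := by exact_mod_cast hm
    have hDR : (1 : ℝ) ≤ D := by exact_mod_cast hD1
    rw [div_le_iff₀ (by positivity)]
    nlinarith [mul_le_mul hm20R hm20R (by positivity) (by positivity),
      mul_pos (show (0:ℝ) < m by linarith) (show (0:ℝ) < (H:ℝ) by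
        have : 1 ≤ H := by rw [hHdef]; exact Nat.le_add_left 1 _
        exact_mod_cast lt_of_lt_of_le zero_lt_one (by exact_mod_cast this))]
  -- interval cells of the grid
  have cellfact : ∀ (z : ℕ → ℕ), z 0 = 0 → ∀ w, w < z N →
      sInf {t | w < z (t + 1)} < N ∧ z (sInf {t | w < z (t + 1)}) ≤ w ∧
        w < z (sInf {t | w < z (t + 1)} + 1) := by
    intro z hz0 w hw
    have hN0 : 0 < N := by
      rcases Nat.eq_zero_or_pos N with h | h
      · rw [h, hz0] at hw; omega
      · exact h
    have hmemN : (N - 1) ∈ {t | w < z (t + 1)} := by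
      simp only [Set.mem_setOf_eq]
      have hNN : N - 1 + 1 = N := by omega
      rw [hNN]; exact hw
    have h1 : sInf {t | w < z (t + 1)} ≤ N - 1 := Nat.sInf_le hmemN
    have h2 : w < z (sInf {t | w < z (t + 1)} + 1) := Nat.sInf_mem ⟨N - 1, hmemN⟩
    refine ⟨by omega, ?_, h2⟩
    rcases Nat.eq_zero_or_pos (sInf {t | w < z (t + 1)}) with h0 | hpos
    · rw [h0, hz0]; omega
    · obtain ⟨s, hs⟩ : ∃ s, sInf {t | w < z (t + 1)} = s + 1 :=
        ⟨sInf {t | w < z (t + 1)} - 1, by omega⟩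
      have hslt : s < sInf {t | w < z (t + 1)} := by omega
      have hsnot := Nat.notMem_of_lt_sInf hslt
      simp only [Set.mem_setOf_eq, not_lt] at hsnot
      rw [hs]; exact hsnot
  set cp : ℕ × ℕ → ℕ := fun e => sInf {t | e.1 < x (t + 1)} with hcpdef
  set cq : ℕ × ℕ → ℕ := fun e => sInf {t | e.2 < y (t + 1)} with hcqdef
  have hcp : ∀ e : ℕ × ℕ, e.1 < x N → cp e < N ∧ x (cp e) ≤ e.1 ∧ e.1 < x (cp e + 1) :=
    fun e he => cellfact x hx0 e.1 he
  have hcq : ∀ e : ℕ × ℕ, e.2 < y N → cq e < N ∧ y (cq e) ≤ e.2 ∧ e.2 < y (cq e + 1) :=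
    fun e he => cellfact y hy0 e.2 he
  -- eCount on the grid cells
  have hMe : ∀ p q, eCount E (Ico (x p) (x (p + 1))) (Ico (y q) (y (q + 1))) = M p q := by
    intro p q
    unfold eCount
    rw [hMdef]
    congr 1
    apply filter_congr
    intro e _
    simp [mem_Ico]
  -- main dichotomy
  by_cases hgood : (∃ ch, IsChain2 C (· < ·) k ch) ∨ (∃ ch, IsChain2 C (· > ·) k ch)
  · -- GOOD CASE: build the collection
    have build : ∀ ch : ℕ → ℕ × ℕ, (∀ i, 1 ≤ i → i ≤ k → ch i ∈ C) →
        (∀ i, 1 ≤ i → i < k → (ch i).1 < (ch (i + 1)).1) →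
        (∀ l, 1 ≤ l → l ≤ k →
          IsSubsectionPair a b (Ico (x ((ch l).1)) (x ((ch l).1 + 1)))
            (Ico (y ((ch l).2)) (y ((ch l).2 + 1)))) ∧
        (∀ l, 1 ≤ l → l < k →
          FinsetAbove (Ico (x ((ch l).1)) (x ((ch l).1 + 1)))
            (Ico (x ((ch (l + 1)).1)) (x ((ch (l + 1)).1 + 1)))) ∧
        (∀ l, 1 ≤ l → l ≤ k →
          (1 / 400 : ℝ) * m / (k : ℝ) ^ 4 ≤
            (eCount E (Ico (x ((ch l).1)) (x ((ch l).1 + 1)))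
              (Ico (y ((ch l).2)) (y ((ch l).2 + 1))) : ℝ)) := by
      intro ch hchmem hchstep
      have hcell : ∀ l, 1 ≤ l → l ≤ k →
          (ch l).1 < N ∧ (ch l).2 < N ∧ H ≤ M (ch l).1 (ch l).2 :=
        fun l h1 h2 => hCmem _ (hchmem l h1 h2)
      have hwit : ∀ l, 1 ≤ l → l ≤ k → ∃ e ∈ E,
          (x ((ch l).1) ≤ e.1 ∧ e.1 < x ((ch l).1 + 1)) ∧
          (y ((ch l).2) ≤ e.2 ∧ e.2 < y ((ch l).2 + 1)) := by
        intro l h1 h2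
        have hpos : 0 < M (ch l).1 (ch l).2 := by
          have hHM := (hcell l h1 h2).2.2
          have hH1' : 1 ≤ H := by rw [hHdef]; exact Nat.le_add_left 1 _
          exact lt_of_lt_of_le (lt_of_lt_of_le zero_lt_one hH1') hHM
        rw [hMdef] at hpos
        obtain ⟨e, he⟩ := card_pos.mp hpos
        rw [mem_filter] at he
        exact ⟨e, he.1, he.2⟩
      refine ⟨?_, ?_, ?_⟩
      · intro l h1 h2
        obtain ⟨e, heE, ⟨hx1, hx2⟩, hy1, hy2⟩ := hwit l h1 h2
        have hpN := (hcell l h1 h2).1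
        have hqN := (hcell l h1 h2).2.1
        refine ⟨⟨e.1, mem_Ico.mpr ⟨hx1, hx2⟩⟩, ⟨e.2, mem_Ico.mpr ⟨hy1, hy2⟩⟩, ?_, ?_, ?_, ?_⟩
        · intro u hu v hv w hw1 hw2
          rw [mem_Ico] at *
          omega
        · intro u hu v hv w hw1 hw2
          rw [mem_Ico] at *
          omega
        · intro i hi
          rw [mem_Ico] at hi
          exact lt_of_lt_of_le hi.2 (hxle _ (by omega))
        · intro j hj
          rw [mem_Ico] at hj
          exact lt_of_lt_of_le hj.2 (hyle _ (by omega))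
      · intro l h1 h2
        intro u hu v hv
        rw [mem_Ico] at hu hv
        have hstep := hchstep l h1 h2
        have hpN' := (hcell (l + 1) (by omega) (by omega)).1
        have hmono := hxmono ((ch l).1 + 1) ((ch (l + 1)).1) (by omega) (by omega)
        omega
      · intro l h1 h2
        rw [hMe]
        have hHM := (hcell l h1 h2).2.2
        have : (H : ℝ) ≤ (M (ch l).1 (ch l).2 : ℝ) := by exact_mod_cast hHM
        linarith [hH1]
    rcases hgood with ⟨ch, hmem, hstep⟩ | ⟨ch, hmem, hstep⟩
    · obtain ⟨hsub, habove, hcount⟩ := build ch hmem (fun i h1 h2 => (hstep i h1 h2).1)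
      refine ⟨fun l => Ico (x ((ch l).1)) (x ((ch l).1 + 1)),
        fun l => Ico (y ((ch l).2)) (y ((ch l).2 + 1)), Or.inl ⟨hsub, ?_⟩, hcount⟩
      intro l h1 h2
      refine ⟨habove l h1 h2, ?_⟩
      intro u hu v hv
      rw [mem_Ico] at hu hv
      have hst := (hstep l h1 h2).2
      have hqN' := (hCmem _ (hmem (l + 1) (by omega) (by omega))).2.1
      have hmono := hymono ((ch l).2 + 1) ((ch (l + 1)).2) (by simp at hst; omega) (by omega)
      omega
    · obtain ⟨hsub, habove, hcount⟩ := build ch hmem (fun i h1 h2 => (hstep i h1 h2).1)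
      refine ⟨fun l => Ico (x ((ch l).1)) (x ((ch l).1 + 1)),
        fun l => Ico (y ((ch l).2)) (y ((ch l).2 + 1)), Or.inr ⟨hsub, ?_⟩, hcount⟩
      intro l h1 h2
      refine ⟨habove l h1 h2, ?_⟩
      intro u hu v hv
      rw [mem_Ico] at hu hv
      have hst := (hstep l h1 h2).2
      have hqN' := (hCmem _ (hmem l (by omega) (by omega))).2.1
      have hmono := hymono ((ch (l + 1)).2 + 1) ((ch l).2) (by simp at hst; omega) (by omega)
      omega
  · -- BAD CASE: derive a contradiction
    exfalso
    rw [not_or] at hgood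
    obtain ⟨φ, hφmem, hφshare⟩ := chain_or_classes k C hgood.1 hgood.2
    -- split E
    set grid : ℕ × ℕ → Prop := fun e => e.1 < x N ∧ e.2 < y N with hgriddef
    have split1 : (E.filter grid).card + (E.filter (fun e => ¬ grid e)).card = m := by
      rw [card_filter_add_card_filter_not, hcard]
    have houtb : (E.filter (fun e => ¬ grid e)).card ≤ (2 * D - 1) + (2 * D - 1) := by
      have hsub : E.filter (fun e => ¬ grid e) ⊆
          E.filter (fun e => x N ≤ e.1) ∪ E.filter (fun e => y N ≤ e.2) := by
        intro e he
        rw [mem_filter] at he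
        rw [mem_union, mem_filter, mem_filter]
        rcases Nat.lt_or_ge e.1 (x N) with h | h
        · refine Or.inr ⟨he.1, ?_⟩
          have h2 := he.2
          rw [hgriddef] at h2
          omega
        · exact Or.inl ⟨he.1, h⟩
      calc (E.filter (fun e => ¬ grid e)).card
          ≤ (E.filter (fun e => x N ≤ e.1) ∪ E.filter (fun e => y N ≤ e.2)).card :=
            card_le_card hsub
        _ ≤ (E.filter (fun e => x N ≤ e.1)).card + (E.filter (fun e => y N ≤ e.2)).card :=
            card_union_le _ _
        _ ≤ (2 * D - 1) + (2 * D - 1) := Nat.add_le_add hxout hyout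
    set G := E.filter grid with hGdef
    have hGmem : ∀ e ∈ G, e ∈ E ∧ e.1 < x N ∧ e.2 < y N := by
      intro e he
      rw [hGdef, mem_filter, hgriddef] at he
      exact ⟨he.1, he.2⟩
    have split2 : (G.filter (fun e => H ≤ M (cp e) (cq e))).card +
        (G.filter (fun e => ¬ H ≤ M (cp e) (cq e))).card = G.card :=
      card_filter_add_card_filter_not _
    -- light chords
    have hlight : (G.filter (fun e => ¬ H ≤ M (cp e) (cq e))).card ≤ N * N * (H - 1) := by
      set S := G.filter (fun e => ¬ H ≤ M (cp e) (cq e)) with hSdef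
      have hmap : ∀ e ∈ S, (cp e, cq e) ∈ range N ×ˢ range N := by
        intro e he
        rw [hSdef, mem_filter] at he
        obtain ⟨heE, h1, h2⟩ := hGmem e he.1
        rw [mem_product, mem_range, mem_range]
        exact ⟨(hcp e h1).1, (hcq e h2).1⟩
      rw [card_eq_sum_card_fiberwise hmap]
      calc ∑ pq ∈ range N ×ˢ range N, (S.filter (fun e => (cp e, cq e) = pq)).card
          ≤ (range N ×ˢ range N).card * (H - 1) := by
            apply sum_le_card_nsmul
            intro pq hpq
            rcases (S.filter (fun e => (cp e, cq e) = pq)).eq_empty_or_nonempty with h0 | hne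
            · rw [h0]; simp
            · obtain ⟨e₀, he₀⟩ := hne
              rw [mem_filter] at he₀
              have hlt : M pq.1 pq.2 < H := by
                have h1 := he₀.1
                rw [hSdef, mem_filter] at h1
                have h2 : M (cp e₀) (cq e₀) < H := Nat.lt_of_not_le h1.2
                calc M pq.1 pq.2 = M (cp e₀) (cq e₀) := by rw [← he₀.2]
                  _ < H := h2
              have hsub2 : S.filter (fun e => (cp e, cq e) = pq) ⊆
                  E.filter (fun e => (x pq.1 ≤ e.1 ∧ e.1 < x (pq.1 + 1)) ∧
                    (y pq.2 ≤ e.2 ∧ e.2 < y (pq.2 + 1))) := by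
                intro e he
                rw [mem_filter] at he
                obtain ⟨heS, hecell⟩ := he
                rw [hSdef, mem_filter] at heS
                obtain ⟨heE, h1, h2⟩ := hGmem e heS.1
                have hcp' := hcp e h1
                have hcq' := hcq e h2
                have hp : cp e = pq.1 := congrArg Prod.fst hecell
                have hq : cq e = pq.2 := congrArg Prod.snd hecell
                rw [mem_filter]
                rw [hp] at hcp'
                rw [hq] at hcq'
                exact ⟨heE, ⟨hcp'.2.1, hcp'.2.2⟩, hcq'.2.1, hcq'.2.2⟩
              calc (S.filter (fun e => (cp e, cq e) = pq)).card
                  ≤ M pq.1 pq.2 := by rw [hMdef]; exact card_le_card hsub2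
                _ ≤ H - 1 := by omega
        _ = N * N * (H - 1) := by rw [card_product, card_range]
    -- heavy chords
    have hheavy : (G.filter (fun e => H ≤ M (cp e) (cq e))).card ≤
        ((k - 1) * (k - 1)) * (3 * D - 1) := by
      set T := G.filter (fun e => H ≤ M (cp e) (cq e)) with hTdef
      have hcellC : ∀ e ∈ T, (cp e, cq e) ∈ C := by
        intro e he
        rw [hTdef, mem_filter] at he
        obtain ⟨heE, h1, h2⟩ := hGmem e he.1
        rw [hCdef, mem_filter, mem_product, mem_range, mem_range]
        exact ⟨⟨(hcp e h1).1, (hcq e h2).1⟩, he.2⟩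
      have hmap : ∀ e ∈ T, φ (cp e, cq e) ∈ Icc 1 (k - 1) ×ˢ Icc 1 (k - 1) :=
        fun e he => hφmem _ (hcellC e he)
      rw [card_eq_sum_card_fiberwise hmap]
      calc ∑ uv ∈ Icc 1 (k - 1) ×ˢ Icc 1 (k - 1),
            (T.filter (fun e => φ (cp e, cq e) = uv)).card
          ≤ (Icc 1 (k - 1) ×ˢ Icc 1 (k - 1)).card * (3 * D - 1) := by
            apply sum_le_card_nsmul
            intro uv huv
            rcases (T.filter (fun e => φ (cp e, cq e) = uv)).eq_empty_or_nonempty with h0 | hne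
            · rw [h0]; simp
            · obtain ⟨e₀, he₀⟩ := hne
              rw [mem_filter] at he₀
              have hc₀ : (cp e₀, cq e₀) ∈ C := hcellC e₀ he₀.1
              set Scl := C.filter (fun c => φ c = uv) with hScldef
              have hc₀' : (cp e₀, cq e₀) ∈ Scl := by
                rw [hScldef, mem_filter]
                exact ⟨hc₀, he₀.2⟩
              have hshare : ∀ c ∈ Scl, ∀ c' ∈ Scl, c.1 = c'.1 ∨ c.2 = c'.2 := by
                intro c hc c' hc'
                rw [hScldef, mem_filter] at hc hc'
                exact hφshare c hc.1 c' hc'.1 (hc.2.trans hc'.2.symm)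
              have hmemScl : ∀ e ∈ T.filter (fun e => φ (cp e, cq e) = uv),
                  (cp e, cq e) ∈ Scl := by
                intro e he
                rw [mem_filter] at he
                rw [hScldef, mem_filter]
                exact ⟨hcellC e he.1, he.2⟩
              rcases share_line Scl _ hc₀' hshare with hline | hline
              · -- all cells in one row p₀
                set p₀ := cp e₀ with hp₀
                have hsub2 : T.filter (fun e => φ (cp e, cq e) = uv) ⊆
                    E.filter (fun e => x p₀ ≤ e.1 ∧ e.1 < x (p₀ + 1)) := by
                  intro e he
                  have hScl := hmemScl e he
                  have hpe : cp e = p₀ := hline _ hScl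
                  rw [mem_filter] at he
                  have heT := he.1
                  rw [hTdef, mem_filter] at heT
                  obtain ⟨heE, h1, h2⟩ := hGmem e heT.1
                  have hcp' := hcp e h1
                  rw [mem_filter]
                  rw [hpe] at hcp'
                  exact ⟨heE, hcp'.2.1, hcp'.2.2⟩
                have hp₀N : p₀ < N := by
                  have := hCmem _ hc₀
                  exact this.1
                calc (T.filter (fun e => φ (cp e, cq e) = uv)).card
                    ≤ (E.filter (fun e => x p₀ ≤ e.1 ∧ e.1 < x (p₀ + 1))).card :=
                      card_le_card hsub2
                  _ ≤ 3 * D - 1 := hxrow p₀ hp₀N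
              · -- all cells in one column q₀
                set q₀ := cq e₀ with hq₀
                have hsub2 : T.filter (fun e => φ (cp e, cq e) = uv) ⊆
                    E.filter (fun e => y q₀ ≤ e.2 ∧ e.2 < y (q₀ + 1)) := by
                  intro e he
                  have hScl := hmemScl e he
                  have hqe : cq e = q₀ := hline _ hScl
                  rw [mem_filter] at he
                  have heT := he.1
                  rw [hTdef, mem_filter] at heT
                  obtain ⟨heE, h1, h2⟩ := hGmem e heT.1
                  have hcq' := hcq e h2
                  rw [mem_filter]
                  rw [hqe] at hcq'
                  exact ⟨heE, hcq'.2.1, hcq'.2.2⟩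
                have hq₀N : q₀ < N := by
                  have := hCmem _ hc₀
                  exact this.2.1
                calc (T.filter (fun e => φ (cp e, cq e) = uv)).card
                    ≤ (E.filter (fun e => y q₀ ≤ e.2 ∧ e.2 < y (q₀ + 1))).card :=
                      card_le_card hsub2
                  _ ≤ 3 * D - 1 := hyrow q₀ hq₀N
        _ = ((k - 1) * (k - 1)) * (3 * D - 1) := by
            rw [card_product, Nat.card_Icc]
            have h9 : k - 1 + 1 - 1 = k - 1 := by omega
            rw [h9]
    -- assemble the contradiction
    have hmain : m ≤ (2 * D - 1) + (2 * D - 1) + N * N * (H - 1) +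
        ((k - 1) * (k - 1)) * (3 * D - 1) := by omega
    have hNm : N * (2 * D) ≤ m := by rw [hNdef]; exact Nat.div_mul_le_self _ _
    have hH'm : (D * D / m) * m ≤ D * D := Nat.div_mul_le_self _ _
    have hHsub : H - 1 = D * D / m := by simp [hHdef]
    -- move to the reals
    have hmR : (1 : ℝ) ≤ m := by exact_mod_cast hm
    have hDR : (1 : ℝ) ≤ D := by exact_mod_cast hD1
    have hNmR : (N : ℝ) * (2 * D) ≤ m := by exact_mod_cast hNm
    have hH'mR : ((D * D / m : ℕ) : ℝ) * m ≤ (D : ℝ) * D := by exact_mod_cast hH'm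
    have hDleR : 10 * (k : ℝ) ^ 2 * D ≤ m := by exact_mod_cast hDle
    have c1 : ((2 * D - 1 : ℕ) : ℝ) ≤ 2 * D := by
      have : (2 * D - 1 : ℕ) ≤ 2 * D := by omega
      exact_mod_cast this
    have c3 : ((3 * D - 1 : ℕ) : ℝ) ≤ 3 * D := by
      have : (3 * D - 1 : ℕ) ≤ 3 * D := by omega
      exact_mod_cast this
    have ck : ((k - 1 : ℕ) : ℝ) ≤ k := by
      have : (k - 1 : ℕ) ≤ k := by omega
      exact_mod_cast this
    have hmainR : (m : ℝ) ≤ ((2 * D - 1 : ℕ) : ℝ) + ((2 * D - 1 : ℕ) : ℝ) +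
        (N : ℝ) * N * ((D * D / m : ℕ) : ℝ) +
        ((k - 1 : ℕ) : ℝ) * ((k - 1 : ℕ) : ℝ) * ((3 * D - 1 : ℕ) : ℝ) := by
      rw [← hHsub]
      exact_mod_cast hmain
    set n : ℝ := (N : ℝ) with hnr
    set h' : ℝ := ((D * D / m : ℕ) : ℝ) with hh'r
    have hn0 : (0 : ℝ) ≤ n := Nat.cast_nonneg _
    have hh'0 : (0 : ℝ) ≤ h' := Nat.cast_nonneg _
    have hk10 : (0 : ℝ) ≤ ((k - 1 : ℕ) : ℝ) := Nat.cast_nonneg _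
    -- light term: n * n * h' ≤ m / 4
    have q1 : (n * (2 * (D : ℝ))) * (n * (2 * (D : ℝ))) ≤ (m : ℝ) * m :=
      mul_le_mul hNmR hNmR (by positivity) (by positivity)
    have q2 : (n * n * h') * (4 * ((D : ℝ) * D) * m) ≤ ((m : ℝ) * m) * ((D : ℝ) * D) := by
      have h5 := mul_le_mul q1 hH'mR (by positivity) (by positivity)
      calc (n * n * h') * (4 * ((D : ℝ) * D) * m)
          = ((n * (2 * (D : ℝ))) * (n * (2 * (D : ℝ)))) * (h' * m) := by ring
        _ ≤ ((m : ℝ) * m) * ((D : ℝ) * D) := h5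
    have q3 : n * n * h' ≤ (m : ℝ) / 4 := by
      rw [le_div_iff₀ (by norm_num : (0 : ℝ) < 4)]
      have hpos : (0 : ℝ) < (D : ℝ) * D * m := by positivity
      have q2' : (n * n * h' * 4) * ((D : ℝ) * D * m) ≤ (m : ℝ) * ((D : ℝ) * D * m) :=
        calc (n * n * h' * 4) * ((D : ℝ) * D * m)
            = (n * n * h') * (4 * ((D : ℝ) * D) * m) := by ring
          _ ≤ ((m : ℝ) * m) * ((D : ℝ) * D) := q2
          _ = (m : ℝ) * ((D : ℝ) * D * m) := by ring
      exact le_of_mul_le_mul_right q2' hpos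
    -- heavy term
    have q4 : ((k - 1 : ℕ) : ℝ) * ((k - 1 : ℕ) : ℝ) * ((3 * D - 1 : ℕ) : ℝ) ≤
        (k : ℝ) * k * (3 * D) := by
      have h30 : (0 : ℝ) ≤ ((3 * D - 1 : ℕ) : ℝ) := Nat.cast_nonneg _
      have h31 : ((k - 1 : ℕ) : ℝ) * ((k - 1 : ℕ) : ℝ) ≤ (k : ℝ) * k :=
        mul_le_mul ck ck hk10 (by positivity)
      exact mul_le_mul h31 c3 h30 (by positivity)
    have q5 : 10 * ((k : ℝ) * (k : ℝ) * (D : ℝ)) ≤ m := by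
      have : 10 * ((k : ℝ) * (k : ℝ) * (D : ℝ)) = 10 * (k : ℝ) ^ 2 * D := by ring
      rw [this]; exact hDleR
    have hkk : (1 : ℝ) ≤ (k : ℝ) * k := by
      have h8 := mul_le_mul hkR hkR zero_le_one (le_trans zero_le_one hkR)
      linarith
    have q6 : 10 * (D : ℝ) ≤ m := by
      have h7 : (0 : ℝ) ≤ ((k : ℝ) * k - 1) * D := by
        apply mul_nonneg (by linarith) (by positivity)
      linarith [q5, h7]
    linarith [hmainR, q3, q4, q5, q6, c1]
end

section
/- Let α, β be positive integers with α ≤ β, let t ≥ 1, and let L_1, …, L_t be nonempty finite sets of natural numbers such that for each 1 ≤ i ≤ t, every two consecutive elements of L_i differ by at least α and at most β. Then the sumset L_1 + … + L_t contains a subset of size 1 + Σ_{i=1}^{t} (|L_i| − 1) in which every two consecutive elements differ by at least α and at most β. -/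
/-- Every two consecutive elements of the finite set `L` differ by at least `α`
and at most `β`. -/
def ConsecGap (α β : ℕ) (L : Finset ℕ) : Prop :=
  ∀ x ∈ L, ∀ y ∈ L, x < y → (∀ z ∈ L, ¬(x < z ∧ z < y)) → α ≤ y - x ∧ y - x ≤ β

lemma consecGap_image_add {α β : ℕ} {L : Finset ℕ} (h : ConsecGap α β L) (c : ℕ) :
    ConsecGap α β (L.image (· + c)) := by
  intro x hx y hy hxy hz
  obtain ⟨a, ha, rfl⟩ := Finset.mem_image.mp hx
  obtain ⟨b, hb, rfl⟩ := Finset.mem_image.mp hy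
  have hab : a < b := by omega
  have : ∀ z ∈ L, ¬(a < z ∧ z < b) := by
    intro z hzL hbet
    exact hz (z + c) (Finset.mem_image.mpr ⟨z, hzL, rfl⟩) (by omega)
  have := h a ha b hb hab this
  omega

lemma consecGap_glue {α β : ℕ} {A B : Finset ℕ} (v : ℕ)
    (hvA : v ∈ A) (hvB : v ∈ B) (hA : ∀ x ∈ A, x ≤ v) (hB : ∀ x ∈ B, v ≤ x)
    (gA : ConsecGap α β A) (gB : ConsecGap α β B) :
    ConsecGap α β (A ∪ B) := by
  intro x hx y hy hxy hz
  rcases Finset.mem_union.mp hx with hxA | hxB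
  · rcases Finset.mem_union.mp hy with hyA | hyB
    · exact gA x hxA y hyA hxy (fun z hzA => hz z (Finset.mem_union_left _ hzA))
    · -- x ∈ A, y ∈ B
      have hxv : x ≤ v := hA x hxA
      have hvy : v ≤ y := hB y hyB
      rcases eq_or_lt_of_le hxv with heq | hxv'
      · have hres := gB v hvB y hyB (by omega)
          (fun z hzB => by have := hz z (Finset.mem_union_right _ hzB); omega)
        omega
      · rcases eq_or_lt_of_le hvy with heq | hvy'
        · have hres := gA x hxA v hvA (by omega)
            (fun z hzA => by have := hz z (Finset.mem_union_left _ hzA); omega)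
          omega
        · exact absurd ⟨hxv', hvy'⟩ (hz v (Finset.mem_union_left _ hvA))
  · -- x ∈ B, so v ≤ x, y > x ≥ v so y ∈ B (y ∈ A → y ≤ v ≤ x < y contra)
    have hvx : v ≤ x := hB x hxB
    have hyB : y ∈ B := by
      rcases Finset.mem_union.mp hy with hyA | hyB
      · have := hA y hyA; omega
      · exact hyB
    exact gB x hxB y hyB hxy (fun z hzB => hz z (Finset.mem_union_right _ hzB))

lemma aux_sumset (α β : ℕ) :
    ∀ t, 1 ≤ t → ∀ L : ℕ → Finset ℕ,
    (∀ i, 1 ≤ i → i ≤ t → (L i).Nonempty) →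
    (∀ i, 1 ≤ i → i ≤ t → ConsecGap α β (L i)) →
    ∃ M : Finset ℕ, ∃ m : ℕ, m ∈ M ∧ (∀ x ∈ M, x ≤ m) ∧
      (∀ s ∈ M, ∃ f : ℕ → ℕ, (∀ i, 1 ≤ i → i ≤ t → f i ∈ L i) ∧
        s = ∑ i ∈ Finset.Icc 1 t, f i) ∧
      M.card = 1 + ∑ i ∈ Finset.Icc 1 t, ((L i).card - 1) ∧
      ConsecGap α β M := by
  intro t ht
  induction t, ht using Nat.le_induction with
  | base =>
    intro L hne hgap
    have h1 : (L 1).Nonempty := hne 1 le_rfl le_rfl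
    refine ⟨L 1, (L 1).max' h1, (L 1).max'_mem h1, fun x hx => (L 1).le_max' x hx, ?_, ?_, ?_⟩
    · intro s hs
      refine ⟨fun _ => s, ?_, ?_⟩
      · intro i hi1 hi2
        have : i = 1 := le_antisymm hi2 hi1
        subst this; exact hs
      · simp
    · have : 1 ≤ (L 1).card := Finset.card_pos.mpr h1
      simp; omega
    · exact hgap 1 le_rfl le_rfl
  | succ t ht ih =>
    intro L hne hgap
    obtain ⟨M, m, hmM, hmax, hrep, hcard, hg⟩ :=
      ih L (fun i h1 h2 => hne i h1 (by omega)) (fun i h1 h2 => hgap i h1 (by omega))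
    have hB : (L (t+1)).Nonempty := hne (t+1) (by omega) le_rfl
    set B := L (t+1) with hBdef
    set b0 := B.min' hB with hb0
    set b1 := B.max' hB with hb1
    set A' := M.image (· + b0) with hA'
    set B' := B.image (· + m) with hB'
    have hvA : m + b0 ∈ A' := Finset.mem_image.mpr ⟨m, hmM, rfl⟩
    have hvB : m + b0 ∈ B' := Finset.mem_image.mpr ⟨b0, B.min'_mem hB, by omega⟩
    have hAle : ∀ x ∈ A', x ≤ m + b0 := by
      intro x hx
      obtain ⟨a, ha, rfl⟩ := Finset.mem_image.mp hx
      have := hmax a ha; omega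
    have hBge : ∀ x ∈ B', m + b0 ≤ x := by
      intro x hx
      obtain ⟨b, hb, rfl⟩ := Finset.mem_image.mp hx
      have := B.min'_le b hb; omega
    refine ⟨A' ∪ B', m + b1, ?_, ?_, ?_, ?_, ?_⟩
    · exact Finset.mem_union_right _ (Finset.mem_image.mpr ⟨b1, B.max'_mem hB, by omega⟩)
    · intro x hx
      rcases Finset.mem_union.mp hx with hx | hx
      · have := hAle x hx
        have : b0 ≤ b1 := B.min'_le b1 (B.max'_mem hB)
        omega
      · obtain ⟨b, hb, rfl⟩ := Finset.mem_image.mp hx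
        have := B.le_max' b hb; omega
    · intro s hs
      rcases Finset.mem_union.mp hs with hs | hs
      · obtain ⟨a, ha, rfl⟩ := Finset.mem_image.mp hs
        obtain ⟨g, hg1, hg2⟩ := hrep a ha
        refine ⟨fun j => if j = t + 1 then b0 else g j, ?_, ?_⟩
        · intro i hi1 hi2
          by_cases h : i = t + 1
          · subst h; simpa using B.min'_mem hB
          · simp only [h, if_false]; exact hg1 i hi1 (by omega)
        · rw [Finset.sum_Icc_succ_top (by omega : 1 ≤ t + 1)]
          have hsum : ∑ j ∈ Finset.Icc 1 t, (if j = t + 1 then b0 else g j)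
              = ∑ j ∈ Finset.Icc 1 t, g j :=
            Finset.sum_congr rfl (fun j hj => by
              have := (Finset.mem_Icc.mp hj).2
              simp [Nat.ne_of_lt (by omega : j < t + 1)])
          rw [hsum, if_pos rfl]
          omega
      · obtain ⟨b, hb, rfl⟩ := Finset.mem_image.mp hs
        obtain ⟨g, hg1, hg2⟩ := hrep m hmM
        refine ⟨fun j => if j = t + 1 then b else g j, ?_, ?_⟩
        · intro i hi1 hi2
          by_cases h : i = t + 1
          · subst h; simpa using hb
          · simp only [h, if_false]; exact hg1 i hi1 (by omega)
        · rw [Finset.sum_Icc_succ_top (by omega : 1 ≤ t + 1)]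
          have hsum : ∑ j ∈ Finset.Icc 1 t, (if j = t + 1 then b else g j)
              = ∑ j ∈ Finset.Icc 1 t, g j :=
            Finset.sum_congr rfl (fun j hj => by
              have := (Finset.mem_Icc.mp hj).2
              simp [Nat.ne_of_lt (by omega : j < t + 1)])
          rw [hsum, if_pos rfl]
          omega
    · have hinter : A' ∩ B' = {m + b0} := by
        apply Finset.eq_singleton_iff_unique_mem.mpr
        constructor
        · exact Finset.mem_inter.mpr ⟨hvA, hvB⟩
        · intro z hz
          have h1 := hAle z (Finset.mem_inter.mp hz).1
          have h2 := hBge z (Finset.mem_inter.mp hz).2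
          omega
      have hcu := Finset.card_union_add_card_inter A' B'
      rw [hinter] at hcu
      have hcA : A'.card = M.card := Finset.card_image_of_injective _ (add_left_injective b0)
      have hcB : B'.card = B.card := Finset.card_image_of_injective _ (add_left_injective m)
      have hBpos : 1 ≤ B.card := Finset.card_pos.mpr hB
      rw [Finset.sum_Icc_succ_top (by omega : 1 ≤ t + 1)]
      simp only [Finset.card_singleton] at hcu
      have hBL : (L (t + 1)).card = B.card := rfl
      omega
    · exact consecGap_glue (m + b0) hvA hvB hAle hBge
        (consecGap_image_add hg b0) (consecGap_image_add (hgap (t+1) (by omega) le_rfl) m)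

/-- sum-set lemma: if in each `L_i` consecutive elements differ by at
least `α` and at most `β`, then the sumset `L_1 + ⋯ + L_t` contains a subset of size
`1 + Σᵢ (|L_i| − 1)` with the same property. -/
theorem sumset_consecutive_gaps
    (α β t : ℕ) (hα : 1 ≤ α) (hαβ : α ≤ β) (ht : 1 ≤ t)
    (L : ℕ → Finset ℕ)
    (hne : ∀ i, 1 ≤ i → i ≤ t → (L i).Nonempty)
    (hgap : ∀ i, 1 ≤ i → i ≤ t → ConsecGap α β (L i)) :
    ∃ M : Finset ℕ,
      (∀ s ∈ M, ∃ f : ℕ → ℕ, (∀ i, 1 ≤ i → i ≤ t → f i ∈ L i) ∧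
        s = ∑ i ∈ Finset.Icc 1 t, f i) ∧
      M.card = 1 + ∑ i ∈ Finset.Icc 1 t, ((L i).card - 1) ∧
      ConsecGap α β M := by
  obtain ⟨M, m, _, _, h1, h2, h3⟩ := aux_sumset α β t ht L hne hgap
  exact ⟨M, h1, h2, h3⟩
end

section
/- Let S be a nonempty finite set, let f : S → ℕ, and let p, q ≥ 1 be integers. Then either there is an interval of p consecutive integers I such that |{s ∈ S : f(s) ∈ I}| ≥ q, or there is a subset T ⊆ S with |T| ≥ |S|/(2q) such that |f(s) − f(s')| ≥ p for all distinct s, s' ∈ T. -/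
private lemma greedy_far_apart {γ : Type} (f : γ → ℕ) (p q : ℕ) (hp : 1 ≤ p) :
    ∀ S : Finset γ,
    (∀ l, (S.filter (fun s => f s ∈ Finset.Ico l (l + p))).card < q) →
    ∃ T ⊆ S, S.card ≤ q * T.card ∧
      ∀ s ∈ T, ∀ s' ∈ T, s ≠ s' → (p : ℤ) ≤ |(f s : ℤ) - (f s' : ℤ)| := by
  classical
  intro S
  induction S using Finset.strongInduction with
  | _ S ih =>
    intro hfar
    rcases S.eq_empty_or_nonempty with rfl | hS
    · exact ⟨∅, by simp⟩
    · obtain ⟨s₀, hs₀, hmin⟩ := S.exists_min_image f hS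
      set m := f s₀ with hm
      set S' := S.filter (fun s => m + p ≤ f s) with hS'
      have hsub : S' ⊂ S := by
        rw [hS', Finset.filter_ssubset]
        exact ⟨s₀, hs₀, by omega⟩
      obtain ⟨T', hT'sub, hcard, hfarT⟩ := ih S' hsub (fun l =>
        lt_of_le_of_lt
          (Finset.card_le_card (Finset.filter_subset_filter _ (Finset.filter_subset _ _)))
          (hfar l))
      have hs₀T' : s₀ ∉ T' := by
        intro h
        have := Finset.mem_filter.1 (hT'sub h)
        omega
      refine ⟨insert s₀ T', ?_, ?_, ?_⟩
      · intro x hx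
        rcases Finset.mem_insert.1 hx with rfl | hx
        · exact hs₀
        · exact Finset.filter_subset _ _ (hT'sub hx)
      · rw [Finset.card_insert_of_notMem hs₀T']
        have hsplit : S'.card + (S.filter (fun s => ¬ (m + p ≤ f s))).card = S.card := by
          rw [hS']
          exact Finset.card_filter_add_card_filter_not _
        have hmul : q * (T'.card + 1) = q * T'.card + q := by ring
        have hrem : (S.filter (fun s => ¬ (m + p ≤ f s))).card < q := by
          refine lt_of_le_of_lt (Finset.card_le_card ?_) (hfar m)
          intro x hx
          have hx' := Finset.mem_filter.1 hx
          refine Finset.mem_filter.2 ⟨hx'.1, ?_⟩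
          have := hmin x hx'.1
          simp only [Finset.mem_Ico]
          omega
        omega
      · intro s hs s' hs' hne
        have key : ∀ t ∈ T', (p : ℤ) ≤ |(f t : ℤ) - (f s₀ : ℤ)| := by
          intro t ht
          have := Finset.mem_filter.1 (hT'sub ht)
          rw [abs_sub_comm] at *
          have : m + p ≤ f t := this.2
          rw [abs_of_nonpos (by push_cast; omega)]
          push_cast; omega
        rcases Finset.mem_insert.1 hs with rfl | hsT
        · rcases Finset.mem_insert.1 hs' with rfl | hs'T
          · exact absurd rfl hne
          · rw [abs_sub_comm]; exact key s' hs'T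
        · rcases Finset.mem_insert.1 hs' with rfl | hs'T
          · exact key s hsT
          · exact hfarT s hsT s' hs'T hne

/-- dichotomy: for `f : S → ℕ`, either some interval of `p` consecutive
integers contains the `f`-values of at least `q` elements of `S`, or there is `T ⊆ S` with
`|T| ≥ |S|/(2q)` whose `f`-values are pairwise at least `p` apart. -/
theorem values_in_short_interval_or_far_apart
    {γ : Type} (S : Finset γ) (f : γ → ℕ) (p q : ℕ)
    (hS : S.Nonempty) (hp : 1 ≤ p) (hq : 1 ≤ q) :
    (∃ l, q ≤ (S.filter (fun s => f s ∈ Finset.Ico l (l + p))).card) ∨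
    (∃ T ⊆ S, (S.card : ℝ) / (2 * q) ≤ (T.card : ℝ) ∧
      ∀ s ∈ T, ∀ s' ∈ T, s ≠ s' → (p : ℤ) ≤ |(f s : ℤ) - (f s' : ℤ)|) := by
  by_cases h : ∃ l, q ≤ (S.filter (fun s => f s ∈ Finset.Ico l (l + p))).card
  · exact Or.inl h
  · push_neg at h
    obtain ⟨T, hTsub, hcard, hfarT⟩ := greedy_far_apart f p q hp S h
    refine Or.inr ⟨T, hTsub, ?_, hfarT⟩
    rw [div_le_iff₀ (by positivity)]
    have : (S.card : ℝ) ≤ q * T.card := by exact_mod_cast hcard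
    have hq' : (1 : ℝ) ≤ q := by exact_mod_cast hq
    nlinarith [Nat.cast_nonneg (α := ℝ) T.card]
end

section
/- Let a, b ≥ 2 and let E be a set of chords containing three pairwise-interlacing chords (x_1,y_1), (x_2,y_2), (x_3,y_3) with x_1 < x_2 < x_3 and y_3 < y_2 < y_1, whose lengths x_1+y_1, x_2+y_2, x_3+y_3 all belong to an interval of size D. Then there exist two paths Q_1 and Q_2 in H(a,b,E) from inl x_1 to inl x_3, neither of which uses any vertex inl i with i > x_3 nor any vertex inr j with j < y_3, such that 1 ≤ |Q_2| − |Q_1| ≤ 2D. -/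
open SimpleGraph

lemma sectionGraph_adj_inl (a b : ℕ) (E : Finset (ℕ × ℕ)) {i i' : ℕ}
    (hi : i < a) (hi' : i' < a) (h : i + 1 = i' ∨ i' + 1 = i) :
    (sectionGraph a b E).Adj (Sum.inl ⟨i, hi⟩) (Sum.inl ⟨i', hi'⟩) := by exact h

lemma sectionGraph_adj_inr (a b : ℕ) (E : Finset (ℕ × ℕ)) {j j' : ℕ}
    (hj : j < b) (hj' : j' < b) (h : j + 1 = j' ∨ j' + 1 = j) :
    (sectionGraph a b E).Adj (Sum.inr ⟨j, hj⟩) (Sum.inr ⟨j', hj'⟩) := by exact h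

lemma sectionGraph_adj_chord (a b : ℕ) (E : Finset (ℕ × ℕ)) {i j : ℕ}
    (hi : i < a) (hj : j < b) (h : (i, j) ∈ E) :
    (sectionGraph a b E).Adj (Sum.inl ⟨i, hi⟩) (Sum.inr ⟨j, hj⟩) := by exact h

def xwalk (a b : ℕ) (E : Finset (ℕ × ℕ)) : (i k : ℕ) → (h : i + k < a) →
    (sectionGraph a b E).Walk (Sum.inl ⟨i, by omega⟩) (Sum.inl ⟨i + k, h⟩)
  | _, 0, _ => Walk.nil
  | i, k+1, h =>
      Walk.cons (sectionGraph_adj_inl a b E (by omega) (by omega) (Or.inl rfl))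
        ((xwalk a b E (i+1) k (by omega)).copy rfl (by simp [Fin.ext_iff]; omega))

lemma xwalk_length (a b : ℕ) (E : Finset (ℕ × ℕ)) :
    ∀ i k h, (xwalk a b E i k h).length = k
  | _, 0, _ => rfl
  | i, k+1, h => by
      simp [xwalk, xwalk_length a b E (i+1) k]

lemma xwalk_support (a b : ℕ) (E : Finset (ℕ × ℕ)) :
    ∀ i k h, ∀ v ∈ (xwalk a b E i k h).support,
      ∃ m, i ≤ m ∧ m ≤ i + k ∧ ∃ hm : m < a, v = Sum.inl ⟨m, hm⟩
  | i, 0, h, v, hv => by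
      simp [xwalk] at hv
      exact ⟨i, le_refl _, by omega, by omega, by simp [hv]⟩
  | i, k+1, h, v, hv => by
      simp [xwalk] at hv
      rcases hv with rfl | hv
      · exact ⟨i, le_refl _, by omega, by omega, rfl⟩
      · obtain ⟨m, h1, h2, hm, rfl⟩ := xwalk_support a b E (i+1) k (by omega) v hv
        exact ⟨m, by omega, by omega, hm, rfl⟩

lemma xwalk_isPath (a b : ℕ) (E : Finset (ℕ × ℕ)) :
    ∀ i k h, (xwalk a b E i k h).IsPath
  | _, 0, _ => Walk.IsPath.nil
  | i, k+1, h => by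
      rw [xwalk, Walk.cons_isPath_iff]
      refine ⟨(Walk.isPath_copy _ _ _).2 (xwalk_isPath a b E (i+1) k _), ?_⟩
      intro hmem
      rw [Walk.support_copy] at hmem
      obtain ⟨m, h1, h2, hm, he⟩ := xwalk_support a b E (i+1) k (by omega) _ hmem
      simp [Fin.ext_iff] at he
      omega

def ywalk (a b : ℕ) (E : Finset (ℕ × ℕ)) : (j k : ℕ) → (h : j + k < b) →
    (sectionGraph a b E).Walk (Sum.inr ⟨j, by omega⟩) (Sum.inr ⟨j + k, h⟩)
  | _, 0, _ => Walk.nil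
  | j, k+1, h =>
      Walk.cons (sectionGraph_adj_inr a b E (by omega) (by omega) (Or.inl rfl))
        ((ywalk a b E (j+1) k (by omega)).copy rfl (by simp [Fin.ext_iff]; omega))

lemma ywalk_length (a b : ℕ) (E : Finset (ℕ × ℕ)) :
    ∀ j k h, (ywalk a b E j k h).length = k
  | _, 0, _ => rfl
  | j, k+1, h => by
      simp [ywalk, ywalk_length a b E (j+1) k]

lemma ywalk_support (a b : ℕ) (E : Finset (ℕ × ℕ)) :
    ∀ j k h, ∀ v ∈ (ywalk a b E j k h).support,
      ∃ m, j ≤ m ∧ m ≤ j + k ∧ ∃ hm : m < b, v = Sum.inr ⟨m, hm⟩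
  | j, 0, h, v, hv => by
      simp [ywalk] at hv
      exact ⟨j, le_refl _, by omega, by omega, by simp [hv]⟩
  | j, k+1, h, v, hv => by
      simp [ywalk] at hv
      rcases hv with rfl | hv
      · exact ⟨j, le_refl _, by omega, by omega, rfl⟩
      · obtain ⟨m, h1, h2, hm, rfl⟩ := ywalk_support a b E (j+1) k (by omega) v hv
        exact ⟨m, by omega, by omega, hm, rfl⟩

lemma ywalk_isPath (a b : ℕ) (E : Finset (ℕ × ℕ)) :
    ∀ j k h, (ywalk a b E j k h).IsPath
  | _, 0, _ => Walk.IsPath.nil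
  | j, k+1, h => by
      rw [ywalk, Walk.cons_isPath_iff]
      refine ⟨(Walk.isPath_copy _ _ _).2 (ywalk_isPath a b E (j+1) k _), ?_⟩
      intro hmem
      rw [Walk.support_copy] at hmem
      obtain ⟨m, h1, h2, hm, he⟩ := ywalk_support a b E (j+1) k (by omega) _ hmem
      simp [Fin.ext_iff] at he
      omega

def xpath (a b : ℕ) (E : Finset (ℕ × ℕ)) (i j : ℕ) (hij : i ≤ j) (hj : j < a) :
    (sectionGraph a b E).Walk (Sum.inl ⟨i, by omega⟩) (Sum.inl ⟨j, hj⟩) :=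
  (xwalk a b E i (j - i) (by omega)).copy rfl (by simp [Fin.ext_iff]; omega)

lemma xpath_length (a b : ℕ) (E : Finset (ℕ × ℕ)) (i j : ℕ) (hij : i ≤ j) (hj : j < a) :
    (xpath a b E i j hij hj).length = j - i := by
  simp [xpath, xwalk_length]

lemma xpath_support (a b : ℕ) (E : Finset (ℕ × ℕ)) (i j : ℕ) (hij : i ≤ j) (hj : j < a) :
    ∀ v ∈ (xpath a b E i j hij hj).support,
      ∃ m, i ≤ m ∧ m ≤ j ∧ ∃ hm : m < a, v = Sum.inl ⟨m, hm⟩ := by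
  intro v hv
  rw [xpath, Walk.support_copy] at hv
  obtain ⟨m, h1, h2, hm, rfl⟩ := xwalk_support a b E i (j - i) (by omega) v hv
  exact ⟨m, h1, by omega, hm, rfl⟩

lemma xpath_isPath (a b : ℕ) (E : Finset (ℕ × ℕ)) (i j : ℕ) (hij : i ≤ j) (hj : j < a) :
    (xpath a b E i j hij hj).IsPath :=
  (Walk.isPath_copy _ _ _).2 (xwalk_isPath a b E _ _ _)

def ypath (a b : ℕ) (E : Finset (ℕ × ℕ)) (i j : ℕ) (hij : i ≤ j) (hj : j < b) :
    (sectionGraph a b E).Walk (Sum.inr ⟨i, by omega⟩) (Sum.inr ⟨j, hj⟩) :=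
  (ywalk a b E i (j - i) (by omega)).copy rfl (by simp [Fin.ext_iff]; omega)

lemma ypath_length (a b : ℕ) (E : Finset (ℕ × ℕ)) (i j : ℕ) (hij : i ≤ j) (hj : j < b) :
    (ypath a b E i j hij hj).length = j - i := by
  simp [ypath, ywalk_length]

lemma ypath_support (a b : ℕ) (E : Finset (ℕ × ℕ)) (i j : ℕ) (hij : i ≤ j) (hj : j < b) :
    ∀ v ∈ (ypath a b E i j hij hj).support,
      ∃ m, i ≤ m ∧ m ≤ j ∧ ∃ hm : m < b, v = Sum.inr ⟨m, hm⟩ := by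
  intro v hv
  rw [ypath, Walk.support_copy] at hv
  obtain ⟨m, h1, h2, hm, rfl⟩ := ywalk_support a b E i (j - i) (by omega) v hv
  exact ⟨m, h1, by omega, hm, rfl⟩

lemma ypath_isPath (a b : ℕ) (E : Finset (ℕ × ℕ)) (i j : ℕ) (hij : i ≤ j) (hj : j < b) :
    (ypath a b E i j hij hj).IsPath :=
  (Walk.isPath_copy _ _ _).2 (ywalk_isPath a b E _ _ _)


/-- Given three pairwise-interlacing chords whose lengths lie in an
interval of size `D`, there are two paths from `inl x₁` to `inl x₃`, avoiding all vertices
`inl i` with `i > x₃` and all vertices `inr j` with `j < y₃`, whose lengths differ by at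
least `1` and at most `2D`. -/
theorem sectionPair_three_interlacing_chords_two_paths
    (a b D : ℕ) (E : Finset (ℕ × ℕ)) (x₁ y₁ x₂ y₂ x₃ y₃ : ℕ)
    (ha : 2 ≤ a) (hb : 2 ≤ b)
    (hE : ∀ e ∈ E, e.1 < a ∧ e.2 < b)
    (h₁ : (x₁, y₁) ∈ E) (h₂ : (x₂, y₂) ∈ E) (h₃ : (x₃, y₃) ∈ E)
    (hx : x₁ < x₂ ∧ x₂ < x₃) (hy : y₃ < y₂ ∧ y₂ < y₁)
    (hlen : ∃ l, x₁ + y₁ ∈ Finset.Ico l (l + D) ∧ x₂ + y₂ ∈ Finset.Ico l (l + D) ∧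
      x₃ + y₃ ∈ Finset.Ico l (l + D)) :
    ∃ Q₁ Q₂ : (sectionGraph a b E).Walk
        (Sum.inl (⟨x₁, (hE _ h₁).1⟩ : Fin a)) (Sum.inl (⟨x₃, (hE _ h₃).1⟩ : Fin a)),
      Q₁.IsPath ∧ Q₂.IsPath ∧
      (∀ v ∈ Q₁.support, (∀ i : Fin a, v = Sum.inl i → (i : ℕ) ≤ x₃) ∧
        (∀ j : Fin b, v = Sum.inr j → y₃ ≤ (j : ℕ))) ∧
      (∀ v ∈ Q₂.support, (∀ i : Fin a, v = Sum.inl i → (i : ℕ) ≤ x₃) ∧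
        (∀ j : Fin b, v = Sum.inr j → y₃ ≤ (j : ℕ))) ∧
      Q₁.length + 1 ≤ Q₂.length ∧ Q₂.length ≤ Q₁.length + 2 * D := by
  obtain ⟨l, hl1, hl2, hl3⟩ := hlen
  simp only [Finset.mem_Ico] at hl1 hl2 hl3
  obtain ⟨hx12, hx23⟩ := hx
  obtain ⟨hy32, hy21⟩ := hy
  have hx1a : x₁ < a := (hE _ h₁).1
  have hx2a : x₂ < a := (hE _ h₂).1
  have hx3a : x₃ < a := (hE _ h₃).1
  have hy1b : y₁ < b := (hE _ h₁).2
  have hy2b : y₂ < b := (hE _ h₂).2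
  have hy3b : y₃ < b := (hE _ h₃).2
  have hD : 1 ≤ D := by omega
  have a1 : (sectionGraph a b E).Adj (Sum.inl ⟨x₁, hx1a⟩) (Sum.inr ⟨y₁, hy1b⟩) :=
    sectionGraph_adj_chord a b E hx1a hy1b h₁
  have a2 : (sectionGraph a b E).Adj (Sum.inl ⟨x₂, hx2a⟩) (Sum.inr ⟨y₂, hy2b⟩) :=
    sectionGraph_adj_chord a b E hx2a hy2b h₂
  have a3 : (sectionGraph a b E).Adj (Sum.inl ⟨x₃, hx3a⟩) (Sum.inr ⟨y₃, hy3b⟩) :=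
    sectionGraph_adj_chord a b E hx3a hy3b h₃
  -- the four candidate walks
  set PX : (sectionGraph a b E).Walk (Sum.inl ⟨x₁, hx1a⟩) (Sum.inl ⟨x₃, hx3a⟩) :=
    xpath a b E x₁ x₃ (by omega) hx3a with hPX
  set Y13 : (sectionGraph a b E).Walk (Sum.inr ⟨y₁, hy1b⟩) (Sum.inr ⟨y₃, hy3b⟩) :=
    (ypath a b E y₃ y₁ (by omega) hy1b).reverse with hY13
  set PY : (sectionGraph a b E).Walk (Sum.inl ⟨x₁, hx1a⟩) (Sum.inl ⟨x₃, hx3a⟩) :=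
    Walk.cons a1 (Y13.concat a3.symm) with hPY
  set Y12 : (sectionGraph a b E).Walk (Sum.inr ⟨y₁, hy1b⟩) (Sum.inr ⟨y₂, hy2b⟩) :=
    (ypath a b E y₂ y₁ (by omega) hy1b).reverse with hY12
  set X23 : (sectionGraph a b E).Walk (Sum.inl ⟨x₂, hx2a⟩) (Sum.inl ⟨x₃, hx3a⟩) :=
    xpath a b E x₂ x₃ (by omega) hx3a with hX23
  set PM : (sectionGraph a b E).Walk (Sum.inl ⟨x₁, hx1a⟩) (Sum.inl ⟨x₃, hx3a⟩) :=
    Walk.cons a1 (Y12.append (Walk.cons a2.symm X23)) with hPM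
  set X12 : (sectionGraph a b E).Walk (Sum.inl ⟨x₁, hx1a⟩) (Sum.inl ⟨x₂, hx2a⟩) :=
    xpath a b E x₁ x₂ (by omega) hx2a with hX12
  set Y23 : (sectionGraph a b E).Walk (Sum.inr ⟨y₂, hy2b⟩) (Sum.inr ⟨y₃, hy3b⟩) :=
    (ypath a b E y₃ y₂ (by omega) hy2b).reverse with hY23
  set PN : (sectionGraph a b E).Walk (Sum.inl ⟨x₁, hx1a⟩) (Sum.inl ⟨x₃, hx3a⟩) :=
    X12.append (Walk.cons a2 (Y23.concat a3.symm)) with hPN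
  -- support membership facts
  have sY13 : ∀ v ∈ Y13.support, ∃ m, y₃ ≤ m ∧ m ≤ y₁ ∧ ∃ hm : m < b, v = Sum.inr ⟨m, hm⟩ := by
    intro v hv
    rw [hY13, Walk.support_reverse, List.mem_reverse] at hv
    exact ypath_support a b E _ _ _ _ v hv
  have sY12 : ∀ v ∈ Y12.support, ∃ m, y₂ ≤ m ∧ m ≤ y₁ ∧ ∃ hm : m < b, v = Sum.inr ⟨m, hm⟩ := by
    intro v hv
    rw [hY12, Walk.support_reverse, List.mem_reverse] at hv
    exact ypath_support a b E _ _ _ _ v hv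
  have sY23 : ∀ v ∈ Y23.support, ∃ m, y₃ ≤ m ∧ m ≤ y₂ ∧ ∃ hm : m < b, v = Sum.inr ⟨m, hm⟩ := by
    intro v hv
    rw [hY23, Walk.support_reverse, List.mem_reverse] at hv
    exact ypath_support a b E _ _ _ _ v hv
  have sPX := xpath_support a b E x₁ x₃ (by omega) hx3a
  have sX23 := xpath_support a b E x₂ x₃ (by omega) hx3a
  have sX12 := xpath_support a b E x₁ x₂ (by omega) hx2a
  -- nodup facts
  have nY13 : Y13.support.Nodup := by
    rw [hY13, Walk.support_reverse]
    exact List.nodup_reverse.2 ((Walk.isPath_def _).1 (ypath_isPath a b E _ _ _ _))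
  have nY12 : Y12.support.Nodup := by
    rw [hY12, Walk.support_reverse]
    exact List.nodup_reverse.2 ((Walk.isPath_def _).1 (ypath_isPath a b E _ _ _ _))
  have nY23 : Y23.support.Nodup := by
    rw [hY23, Walk.support_reverse]
    exact List.nodup_reverse.2 ((Walk.isPath_def _).1 (ypath_isPath a b E _ _ _ _))
  have nX23 : X23.support.Nodup := (Walk.isPath_def _).1 (xpath_isPath a b E _ _ _ _)
  have nX12 : X12.support.Nodup := (Walk.isPath_def _).1 (xpath_isPath a b E _ _ _ _)
  -- support descriptions of the composite walks
  have supPY : PY.support = Sum.inl ⟨x₁, hx1a⟩ :: (Y13.support ++ [Sum.inl ⟨x₃, hx3a⟩]) := by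
    rw [hPY, Walk.support_cons, Walk.support_concat]
  have supPM : PM.support = Sum.inl ⟨x₁, hx1a⟩ :: (Y12.support ++ X23.support) := by
    rw [hPM, Walk.support_cons, Walk.support_append, Walk.support_cons, List.tail_cons]
  have supPN : PN.support = X12.support ++ (Y23.support ++ [Sum.inl ⟨x₃, hx3a⟩]) := by
    rw [hPN, Walk.support_append, Walk.support_cons, List.tail_cons, Walk.support_concat]
  -- IsPath
  have pPX : PX.IsPath := xpath_isPath a b E _ _ _ _
  have pPY : PY.IsPath := by
    rw [Walk.isPath_def, supPY]
    refine List.Nodup.cons ?_ (List.Nodup.append nY13 (List.nodup_singleton _) ?_)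
    · intro hmem
      rw [List.mem_append] at hmem
      rcases hmem with hmem | hmem
      · obtain ⟨m, _, _, hm, he⟩ := sY13 _ hmem
        exact absurd he (by simp)
      · simp [Fin.ext_iff] at hmem; omega
    · intro v hv hv'
      obtain ⟨m, _, _, hm, rfl⟩ := sY13 _ hv
      simp at hv'
  have pPM : PM.IsPath := by
    rw [Walk.isPath_def, supPM]
    refine List.Nodup.cons ?_ (List.Nodup.append nY12 nX23 ?_)
    · intro hmem
      rw [List.mem_append] at hmem
      rcases hmem with hmem | hmem
      · obtain ⟨m, _, _, hm, he⟩ := sY12 _ hmem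
        exact absurd he (by simp)
      · obtain ⟨m, hm1, _, hm, he⟩ := sX23 _ hmem
        simp only [Sum.inl.injEq, Fin.mk.injEq] at he
        omega
    · intro v hv hv'
      obtain ⟨m, _, _, hm, rfl⟩ := sY12 _ hv
      obtain ⟨m', _, _, hm', he⟩ := sX23 _ hv'
      simp at he
  have pPN : PN.IsPath := by
    rw [Walk.isPath_def, supPN]
    refine List.Nodup.append nX12 (List.Nodup.append nY23 (List.nodup_singleton _) ?_) ?_
    · intro v hv hv'
      obtain ⟨m, _, _, hm, rfl⟩ := sY23 _ hv
      simp at hv'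
    · intro v hv hv'
      obtain ⟨m, _, hm2, hm, rfl⟩ := sX12 _ hv
      rw [List.mem_append] at hv'
      rcases hv' with hv' | hv'
      · obtain ⟨m', _, _, hm', he⟩ := sY23 _ hv'
        simp at he
      · simp [Fin.ext_iff] at hv'; omega
  -- avoidance conditions
  have avoid : ∀ (W : (sectionGraph a b E).Walk (Sum.inl ⟨x₁, hx1a⟩) (Sum.inl ⟨x₃, hx3a⟩)),
      (∀ v ∈ W.support, (v = Sum.inl ⟨x₁, hx1a⟩ ∨ v = Sum.inl ⟨x₃, hx3a⟩ ∨
        (∃ m, x₁ ≤ m ∧ m ≤ x₃ ∧ ∃ hm : m < a, v = Sum.inl ⟨m, hm⟩) ∨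
        (∃ m, y₃ ≤ m ∧ m ≤ y₁ ∧ ∃ hm : m < b, v = Sum.inr ⟨m, hm⟩))) →
      (∀ v ∈ W.support, (∀ i : Fin a, v = Sum.inl i → (i : ℕ) ≤ x₃) ∧
        (∀ j : Fin b, v = Sum.inr j → y₃ ≤ (j : ℕ))) := by
    intro W hW v hv
    have h := hW v hv
    constructor
    · intro i hi
      subst hi
      rcases h with he | he | ⟨m, hm1, hm2, hm, he⟩ | ⟨m, hm1, hm2, hm, he⟩
      · obtain rfl : i = ⟨x₁, hx1a⟩ := Sum.inl.inj he
        exact show x₁ ≤ x₃ by omega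
      · obtain rfl : i = ⟨x₃, hx3a⟩ := Sum.inl.inj he
        exact show x₃ ≤ x₃ by omega
      · obtain rfl : i = ⟨m, hm⟩ := Sum.inl.inj he
        exact show m ≤ x₃ by omega
      · exact absurd he (by simp)
    · intro j hj
      subst hj
      rcases h with he | he | ⟨m, hm1, hm2, hm, he⟩ | ⟨m, hm1, hm2, hm, he⟩
      · exact absurd he (by simp)
      · exact absurd he (by simp)
      · exact absurd he (by simp)
      · obtain rfl : j = ⟨m, hm⟩ := Sum.inr.inj he
        exact show y₃ ≤ m by omega
  have avPX : ∀ v ∈ PX.support, (∀ i : Fin a, v = Sum.inl i → (i : ℕ) ≤ x₃) ∧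
      (∀ j : Fin b, v = Sum.inr j → y₃ ≤ (j : ℕ)) := by
    refine avoid PX ?_
    intro v hv
    obtain ⟨m, hm1, hm2, hm, rfl⟩ := sPX v hv
    exact Or.inr (Or.inr (Or.inl ⟨m, hm1, hm2, hm, rfl⟩))
  have avPY : ∀ v ∈ PY.support, (∀ i : Fin a, v = Sum.inl i → (i : ℕ) ≤ x₃) ∧
      (∀ j : Fin b, v = Sum.inr j → y₃ ≤ (j : ℕ)) := by
    refine avoid PY ?_
    intro v hv
    rw [supPY] at hv
    simp only [List.mem_cons, List.mem_append, List.not_mem_nil, or_false] at hv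
    rcases hv with rfl | hv | rfl
    · exact Or.inl rfl
    · obtain ⟨m, hm1, hm2, hm, rfl⟩ := sY13 v hv
      exact Or.inr (Or.inr (Or.inr ⟨m, hm1, hm2, hm, rfl⟩))
    · exact Or.inr (Or.inl rfl)
  have avPM : ∀ v ∈ PM.support, (∀ i : Fin a, v = Sum.inl i → (i : ℕ) ≤ x₃) ∧
      (∀ j : Fin b, v = Sum.inr j → y₃ ≤ (j : ℕ)) := by
    refine avoid PM ?_
    intro v hv
    rw [supPM] at hv
    simp only [List.mem_cons, List.mem_append] at hv
    rcases hv with rfl | hv | hv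
    · exact Or.inl rfl
    · obtain ⟨m, hm1, hm2, hm, rfl⟩ := sY12 v hv
      exact Or.inr (Or.inr (Or.inr ⟨m, by omega, by omega, hm, rfl⟩))
    · obtain ⟨m, hm1, hm2, hm, rfl⟩ := sX23 v hv
      exact Or.inr (Or.inr (Or.inl ⟨m, by omega, by omega, hm, rfl⟩))
  have avPN : ∀ v ∈ PN.support, (∀ i : Fin a, v = Sum.inl i → (i : ℕ) ≤ x₃) ∧
      (∀ j : Fin b, v = Sum.inr j → y₃ ≤ (j : ℕ)) := by
    refine avoid PN ?_
    intro v hv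
    rw [supPN] at hv
    simp only [List.mem_append, List.mem_cons, List.not_mem_nil, or_false] at hv
    rcases hv with hv | hv | rfl
    · obtain ⟨m, hm1, hm2, hm, rfl⟩ := sX12 v hv
      exact Or.inr (Or.inr (Or.inl ⟨m, by omega, by omega, hm, rfl⟩))
    · obtain ⟨m, hm1, hm2, hm, rfl⟩ := sY23 v hv
      exact Or.inr (Or.inr (Or.inr ⟨m, by omega, by omega, hm, rfl⟩))
    · exact Or.inr (Or.inl rfl)
  -- lengths
  have lPX : PX.length = x₃ - x₁ := xpath_length a b E _ _ _ _
  have lPY : PY.length = (y₁ - y₃) + 2 := by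
    rw [hPY, Walk.length_cons, Walk.length_concat, hY13, Walk.length_reverse,
      ypath_length]
  have lPM : PM.length = (y₁ - y₂) + (x₃ - x₂) + 2 := by
    rw [hPM, Walk.length_cons, Walk.length_append, Walk.length_cons, hY12,
      Walk.length_reverse, ypath_length, hX23, xpath_length]
    omega
  have lPN : PN.length = (x₂ - x₁) + (y₂ - y₃) + 2 := by
    rw [hPN, Walk.length_append, Walk.length_cons, Walk.length_concat, hX12,
      xpath_length, hY23, Walk.length_reverse, ypath_length]
    omega
  -- case analysis
  rcases lt_trichotomy PX.length PY.length with hcmp | hcmp | hcmp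
  · exact ⟨PX, PY, pPX, pPY, avPX, avPY, by omega, by omega⟩
  · by_cases hc : PM.length ≤ PX.length
    · exact ⟨PX, PN, pPX, pPN, avPX, avPN, by omega, by omega⟩
    · exact ⟨PX, PM, pPX, pPM, avPX, avPM, by omega, by omega⟩
  · exact ⟨PY, PX, pPY, pPX, avPY, avPX, by omega, by omega⟩
end
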